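/- arXiv:1410.0402 — 3 statements merged into one kernel-verified Lean document; each statement's English description precedes it below -/
import Mathlib

section
/- Let (a, b) ∈ Q_k and assume n(a, b) = 0. Then I(u, a, b) ≥ 0 for all u ∈ S_k(a, b); K(a, b) = { u ∈ S_k(a, b) : I(u, a, b) = 0 }; and (a, b) ∈ Σ. -/
open MeasureTheory RealInnerProductSpace

namespace FucikAux

/-- The nonlinearity `g t = b (t⁺)² + a (t⁻)²`. -/
noncomputable def g (a b t : ℝ) : ℝ := b * max t 0 ^ 2 + a * max (-t) 0 ^ 2

/-- Its derivative `g' t = 2 (b t⁺ - a t⁻)`. -/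
noncomputable def gd (a b t : ℝ) : ℝ := 2 * (b * max t 0 - a * max (-t) 0)

variable {a b : ℝ}

lemma g_of_nonneg {t : ℝ} (h : 0 ≤ t) : g a b t = b * t ^ 2 := by
  simp [g, max_eq_left h, max_eq_right (neg_nonpos.mpr h)]

lemma g_of_nonpos {t : ℝ} (h : t ≤ 0) : g a b t = a * t ^ 2 := by
  simp [g, max_eq_right h, max_eq_left (neg_nonneg.mpr h)]

lemma gd_of_nonneg {t : ℝ} (h : 0 ≤ t) : gd a b t = 2 * b * t := by
  simp [gd, max_eq_left h, max_eq_right (neg_nonpos.mpr h)]; ring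

lemma gd_of_nonpos {t : ℝ} (h : t ≤ 0) : gd a b t = 2 * a * t := by
  simp [gd, max_eq_right h, max_eq_left (neg_nonneg.mpr h)]; ring

lemma g_lower (t : ℝ) : min a b * t ^ 2 ≤ g a b t := by
  rcases le_total 0 t with h | h
  · rw [g_of_nonneg h]; nlinarith [min_le_right a b, sq_nonneg t]
  · rw [g_of_nonpos h]; nlinarith [min_le_left a b, sq_nonneg t]

lemma g_upper (t : ℝ) : g a b t ≤ max a b * t ^ 2 := by
  rcases le_total 0 t with h | h
  · rw [g_of_nonneg h]; nlinarith [le_max_right a b, sq_nonneg t]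
  · rw [g_of_nonpos h]; nlinarith [le_max_left a b, sq_nonneg t]

lemma g_nonneg (ha : 0 < a) (hb : 0 < b) (t : ℝ) : 0 ≤ g a b t :=
  le_trans (by positivity) (g_lower t)

lemma g_taylor_lower (t s : ℝ) :
    g a b t + gd a b t * s + min a b * s ^ 2 ≤ g a b (t + s) := by
  rcases le_total 0 t with h | h <;> rcases le_total 0 (t + s) with h' | h'
  · rw [g_of_nonneg h, gd_of_nonneg h, g_of_nonneg h']
    nlinarith [min_le_right a b, sq_nonneg s]
  · rw [g_of_nonneg h, gd_of_nonneg h, g_of_nonpos h']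
    nlinarith [min_le_right a b, min_le_left a b, sq_nonneg (t + s),
      mul_nonneg (mul_nonneg (sub_nonneg.mpr (min_le_right a b)) h)
        (by linarith : 0 ≤ -(t + 2 * s))]
  · rw [g_of_nonpos h, gd_of_nonpos h, g_of_nonneg h']
    nlinarith [min_le_right a b, min_le_left a b, sq_nonneg (t + s),
      mul_nonneg (mul_nonneg (sub_nonneg.mpr (min_le_left a b)) (neg_nonneg.mpr h))
        (by linarith : 0 ≤ t + 2 * s)]
  · rw [g_of_nonpos h, gd_of_nonpos h, g_of_nonpos h']
    nlinarith [min_le_left a b, sq_nonneg s]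

lemma g_taylor_upper (t s : ℝ) :
    g a b (t + s) ≤ g a b t + gd a b t * s + max a b * s ^ 2 := by
  rcases le_total 0 t with h | h <;> rcases le_total 0 (t + s) with h' | h'
  · rw [g_of_nonneg h, gd_of_nonneg h, g_of_nonneg h']
    nlinarith [le_max_right a b, sq_nonneg s]
  · rw [g_of_nonneg h, gd_of_nonneg h, g_of_nonpos h']
    nlinarith [le_max_right a b, le_max_left a b, sq_nonneg (t + s),
      mul_nonneg (mul_nonneg (sub_nonneg.mpr (le_max_right a b)) h)
        (by linarith : 0 ≤ -(t + 2 * s))]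
  · rw [g_of_nonpos h, gd_of_nonpos h, g_of_nonneg h']
    nlinarith [le_max_right a b, le_max_left a b, sq_nonneg (t + s),
      mul_nonneg (mul_nonneg (sub_nonneg.mpr (le_max_left a b)) (neg_nonneg.mpr h))
        (by linarith : 0 ≤ t + 2 * s)]
  · rw [g_of_nonpos h, gd_of_nonpos h, g_of_nonpos h']
    nlinarith [le_max_left a b, sq_nonneg s]

lemma g_homog {c : ℝ} (hc : 0 ≤ c) (t : ℝ) : g a b (c * t) = c ^ 2 * g a b t := by
  rcases le_total 0 t with h | h
  · rw [g_of_nonneg h, g_of_nonneg (mul_nonneg hc h)]; ring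
  · rw [g_of_nonpos h, g_of_nonpos (mul_nonpos_of_nonneg_of_nonpos hc h)]; ring

lemma gd_mul_self (t : ℝ) : gd a b t * t = 2 * g a b t := by
  rcases le_total 0 t with h | h
  · rw [g_of_nonneg h, gd_of_nonneg h]; ring
  · rw [g_of_nonpos h, gd_of_nonpos h]; ring

lemma gd_lipschitz (ha : 0 < a) (hb : 0 < b) (t t' : ℝ) :
    |gd a b t - gd a b t'| ≤ 4 * max a b * |t - t'| := by
  have h1 : |max t 0 - max t' 0| ≤ |t - t'| := abs_max_sub_max_le_abs t t' 0
  have h2 : |max (-t) 0 - max (-t') 0| ≤ |t - t'| := by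
    have := abs_max_sub_max_le_abs (-t) (-t') 0
    rwa [neg_sub_neg, abs_sub_comm t' t] at this
  have he : gd a b t - gd a b t' =
      2 * (b * (max t 0 - max t' 0) - a * (max (-t) 0 - max (-t') 0)) := by
    simp only [gd]; ring
  rw [he]
  have hb' : |b * (max t 0 - max t' 0)| ≤ max a b * |t - t'| := by
    rw [abs_mul, abs_of_pos hb]
    exact mul_le_mul (le_max_right a b) h1 (abs_nonneg _) (le_trans hb.le (le_max_right a b))
  have ha' : |a * (max (-t) 0 - max (-t') 0)| ≤ max a b * |t - t'| := by
    rw [abs_mul, abs_of_pos ha]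
    exact mul_le_mul (le_max_left a b) h2 (abs_nonneg _) (le_trans ha.le (le_max_left a b))
  have htri : |b * (max t 0 - max t' 0) - a * (max (-t) 0 - max (-t') 0)| ≤
      |b * (max t 0 - max t' 0)| + |a * (max (-t) 0 - max (-t') 0)| := by
    have := abs_add_le (b * (max t 0 - max t' 0)) (-(a * (max (-t) 0 - max (-t') 0)))
    simpa [sub_eq_add_neg] using this
  rw [abs_mul, abs_of_pos (by norm_num : (0:ℝ) < 2)]
  linarith

lemma gd_abs (ha : 0 < a) (hb : 0 < b) (t : ℝ) : |gd a b t| ≤ 4 * max a b * |t| := by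
  have := gd_lipschitz ha hb t 0
  simpa [gd] using this

lemma g_continuous : Continuous (g a b) := by
  unfold g; fun_prop


lemma gd_continuous : Continuous (gd a b) := by
  unfold gd; fun_prop
section LpLayer

variable {Ω : Type*} [MeasurableSpace Ω] {μ : Measure Ω}

/-- The quadratic functional `Φ f = ∫ g(f)`. -/
noncomputable def Phi (a b : ℝ) (f : Lp ℝ 2 μ) : ℝ := ∫ x, g a b (f x) ∂μ

/-- The bilinear pairing `B f h = ∫ g'(f) h`. -/
noncomputable def Bf (a b : ℝ) (f h : Lp ℝ 2 μ) : ℝ := ∫ x, gd a b (f x) * h x ∂μ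


lemma abs_integral_le' (f : Ω → ℝ) : |∫ x, f x ∂μ| ≤ ∫ x, |f x| ∂μ := by
  simpa [Real.norm_eq_abs] using norm_integral_le_integral_norm (μ := μ) f

lemma integrable_sq' (f : Lp ℝ 2 μ) : Integrable (fun x => (f x) ^ 2) μ :=
  (Lp.memLp f).integrable_sq

lemma norm_sq_eq_integral_sq (f : Lp ℝ 2 μ) : ‖f‖ ^ 2 = ∫ x, (f x) ^ 2 ∂μ := by
  rw [← real_inner_self_eq_norm_sq, L2.inner_def]
  simp [RCLike.inner_apply, sq]

lemma integral_mul_eq_inner (f h : Lp ℝ 2 μ) : ∫ x, f x * h x ∂μ = ⟪f, h⟫ := by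
  rw [L2.inner_def]; simp [RCLike.inner_apply]
  exact integral_congr_ae (Filter.Eventually.of_forall fun x => mul_comm _ _)

lemma integrable_mul' (f h : Lp ℝ 2 μ) : Integrable (fun x => f x * h x) μ := by
  have := L2.integrable_inner (𝕜 := ℝ) f h
  simpa [RCLike.inner_apply, mul_comm] using this

lemma integral_abs_mul_le (f h : Lp ℝ 2 μ) : ∫ x, |f x * h x| ∂μ ≤ ‖f‖ * ‖h‖ := by
  have h1 : ∫ x, |f x * h x| ∂μ = ∫ x, (|f| : Lp ℝ 2 μ) x * (|h| : Lp ℝ 2 μ) x ∂μ := by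
    refine integral_congr_ae ?_
    filter_upwards [Lp.coeFn_abs f, Lp.coeFn_abs h] with x hf hh
    rw [hf, hh, abs_mul]
  rw [h1, integral_mul_eq_inner]
  calc ⟪(|f| : Lp ℝ 2 μ), (|h| : Lp ℝ 2 μ)⟫ ≤ ‖(|f| : Lp ℝ 2 μ)‖ * ‖(|h| : Lp ℝ 2 μ)‖ :=
        real_inner_le_norm _ _
    _ = ‖f‖ * ‖h‖ := by rw [norm_abs_eq_norm, norm_abs_eq_norm]

lemma integrable_g (ha : 0 < a) (hb : 0 < b) (f : Lp ℝ 2 μ) :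
    Integrable (fun x => g a b (f x)) μ := by
  refine Integrable.mono' ((integrable_sq' f).const_mul (max a b)) ?_ ?_
  · exact g_continuous.comp_aestronglyMeasurable (Lp.aestronglyMeasurable f)
  · refine Filter.Eventually.of_forall fun x => ?_
    rw [Real.norm_eq_abs, abs_of_nonneg (g_nonneg ha hb _)]
    exact g_upper _

lemma integrable_gd_mul (ha : 0 < a) (hb : 0 < b) (f h : Lp ℝ 2 μ) :
    Integrable (fun x => gd a b (f x) * h x) μ := by
  refine Integrable.mono' (((integrable_mul' f h).abs).const_mul (4 * max a b)) ?_ ?_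
  · exact (gd_continuous.comp_aestronglyMeasurable (Lp.aestronglyMeasurable f)).mul
      (Lp.aestronglyMeasurable h)
  · refine Filter.Eventually.of_forall fun x => ?_
    rw [Real.norm_eq_abs, abs_mul]
    calc |gd a b (f x)| * |h x| ≤ 4 * max a b * |f x| * |h x| :=
          mul_le_mul_of_nonneg_right (gd_abs ha hb _) (abs_nonneg _)
      _ = 4 * max a b * |f x * h x| := by rw [abs_mul]; ring

lemma Phi_le (f : Lp ℝ 2 μ) (ha : 0 < a) (hb : 0 < b) :
    Phi a b f ≤ max a b * ‖f‖ ^ 2 := by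
  rw [norm_sq_eq_integral_sq, ← integral_const_mul]
  exact integral_mono (integrable_g ha hb f) ((integrable_sq' f).const_mul _)
    fun x => g_upper _

lemma Phi_ge (f : Lp ℝ 2 μ) (ha : 0 < a) (hb : 0 < b) :
    min a b * ‖f‖ ^ 2 ≤ Phi a b f := by
  rw [norm_sq_eq_integral_sq, ← integral_const_mul]
  exact integral_mono ((integrable_sq' f).const_mul _) (integrable_g ha hb f)
    fun x => g_lower _

lemma Phi_nonneg (f : Lp ℝ 2 μ) (ha : 0 < a) (hb : 0 < b) : 0 ≤ Phi a b f :=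
  le_trans (by positivity) (Phi_ge f ha hb)

lemma Phi_add_lower (ha : 0 < a) (hb : 0 < b) (f h : Lp ℝ 2 μ) :
    Phi a b f + Bf a b f h + min a b * ‖h‖ ^ 2 ≤ Phi a b (f + h) := by
  have h1 : Phi a b (f + h) = ∫ x, g a b (f x + h x) ∂μ := by
    refine integral_congr_ae ?_
    filter_upwards [Lp.coeFn_add f h] with x hx
    rw [hx]; rfl
  have h2 : Phi a b f + Bf a b f h + min a b * ‖h‖ ^ 2 =
      ∫ x, (g a b (f x) + gd a b (f x) * h x + min a b * (h x) ^ 2) ∂μ := by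
    have hAB : Integrable (fun x => g a b (f x) + gd a b (f x) * h x) μ :=
      (integrable_g ha hb f).add (integrable_gd_mul ha hb f h)
    rw [norm_sq_eq_integral_sq, ← integral_const_mul,
      integral_add hAB ((integrable_sq' h).const_mul _),
      integral_add (integrable_g ha hb f) (integrable_gd_mul ha hb f h)]
    rfl
  rw [h1, h2]
  refine integral_mono ?_ ?_ fun x => g_taylor_lower _ _
  · have hAB : Integrable (fun x => g a b (f x) + gd a b (f x) * h x) μ :=
      (integrable_g ha hb f).add (integrable_gd_mul ha hb f h)
    exact hAB.add ((integrable_sq' h).const_mul _)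
  · refine (integrable_g ha hb (f + h)).congr ?_
    filter_upwards [Lp.coeFn_add f h] with x hx
    rw [hx]; rfl

lemma Phi_add_upper (ha : 0 < a) (hb : 0 < b) (f h : Lp ℝ 2 μ) :
    Phi a b (f + h) ≤ Phi a b f + Bf a b f h + max a b * ‖h‖ ^ 2 := by
  have h1 : Phi a b (f + h) = ∫ x, g a b (f x + h x) ∂μ := by
    refine integral_congr_ae ?_
    filter_upwards [Lp.coeFn_add f h] with x hx
    rw [hx]; rfl
  have h2 : Phi a b f + Bf a b f h + max a b * ‖h‖ ^ 2 =
      ∫ x, (g a b (f x) + gd a b (f x) * h x + max a b * (h x) ^ 2) ∂μ := by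
    have hAB : Integrable (fun x => g a b (f x) + gd a b (f x) * h x) μ :=
      (integrable_g ha hb f).add (integrable_gd_mul ha hb f h)
    rw [norm_sq_eq_integral_sq, ← integral_const_mul,
      integral_add hAB ((integrable_sq' h).const_mul _),
      integral_add (integrable_g ha hb f) (integrable_gd_mul ha hb f h)]
    rfl
  rw [h1, h2]
  refine integral_mono ?_ ?_ fun x => g_taylor_upper _ _
  · refine (integrable_g ha hb (f + h)).congr ?_
    filter_upwards [Lp.coeFn_add f h] with x hx
    rw [hx]; rfl
  · have hAB : Integrable (fun x => g a b (f x) + gd a b (f x) * h x) μ :=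
      (integrable_g ha hb f).add (integrable_gd_mul ha hb f h)
    exact hAB.add ((integrable_sq' h).const_mul _)

lemma Phi_smul {c : ℝ} (hc : 0 ≤ c) (f : Lp ℝ 2 μ) :
    Phi a b (c • f) = c ^ 2 * Phi a b f := by
  have h1 : Phi a b (c • f) = ∫ x, c ^ 2 * g a b (f x) ∂μ := by
    refine integral_congr_ae ?_
    filter_upwards [Lp.coeFn_smul c f] with x hx
    rw [hx, Pi.smul_apply, smul_eq_mul, g_homog hc]
  rw [h1, integral_const_mul]; rfl

lemma Bf_self (f : Lp ℝ 2 μ) : Bf a b f f = 2 * Phi a b f := by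
  rw [Bf, Phi, ← integral_const_mul]
  exact integral_congr_ae (Filter.Eventually.of_forall fun x => gd_mul_self _)

lemma Bf_add_right (ha : 0 < a) (hb : 0 < b) (f h h' : Lp ℝ 2 μ) :
    Bf a b f (h + h') = Bf a b f h + Bf a b f h' := by
  rw [Bf, Bf, Bf, ← integral_add (integrable_gd_mul ha hb f h) (integrable_gd_mul ha hb f h')]
  refine integral_congr_ae ?_
  filter_upwards [Lp.coeFn_add h h'] with x hx
  rw [hx]; simp [mul_add]

lemma Bf_smul_right (f h : Lp ℝ 2 μ) (c : ℝ) :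
    Bf a b f (c • h) = c * Bf a b f h := by
  rw [Bf, Bf, ← integral_const_mul]
  refine integral_congr_ae ?_
  filter_upwards [Lp.coeFn_smul c h] with x hx
  rw [hx]; simp; ring

lemma Bf_abs_le (ha : 0 < a) (hb : 0 < b) (f h : Lp ℝ 2 μ) :
    |Bf a b f h| ≤ 4 * max a b * (‖f‖ * ‖h‖) := by
  calc |Bf a b f h| ≤ ∫ x, |gd a b (f x) * h x| ∂μ :=
        abs_integral_le' _
    _ ≤ ∫ x, 4 * max a b * |f x * h x| ∂μ := by
        refine integral_mono (integrable_gd_mul ha hb f h).abs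
          (((integrable_mul' f h).abs).const_mul _) fun x => ?_
        rw [abs_mul, abs_mul]
        calc |gd a b (f x)| * |h x| ≤ 4 * max a b * |f x| * |h x| :=
              mul_le_mul_of_nonneg_right (gd_abs ha hb _) (abs_nonneg _)
          _ = 4 * max a b * (|f x| * |h x|) := by ring
    _ = 4 * max a b * ∫ x, |f x * h x| ∂μ := integral_const_mul _ _
    _ ≤ 4 * max a b * (‖f‖ * ‖h‖) := by
        have hc : (0:ℝ) ≤ 4 * max a b := by positivity
        exact mul_le_mul_of_nonneg_left (integral_abs_mul_le f h) hc

lemma Bf_diff_le (ha : 0 < a) (hb : 0 < b) (f f' h : Lp ℝ 2 μ) :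
    |Bf a b f h - Bf a b f' h| ≤ 4 * max a b * (‖f - f'‖ * ‖h‖) := by
  have hsub : Bf a b f h - Bf a b f' h =
      ∫ x, (gd a b (f x) - gd a b (f' x)) * h x ∂μ := by
    rw [Bf, Bf, ← integral_sub (integrable_gd_mul ha hb f h) (integrable_gd_mul ha hb f' h)]
    simp [sub_mul]
  have hint : Integrable (fun x => (gd a b (f x) - gd a b (f' x)) * h x) μ := by
    have := (integrable_gd_mul ha hb f h).sub (integrable_gd_mul ha hb f' h)
    refine this.congr (Filter.Eventually.of_forall fun x => ?_)
    simp only [Pi.sub_apply]; ring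
  rw [hsub]
  calc |∫ x, (gd a b (f x) - gd a b (f' x)) * h x ∂μ|
      ≤ ∫ x, |(gd a b (f x) - gd a b (f' x)) * h x| ∂μ := abs_integral_le' _
    _ ≤ ∫ x, 4 * max a b * |(f - f') x * h x| ∂μ := by
        refine integral_mono_ae hint.abs (((integrable_mul' (f - f') h).abs).const_mul _) ?_
        filter_upwards [Lp.coeFn_sub f f'] with x hx
        rw [abs_mul, abs_mul, hx, Pi.sub_apply]
        calc |gd a b (f x) - gd a b (f' x)| * |h x| ≤ 4 * max a b * |f x - f' x| * |h x| :=
              mul_le_mul_of_nonneg_right (gd_lipschitz ha hb _ _) (abs_nonneg _)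
          _ = 4 * max a b * (|f x - f' x| * |h x|) := by ring
    _ = 4 * max a b * ∫ x, |(f - f') x * h x| ∂μ := integral_const_mul _ _
    _ ≤ 4 * max a b * (‖f - f'‖ * ‖h‖) := by
        have hc : (0:ℝ) ≤ 4 * max a b := by positivity
        exact mul_le_mul_of_nonneg_left (integral_abs_mul_le (f - f') h) hc

lemma integral_posneg_eq_Phi (a b : ℝ) (f : Lp ℝ 2 μ) :
    ∫ x, (b * (Lp.posPart f) x ^ 2 + a * (Lp.negPart f) x ^ 2) ∂μ = Phi a b f := by
  refine integral_congr_ae ?_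
  filter_upwards [Lp.coeFn_posPart f, Lp.coeFn_negPart_eq_max f] with x h1 h2
  rw [h1, h2]; rfl

lemma integral_posneg_mul_eq_Bf (a b : ℝ) (f h : Lp ℝ 2 μ) :
    ∫ x, (b * (Lp.posPart f) x - a * (Lp.negPart f) x) * h x ∂μ = Bf a b f h / 2 := by
  have : Bf a b f h / 2 = ∫ x, (1/2) * (gd a b (f x) * h x) ∂μ := by
    rw [integral_const_mul, Bf]; ring
  rw [this]
  refine integral_congr_ae ?_
  filter_upwards [Lp.coeFn_posPart f, Lp.coeFn_negPart_eq_max f] with x h1 h2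
  rw [h1, h2]
  show (b * max (f x) 0 - a * max (-f x) 0) * h x = 1/2 * (gd a b (f x) * h x)
  rw [gd]; ring

end LpLayer


section HLayer

variable {Ω : Type*} [MeasurableSpace Ω] {μ : Measure Ω}
variable {H : Type*} [NormedAddCommGroup H] [InnerProductSpace ℝ H]

/-- The abstract functional `I(·,a,b)` in explicit form. -/
noncomputable def FF (ι : H →ₗ[ℝ] Lp ℝ 2 μ) (a b : ℝ) (u : H) : ℝ :=
  ‖u‖ ^ 2 / 2 - Phi a b (ι u) / 2

/-- The derivative pairing `I'(u) z / 1`. -/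
noncomputable def DI (ι : H →ₗ[ℝ] Lp ℝ 2 μ) (a b : ℝ) (u z : H) : ℝ :=
  ⟪u, z⟫ - Bf a b (ι u) (ι z) / 2

variable (ι : H →ₗ[ℝ] Lp ℝ 2 μ) {a b C : ℝ}

lemma Phi_zero (ha : 0 < a) (hb : 0 < b) : Phi a b (0 : Lp ℝ 2 μ) = 0 :=
  le_antisymm (by simpa using Phi_le (0 : Lp ℝ 2 μ) ha hb) (Phi_nonneg 0 ha hb)

lemma FF_zero (ha : 0 < a) (hb : 0 < b) : FF ι a b 0 = 0 := by
  simp [FF, Phi_zero ha hb]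

lemma FF_expand_le (ha : 0 < a) (hb : 0 < b) (u z : H) :
    FF ι a b (u + z) ≤ FF ι a b u + DI ι a b u z
      + (‖z‖ ^ 2 - min a b * ‖ι z‖ ^ 2) / 2 := by
  have hadd : ι (u + z) = ι u + ι z := map_add ι u z
  have h1 := Phi_add_lower ha hb (ι u) (ι z)
  have h2 := norm_add_sq_real u z
  simp only [FF, DI, hadd]
  linarith

lemma FF_expand_ge (ha : 0 < a) (hb : 0 < b) (u z : H) :
    FF ι a b u + DI ι a b u z + (‖z‖ ^ 2 - max a b * ‖ι z‖ ^ 2) / 2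
      ≤ FF ι a b (u + z) := by
  have hadd : ι (u + z) = ι u + ι z := map_add ι u z
  have h1 := Phi_add_upper ha hb (ι u) (ι z)
  have h2 := norm_add_sq_real u z
  simp only [FF, DI, hadd]
  linarith

lemma FF_smul {c : ℝ} (hc : 0 ≤ c) (u : H) : FF ι a b (c • u) = c ^ 2 * FF ι a b u := by
  have h1 : ι (c • u) = c • ι u := map_smul ι c u
  simp only [FF, h1, Phi_smul hc, norm_smul, Real.norm_eq_abs, abs_of_nonneg hc, mul_pow]
  ring

lemma FF_le_half_sq (ha : 0 < a) (hb : 0 < b) (u : H) : FF ι a b u ≤ ‖u‖ ^ 2 / 2 := by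
  have := Phi_nonneg (ι u) ha hb
  simp only [FF]; linarith

lemma FF_ge (ha : 0 < a) (hb : 0 < b) (u : H) :
    ‖u‖ ^ 2 / 2 - max a b * ‖ι u‖ ^ 2 / 2 ≤ FF ι a b u := by
  have := Phi_le (ι u) ha hb
  simp only [FF]; linarith

lemma DI_add_right (ha : 0 < a) (hb : 0 < b) (u z z' : H) :
    DI ι a b u (z + z') = DI ι a b u z + DI ι a b u z' := by
  simp only [DI, map_add, Bf_add_right ha hb, inner_add_right]
  ring

lemma DI_smul_right (u z : H) (c : ℝ) : DI ι a b u (c • z) = c * DI ι a b u z := by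
  have h1 : ι (c • z) = c • ι z := ι.map_smul c z
  simp only [DI, h1, Bf_smul_right, real_inner_smul_right]
  ring

lemma DI_self (u : H) : DI ι a b u u = ⟪u, u⟫ - Phi a b (ι u) := by
  simp only [DI, Bf_self]
  ring

lemma DI_abs_le (ha : 0 < a) (hb : 0 < b) (hC : 0 ≤ C)
    (hιC : ∀ u : H, ‖ι u‖ ≤ C * ‖u‖) (u z : H) :
    |DI ι a b u z| ≤ (1 + 2 * max a b * C ^ 2) * (‖u‖ * ‖z‖) := by
  have hc2 : (0:ℝ) < max a b := lt_max_of_lt_right hb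
  have h1 : |⟪u, z⟫| ≤ ‖u‖ * ‖z‖ := abs_real_inner_le_norm u z
  have h2 : |Bf a b (ι u) (ι z)| ≤ 4 * max a b * (‖ι u‖ * ‖ι z‖) := Bf_abs_le ha hb _ _
  have h3 : ‖ι u‖ * ‖ι z‖ ≤ C * ‖u‖ * (C * ‖z‖) :=
    mul_le_mul (hιC u) (hιC z) (norm_nonneg _) (by positivity)
  have h4 : |DI ι a b u z| ≤ |⟪u, z⟫| + |Bf a b (ι u) (ι z)| / 2 := by
    have := abs_add_le (⟪u, z⟫ : ℝ) (-(Bf a b (ι u) (ι z) / 2))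
    simp only [DI, sub_eq_add_neg]
    calc |⟪u, z⟫ + -(Bf a b (ι u) (ι z) / 2)| ≤ |⟪u, z⟫| + |-(Bf a b (ι u) (ι z) / 2)| := this
      _ = |⟪u, z⟫| + |Bf a b (ι u) (ι z)| / 2 := by rw [abs_neg, abs_div]; norm_num
  nlinarith [mul_le_mul_of_nonneg_left h3 (by positivity : (0:ℝ) ≤ 4 * max a b)]

lemma DI_diff_le (ha : 0 < a) (hb : 0 < b) (hC : 0 ≤ C)
    (hιC : ∀ u : H, ‖ι u‖ ≤ C * ‖u‖) (u u' z : H) :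
    |DI ι a b u z - DI ι a b u' z| ≤ (1 + 2 * max a b * C ^ 2) * (‖u - u'‖ * ‖z‖) := by
  have hc2 : (0:ℝ) < max a b := lt_max_of_lt_right hb
  have hkey : DI ι a b u z - DI ι a b u' z =
      ⟪u - u', z⟫ - (Bf a b (ι u) (ι z) - Bf a b (ι u') (ι z)) / 2 := by
    simp only [DI, inner_sub_left]
    ring
  have h1 : |⟪u - u', z⟫| ≤ ‖u - u'‖ * ‖z‖ := abs_real_inner_le_norm _ _
  have h2 : |Bf a b (ι u) (ι z) - Bf a b (ι u') (ι z)| ≤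
      4 * max a b * (‖ι u - ι u'‖ * ‖ι z‖) := Bf_diff_le ha hb _ _ _
  have hsub : (ι u - ι u' : Lp ℝ 2 μ) = ι (u - u') := (map_sub ι u u').symm
  have h3 : ‖ι u - ι u'‖ * ‖ι z‖ ≤ C * ‖u - u'‖ * (C * ‖z‖) := by
    rw [hsub]
    exact mul_le_mul (hιC _) (hιC z) (norm_nonneg _) (by positivity)
  have h4 : |DI ι a b u z - DI ι a b u' z| ≤ |⟪u - u', z⟫|
      + |Bf a b (ι u) (ι z) - Bf a b (ι u') (ι z)| / 2 := by
    rw [hkey]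
    have := abs_add_le (⟪u - u', z⟫ : ℝ)
      (-((Bf a b (ι u) (ι z) - Bf a b (ι u') (ι z)) / 2))
    calc |⟪u - u', z⟫ - (Bf a b (ι u) (ι z) - Bf a b (ι u') (ι z)) / 2|
        = |⟪u - u', z⟫ + -((Bf a b (ι u) (ι z) - Bf a b (ι u') (ι z)) / 2)| := by
          rw [sub_eq_add_neg]
      _ ≤ |⟪u - u', z⟫| + |-((Bf a b (ι u) (ι z) - Bf a b (ι u') (ι z)) / 2)| := this
      _ = |⟪u - u', z⟫| + |Bf a b (ι u) (ι z) - Bf a b (ι u') (ι z)| / 2 := by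
          rw [abs_neg, abs_div]; norm_num
  nlinarith [mul_le_mul_of_nonneg_left h3 (by positivity : (0:ℝ) ≤ 4 * max a b)]

end HLayer

/-- If `|d| ≤ c √s` for all small positive `s`, then `d = 0`. -/
lemma eq_zero_of_abs_le_sqrt {d c : ℝ}
    (h : ∀ s : ℝ, 0 < s → s ≤ 1 → |d| ≤ c * Real.sqrt s) : d = 0 := by
  have hc : |d| ≤ c := by simpa using h 1 one_pos le_rfl
  by_contra hd
  have hd' : 0 < |d| := abs_pos.mpr hd
  have hcpos : 0 < c := lt_of_lt_of_le hd' hc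
  set s : ℝ := (|d| / (2 * c)) ^ 2 with hs
  have hspos : 0 < s := by positivity
  have hsle : s ≤ 1 := by
    have h1 : |d| / (2 * c) ≤ 1 / 2 := by
      rw [div_le_div_iff₀ (by positivity) (by norm_num)]
      linarith
    have h2 : (0:ℝ) ≤ |d| / (2 * c) := by positivity
    nlinarith
  have := h s hspos hsle
  rw [hs, Real.sqrt_sq (by positivity)] at this
  have : |d| ≤ |d| / 2 := by
    calc |d| ≤ c * (|d| / (2 * c)) := this
      _ = |d| / 2 := by field_simp
  linarith

lemma self_le_sqrt' {s : ℝ} (h0 : 0 ≤ s) (h1 : s ≤ 1) : s ≤ Real.sqrt s := by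
  have hr := Real.sq_sqrt h0
  have hrn := Real.sqrt_nonneg s
  have hr1 : Real.sqrt s ≤ 1 := by nlinarith
  nlinarith

lemma aux_cancel {κ L q r : ℝ} (hκ : 0 < κ) (hq : 0 ≤ q) (hr : 0 < r)
    (h : κ * r ^ 2 ≤ L * (q * r)) : r ≤ L / κ * q := by
  rw [div_mul_eq_mul_div, le_div_iff₀ hκ]
  nlinarith

lemma aux_div_pos {s d K : ℝ} (hs : 0 < s) (h : s * d ≤ s ^ 2 * K) : d ≤ K * s := by
  have h2 : s * d ≤ s * (K * s) := by nlinarith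
  exact le_of_mul_le_mul_left h2 hs

lemma aux_div_pos' {s d c : ℝ} (hs : 0 < s) (h : -(s * c) ≤ s * d) : -c ≤ d := by
  have h2 : s * (-c) ≤ s * d := by nlinarith
  exact le_of_mul_le_mul_left h2 hs

lemma aux_div_neg' {s d c : ℝ} (hs : 0 < s) (h : -(s * c) ≤ -s * d) : d ≤ c := by
  have h2 : s * d ≤ s * c := by nlinarith
  exact le_of_mul_le_mul_left h2 hs

lemma aux_amgm {L κ q r : ℝ} (hκ : 0 < κ) : L * (q * r) - κ * r ^ 2 ≤ L ^ 2 * q ^ 2 / (4 * κ) := by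
  rw [le_div_iff₀ (by positivity : (0:ℝ) < 4 * κ)]
  nlinarith [sq_nonneg (L * q - 2 * κ * r)]

lemma aux_amgm' {L κ q r : ℝ} (hκ : 0 < κ) : L * (q * r) - κ * r ^ 2 ≤ L ^ 2 / (4 * κ) * q ^ 2 := by
  have h := aux_amgm (L := L) (q := q) (r := r) hκ
  have e : L ^ 2 * q ^ 2 / (4 * κ) = L ^ 2 / (4 * κ) * q ^ 2 := by ring
  linarith [e ▸ h]

lemma aux_rho_pos {κ A : ℝ} (hκ : 0 < κ) (hA : 0 ≤ A) : 0 < κ / (2 * (κ + A + 1)) := by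
  positivity

lemma aux_rho_key {κ A : ℝ} (hκ : 0 < κ) (hA : 0 ≤ A) :
    κ / (2 * (κ + A + 1)) * (κ + A) ≤ κ / 2 := by
  rw [div_mul_eq_mul_div, div_le_div_iff₀ (by positivity) (by norm_num)]
  nlinarith

lemma aux_keps {K ε : ℝ} (hK : 0 ≤ K) (hε : 0 < ε) : K * (ε / (2 * (K + 1))) ≤ ε / 2 := by
  rw [mul_div_assoc']
  rw [div_le_div_iff₀ (by positivity) (by norm_num)]
  nlinarith

end FucikAux

set_option maxHeartbeats 1600000 in
open FucikAux in
theorem lower_curve_n_eq_zero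
    {Ω : Type*} [MeasurableSpace Ω] (μ : Measure Ω)
    {H : Type*} [NormedAddCommGroup H] [InnerProductSpace ℝ H] [CompleteSpace H]
    (ι : H →ₗ[ℝ] Lp ℝ 2 μ) (hι : Function.Injective ι)
    (C : ℝ) (hC : 0 < C) (hιC : ∀ u : H, ‖ι u‖ ≤ C * ‖u‖)
    (I : H → ℝ → ℝ → ℝ)
    (hI : ∀ u a b, I u a b = ‖u‖ ^ 2 / 2 -
      (∫ x, (b * (Lp.posPart (ι u)) x ^ 2 + a * (Lp.negPart (ι u)) x ^ 2) ∂μ) / 2)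
    (lam₀ lam₁ lam₂ : ℝ) (hlam₀ : 0 < lam₀) (hlam₀₁ : lam₀ < lam₁) (hlam₁₂ : lam₁ < lam₂)
    (N E M : Submodule ℝ H)
    (hNcl : IsClosed (N : Set H)) (hEcl : IsClosed (E : Set H)) (hMcl : IsClosed (M : Set H))
    (hNfd : FiniteDimensional ℝ N) (hEfd : FiniteDimensional ℝ E) (hEne : E ≠ ⊥)
    (horthNE : ∀ v ∈ N, ∀ y ∈ E, ⟪v, y⟫ = 0)
    (horthNM : ∀ v ∈ N, ∀ w ∈ M, ⟪v, w⟫ = 0)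
    (horthEM : ∀ y ∈ E, ∀ w ∈ M, ⟪y, w⟫ = 0)
    (horthNE2 : ∀ v ∈ N, ∀ y ∈ E, ∫ x, (ι v) x * (ι y) x ∂μ = 0)
    (horthNM2 : ∀ v ∈ N, ∀ w ∈ M, ∫ x, (ι v) x * (ι w) x ∂μ = 0)
    (horthEM2 : ∀ y ∈ E, ∀ w ∈ M, ∫ x, (ι y) x * (ι w) x ∂μ = 0)
    (hdirect : N ⊔ E ⊔ M = ⊤)
    (hNspec : ∀ v ∈ N, ‖v‖ ^ 2 ≤ lam₀ * ‖ι v‖ ^ 2)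
    (hEspec : ∀ y ∈ E, ∀ u : H, ⟪y, u⟫ = lam₁ * ∫ x, (ι y) x * (ι u) x ∂μ)
    (hMspec : ∀ w ∈ M, lam₂ * ‖ι w‖ ^ 2 ≤ ‖w‖ ^ 2)
    (hcompact : ∀ s : Set H, Bornology.IsBounded s →
      IsCompact (closure ((fun u => ι u) '' s)))
    (K : ℝ → ℝ → Set H)
    (hK : ∀ a b, K a b = {u : H | ∀ v : H,
      ⟪u, v⟫ = ∫ x, (b * (Lp.posPart (ι u)) x - a * (Lp.negPart (ι u)) x) * (ι v) x ∂μ})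
    (Sig : Set (ℝ × ℝ))
    (hSig : Sig = {q : ℝ × ℝ | ∃ u : H, u ≠ 0 ∧ ∀ v : H,
      ⟪u, v⟫ = ∫ x, (q.2 * (Lp.posPart (ι u)) x - q.1 * (Lp.negPart (ι u)) x) * (ι v) x ∂μ})
    (θ : ℝ → ℝ → H → H)
    (hθ : ∀ a b, a ∈ Set.Ioo lam₀ lam₂ → b ∈ Set.Ioo lam₀ lam₂ → ∀ w ∈ E ⊔ M,
      θ a b w ∈ N ∧ (∀ v ∈ N, I (v + w) a b ≤ I (θ a b w + w) a b) ∧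
      (∀ v ∈ N, (∀ v' ∈ N, I (v' + w) a b ≤ I (v + w) a b) → v = θ a b w))
    (τ : ℝ → ℝ → H → H)
    (hτ : ∀ a b, a ∈ Set.Ioo lam₀ lam₂ → b ∈ Set.Ioo lam₀ lam₂ → ∀ v ∈ N ⊔ E,
      τ a b v ∈ M ∧ (∀ w ∈ M, I (v + τ a b v) a b ≤ I (v + w) a b) ∧
      (∀ w ∈ M, (∀ w' ∈ M, I (v + w) a b ≤ I (v + w') a b) → w = τ a b v))
    (Sk Sk' : ℝ → ℝ → Set H)
    (hSk : ∀ a b, Sk a b = {u : H | ∃ w ∈ E ⊔ M, u = θ a b w + w})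
    (hSk' : ∀ a b, Sk' a b = {u : H | ∃ v ∈ N ⊔ E, u = v + τ a b v})
    (n m : ℝ → ℝ → ℝ)
    (hn : ∀ a b, n a b = sInf {t : ℝ | ∃ w ∈ E ⊔ M, ‖w‖ = 1 ∧
      t = sSup {r : ℝ | ∃ v ∈ N, r = I (v + w) a b}})
    (hm : ∀ a b, m a b = sSup {t : ℝ | ∃ v ∈ N ⊔ E, ‖v‖ = 1 ∧
      t = sInf {r : ℝ | ∃ w ∈ M, r = I (v + w) a b}})
    (a b : ℝ) (ha : a ∈ Set.Ioo lam₀ lam₂) (hb : b ∈ Set.Ioo lam₀ lam₂)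
    (hnab : n a b = 0) :
    (∀ u ∈ Sk a b, 0 ≤ I u a b) ∧
    K a b = {u ∈ Sk a b | I u a b = 0} ∧
    (a, b) ∈ Sig := by
  classical
  obtain ⟨ha0, ha2⟩ := ha
  obtain ⟨hb0, hb2⟩ := hb
  have hapos : 0 < a := lt_trans hlam₀ ha0
  have hbpos : 0 < b := lt_trans hlam₀ hb0
  have hl1 : 0 < lam₁ := lt_trans hlam₀ hlam₀₁
  have hl2 : 0 < lam₂ := lt_trans hl1 hlam₁₂
  have hc₁ : lam₀ < min a b := lt_min ha0 hb0
  have hc₂ : max a b < lam₂ := max_lt ha2 hb2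
  have hc₁pos : 0 < min a b := lt_min hapos hbpos
  have hc₂pos : 0 < max a b := lt_max_of_lt_right hbpos
  obtain ⟨F, hFdef⟩ : ∃ F : H → ℝ, F = FF ι a b := ⟨_, rfl⟩
  obtain ⟨D, hDdef⟩ : ∃ D : H → H → ℝ, D = DI ι a b := ⟨_, rfl⟩
  have hIF : ∀ u : H, I u a b = F u := by
    intro u
    rw [hI, integral_posneg_eq_Phi, hFdef]
    rfl
  obtain ⟨κN, hκNdef⟩ : ∃ x : ℝ, x = (min a b - lam₀) / (2 * lam₀) := ⟨_, rfl⟩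
  obtain ⟨κM, hκMdef⟩ : ∃ x : ℝ, x = (lam₂ - max a b) / (2 * lam₂) := ⟨_, rfl⟩
  have hκNpos : 0 < κN := by
    rw [hκNdef]
    have : 0 < min a b - lam₀ := by linarith
    positivity
  have hκMpos : 0 < κM := by
    rw [hκMdef]
    have : 0 < lam₂ - max a b := by linarith
    positivity
  obtain ⟨L0, hL0def⟩ : ∃ x : ℝ, x = 1 + 2 * max a b * C ^ 2 := ⟨_, rfl⟩
  have hL0pos : 0 < L0 := by rw [hL0def]; positivity
  have hL0ge1 : 1 ≤ L0 := by
    rw [hL0def]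
    have : (0:ℝ) ≤ 2 * max a b * C ^ 2 := by positivity
    linarith
  have hιsq : ∀ z : H, ‖ι z‖ ^ 2 ≤ C ^ 2 * ‖z‖ ^ 2 := by
    intro z
    calc ‖ι z‖ ^ 2 ≤ (C * ‖z‖) ^ 2 := by
          apply pow_le_pow_left₀ (norm_nonneg _) (hιC z)
      _ = C ^ 2 * ‖z‖ ^ 2 := by ring
  -- subspace estimates
  have hkN : ∀ z ∈ N, (‖z‖ ^ 2 - min a b * ‖ι z‖ ^ 2) / 2 ≤ -(κN * ‖z‖ ^ 2) := by
    intro z hz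
    have h := hNspec z hz
    have expand : (‖z‖ ^ 2 - min a b * ‖ι z‖ ^ 2) / 2 + κN * ‖z‖ ^ 2 =
        (min a b * (‖z‖ ^ 2 - lam₀ * ‖ι z‖ ^ 2)) / (2 * lam₀) := by
      rw [hκNdef]; field_simp; ring
    have hnum : min a b * (‖z‖ ^ 2 - lam₀ * ‖ι z‖ ^ 2) ≤ 0 :=
      mul_nonpos_of_nonneg_of_nonpos hc₁pos.le (by linarith)
    have := div_nonpos_of_nonpos_of_nonneg hnum (by positivity : (0:ℝ) ≤ 2 * lam₀)
    linarith [expand ▸ this]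
  have hkM : ∀ z ∈ M, κM * ‖z‖ ^ 2 ≤ (‖z‖ ^ 2 - max a b * ‖ι z‖ ^ 2) / 2 := by
    intro z hz
    have h := hMspec z hz
    have expand : (‖z‖ ^ 2 - max a b * ‖ι z‖ ^ 2) / 2 - κM * ‖z‖ ^ 2 =
        (max a b * (‖z‖ ^ 2 - lam₂ * ‖ι z‖ ^ 2)) / (2 * lam₂) := by
      rw [hκMdef]; field_simp; ring
    have hnum : 0 ≤ max a b * (‖z‖ ^ 2 - lam₂ * ‖ι z‖ ^ 2) :=
      mul_nonneg hc₂pos.le (by linarith)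
    have := div_nonneg hnum (by positivity : (0:ℝ) ≤ 2 * lam₂)
    linarith [expand ▸ this]
  have hEnorm : ∀ y ∈ E, lam₁ * ‖ι y‖ ^ 2 = ‖y‖ ^ 2 := by
    intro y hy
    have h := hEspec y hy y
    rw [real_inner_self_eq_norm_sq] at h
    rw [integral_mul_eq_inner, real_inner_self_eq_norm_sq] at h
    linarith
  -- expansion inequalities
  have hFle : ∀ u z : H, F (u + z) ≤ F u + D u z + (‖z‖ ^ 2 - min a b * ‖ι z‖ ^ 2) / 2 := by
    intro u z
    rw [hFdef, hDdef]
    exact FF_expand_le ι hapos hbpos u z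
  have hFge : ∀ u z : H, F u + D u z + (‖z‖ ^ 2 - max a b * ‖ι z‖ ^ 2) / 2 ≤ F (u + z) := by
    intro u z
    rw [hFdef, hDdef]
    exact FF_expand_ge ι hapos hbpos u z
  have hDabs : ∀ u z : H, |D u z| ≤ L0 * (‖u‖ * ‖z‖) := by
    intro u z
    rw [hDdef, hL0def]
    exact DI_abs_le ι hapos hbpos hC.le hιC u z
  have hDdiff : ∀ u u' z : H, |D u z - D u' z| ≤ L0 * (‖u - u'‖ * ‖z‖) := by
    intro u u' z
    rw [hDdef, hL0def]
    exact DI_diff_le ι hapos hbpos hC.le hιC u u' z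
  have hDadd : ∀ u z z' : H, D u (z + z') = D u z + D u z' := by
    intro u z z'
    rw [hDdef]
    exact DI_add_right ι hapos hbpos u z z'
  have hDsmul : ∀ (u z : H) (c : ℝ), D u (c • z) = c * D u z := by
    intro u z c
    rw [hDdef]
    exact DI_smul_right ι u z c
  have hF0 : F 0 = 0 := by rw [hFdef]; exact FF_zero ι hapos hbpos
  have hFsmul : ∀ (c : ℝ), 0 ≤ c → ∀ u : H, F (c • u) = c ^ 2 * F u := by
    intro c hc u
    rw [hFdef]
    exact FF_smul ι hc u
  have hFhalf : ∀ u : H, F u ≤ ‖u‖ ^ 2 / 2 := by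
    intro u
    rw [hFdef]
    exact FF_le_half_sq ι hapos hbpos u
  have hFlow : ∀ u : H, ‖u‖ ^ 2 / 2 - max a b * ‖ι u‖ ^ 2 / 2 ≤ F u := by
    intro u
    rw [hFdef]
    exact FF_ge ι hapos hbpos u
  -- κ-term crude bounds
  have hκup : ∀ z : H, (‖z‖ ^ 2 - min a b * ‖ι z‖ ^ 2) / 2 ≤ L0 * ‖z‖ ^ 2 := by
    intro z
    have h1 : 0 ≤ min a b * ‖ι z‖ ^ 2 := by positivity
    have h2 : ‖z‖ ^ 2 ≤ L0 * ‖z‖ ^ 2 := le_mul_of_one_le_left (sq_nonneg _) hL0ge1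
    have h3 : (0:ℝ) ≤ ‖z‖ ^ 2 := sq_nonneg _
    linarith
  have hκdown : ∀ z : H, -(L0 * ‖z‖ ^ 2) ≤ (‖z‖ ^ 2 - max a b * ‖ι z‖ ^ 2) / 2 := by
    intro z
    have h1 : max a b * ‖ι z‖ ^ 2 ≤ max a b * (C ^ 2 * ‖z‖ ^ 2) :=
      mul_le_mul_of_nonneg_left (hιsq z) hc₂pos.le
    have h2 : max a b * (C ^ 2 * ‖z‖ ^ 2) + ‖z‖ ^ 2 + ‖z‖ ^ 2 ≤ 2 * (L0 * ‖z‖ ^ 2) := by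
      rw [hL0def]
      have h0 : (0:ℝ) ≤ max a b * (C ^ 2 * ‖z‖ ^ 2) := by positivity
      have hz2 : (0:ℝ) ≤ ‖z‖ ^ 2 := sq_nonneg _
      calc max a b * (C ^ 2 * ‖z‖ ^ 2) + ‖z‖ ^ 2 + ‖z‖ ^ 2
          ≤ 4 * (max a b * (C ^ 2 * ‖z‖ ^ 2)) + 2 * ‖z‖ ^ 2 := by linarith
        _ = 2 * ((1 + 2 * max a b * C ^ 2) * ‖z‖ ^ 2) := by ring
    have hz2 : (0:ℝ) ≤ ‖z‖ ^ 2 := sq_nonneg _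
    linarith
  have hFlip : ∀ u z : H, |F (u + z) - F u| ≤ L0 * (‖u‖ * ‖z‖) + L0 * ‖z‖ ^ 2 := by
    intro u z
    rw [abs_le]
    constructor
    · have h1 := hFge u z
      have h2 := hκdown z
      have h3 := (abs_le.mp (hDabs u z)).1
      linarith
    · have h1 := hFle u z
      have h2 := hκup z
      have h3 := (abs_le.mp (hDabs u z)).2
      linarith
  -- θ facts
  obtain ⟨T, hTdef⟩ : ∃ T : H → H, T = θ a b := ⟨_, rfl⟩
  have hθ' := hθ a b ⟨ha0, ha2⟩ ⟨hb0, hb2⟩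
  simp only [hIF, ← hTdef] at hθ'
  have hθmem : ∀ w ∈ E ⊔ M, T w ∈ N := fun w hw => (hθ' w hw).1
  have hθmax : ∀ w ∈ E ⊔ M, ∀ v ∈ N, F (v + w) ≤ F (T w + w) :=
    fun w hw => (hθ' w hw).2.1
  have hθuniq : ∀ w ∈ E ⊔ M, ∀ v ∈ N, (∀ v' ∈ N, F (v' + w) ≤ F (v + w)) → v = T w :=
    fun w hw => (hθ' w hw).2.2
  have hθub : ∀ w ∈ E ⊔ M, ‖T w‖ ≤ L0 / κN * ‖w‖ := by
    intro w hw
    have h0 : F w ≤ F (T w + w) := by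
      have := hθmax w hw 0 N.zero_mem
      rwa [zero_add] at this
    have h1 : F (T w + w) = F (w + T w) := by rw [add_comm]
    have h2 : F (w + T w) ≤ F w + D w (T w) + (‖T w‖ ^ 2 - min a b * ‖ι (T w)‖ ^ 2) / 2 :=
      hFle w (T w)
    have h3 := hkN (T w) (hθmem w hw)
    have h4 := (abs_le.mp (hDabs w (T w))).2
    have h5 : κN * ‖T w‖ ^ 2 ≤ L0 * (‖w‖ * ‖T w‖) := by linarith
    rcases eq_or_lt_of_le (norm_nonneg (T w)) with heq | hpos
    · rw [← heq]; positivity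
    · exact aux_cancel hκNpos (norm_nonneg w) hpos h5
  have hθhom : ∀ w ∈ E ⊔ M, ∀ c : ℝ, 0 < c → T (c • w) = c • T w := by
    intro w hw c hcpos
    refine (hθuniq (c • w) (Submodule.smul_mem _ c hw) (c • T w)
      (Submodule.smul_mem _ c (hθmem w hw)) ?_).symm
    intro v' hv'
    have key : v' + c • w = c • (c⁻¹ • v' + w) := by
      rw [smul_add, smul_smul, mul_inv_cancel₀ (ne_of_gt hcpos), one_smul]
    have key2 : c • T w + c • w = c • (T w + w) := by rw [smul_add]
    rw [key, key2, hFsmul c hcpos.le, hFsmul c hcpos.le]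
    exact mul_le_mul_of_nonneg_left
      (hθmax w hw (c⁻¹ • v') (Submodule.smul_mem _ _ hv')) (by positivity)
  -- sSup identification
  have hsSup : ∀ w ∈ E ⊔ M, sSup {r : ℝ | ∃ v ∈ N, r = F (v + w)} = F (T w + w) := by
    intro w hw
    have hub : ∀ r ∈ {r : ℝ | ∃ v ∈ N, r = F (v + w)}, r ≤ F (T w + w) := by
      rintro r ⟨v, hv, rfl⟩
      exact hθmax w hw v hv
    refine le_antisymm (csSup_le ⟨F (0 + w), 0, N.zero_mem, rfl⟩ hub) ?_
    exact le_csSup ⟨F (T w + w), hub⟩ ⟨T w, hθmem w hw, rfl⟩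
  obtain ⟨Tset, hTsetdef⟩ : ∃ S : Set ℝ, S = {t : ℝ | ∃ w ∈ E ⊔ M, ‖w‖ = 1 ∧
      t = sSup {r : ℝ | ∃ v ∈ N, r = F (v + w)}} := ⟨_, rfl⟩
  have hnab' : sInf Tset = 0 := by
    have h := hnab
    rw [hn a b] at h
    simp only [hIF] at h
    rw [hTsetdef]
    exact h
  have hTlb : ∀ t ∈ Tset, (1 - max a b * C ^ 2) / 2 ≤ t := by
    intro t ht
    rw [hTsetdef] at ht
    obtain ⟨w, hw, hnorm, rfl⟩ := ht
    rw [hsSup w hw]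
    have h0 : F (0 + w) ≤ F (T w + w) := hθmax w hw 0 N.zero_mem
    rw [zero_add] at h0
    have h1 := hFlow w
    have h2 : max a b * ‖ι w‖ ^ 2 ≤ max a b * (C ^ 2 * ‖w‖ ^ 2) :=
      mul_le_mul_of_nonneg_left (hιsq w) hc₂pos.le
    rw [hnorm] at h1 h2
    simp only [one_pow, mul_one] at h1 h2
    linarith
  have hTbdd : BddBelow Tset := ⟨(1 - max a b * C ^ 2) / 2, hTlb⟩
  -- Part 1 core : J ≥ 0 on E ⊔ M
  have hJ0 : ∀ w ∈ E ⊔ M, 0 ≤ F (T w + w) := by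
    intro w hw
    rcases eq_or_ne w 0 with rfl | hwne
    · have h := hθmax 0 (Submodule.zero_mem _) 0 N.zero_mem
      have h0 : (0:H) + 0 = 0 := add_zero 0
      rw [h0, hF0] at h
      exact h
    · have hnorm : (0:ℝ) < ‖w‖ := norm_pos_iff.mpr hwne
      obtain ⟨c, hcdef⟩ : ∃ x : ℝ, x = ‖w‖⁻¹ := ⟨_, rfl⟩
      have hcpos : 0 < c := by rw [hcdef]; positivity
      have hwhat : ‖c • w‖ = 1 := by
        rw [norm_smul, hcdef, norm_inv, norm_norm, inv_mul_cancel₀ (ne_of_gt hnorm)]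
      have hwmem : c • w ∈ E ⊔ M := Submodule.smul_mem _ c hw
      have hJhat : 0 ≤ F (T (c • w) + c • w) := by
        have hmem : F (T (c • w) + c • w) ∈ Tset := by
          rw [hTsetdef]
          exact ⟨c • w, hwmem, hwhat, (hsSup _ hwmem).symm⟩
        have := csInf_le hTbdd hmem
        rw [hnab'] at this
        exact this
      have hhom : F (T (c • w) + c • w) = c ^ 2 * F (T w + w) := by
        have h1 : T (c • w) + c • w = c • (T w + w) := by
          rw [hθhom w hw c hcpos, smul_add]
        rw [h1, hFsmul c hcpos.le]
      rw [hhom] at hJhat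
      have hc2 : (0:ℝ) < c ^ 2 := by positivity
      have h00 : c ^ 2 * 0 ≤ c ^ 2 * F (T w + w) := by rwa [mul_zero]
      exact le_of_mul_le_mul_left h00 hc2
  -- membership in K is criticality
  have hKiff : ∀ u : H, u ∈ K a b ↔ ∀ v : H, D u v = 0 := by
    intro u
    rw [hK]
    simp only [Set.mem_setOf_eq]
    constructor
    · intro h v
      have h2 := h v
      rw [integral_posneg_mul_eq_Bf] at h2
      rw [hDdef]
      show (⟪u, v⟫ : ℝ) - Bf a b (ι u) (ι v) / 2 = 0
      linarith
    · intro h v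
      have h2 := h v
      rw [hDdef] at h2
      have h3 : (⟪u, v⟫ : ℝ) - Bf a b (ι u) (ι v) / 2 = 0 := h2
      rw [integral_posneg_mul_eq_Bf]
      linarith
  have hdirect' : N ⊔ (E ⊔ M) = ⊤ := by rw [← sup_assoc]; exact hdirect
  -- Part 2 ⊆ : critical points lie on Sk with zero energy
  have hcrit_to : ∀ u : H, (∀ v : H, D u v = 0) → u ∈ Sk a b ∧ F u = 0 := by
    intro u hDu
    have hFu : F u = 0 := by
      have h := hDu u
      rw [hDdef, DI_self, real_inner_self_eq_norm_sq] at h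
      rw [hFdef]
      show ‖u‖ ^ 2 / 2 - Phi a b (ι u) / 2 = 0
      linarith
    have humem : u ∈ N ⊔ (E ⊔ M) := by rw [hdirect']; exact Submodule.mem_top
    obtain ⟨v₀, hv₀, w₀, hw₀, huv⟩ := Submodule.mem_sup.mp humem
    have hmax : ∀ v' ∈ N, F (v' + w₀) ≤ F (v₀ + w₀) := by
      intro v' hv'
      have hre : v' + w₀ = u + (v' - v₀) := by rw [← huv]; abel
      have h1 := hFle u (v' - v₀)
      have h2 := hkN (v' - v₀) (Submodule.sub_mem _ hv' hv₀)
      have h3 := hDu (v' - v₀)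
      have h4 : (0:ℝ) ≤ κN * ‖v' - v₀‖ ^ 2 := by positivity
      have hgoal : F (v' + w₀) ≤ F u := by
        rw [hre]
        linarith
      rw [← huv] at hgoal
      exact hgoal
    have hv₀T : v₀ = T w₀ := hθuniq w₀ hw₀ v₀ hv₀ hmax
    constructor
    · rw [hSk]
      refine ⟨w₀, hw₀, ?_⟩
      rw [← huv, hv₀T, hTdef]
    · exact hFu
  -- Part 2 ⊇ : zero-energy points of Sk are critical
  have hcrit_from : ∀ w₀ ∈ E ⊔ M, F (T w₀ + w₀) = 0 → ∀ z : H, D (T w₀ + w₀) z = 0 := by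
    intro w₀ hw₀ hFu
    obtain ⟨v₀, hv₀def⟩ : ∃ x : H, x = T w₀ := ⟨_, rfl⟩
    obtain ⟨u, hudef⟩ : ∃ x : H, x = T w₀ + w₀ := ⟨_, rfl⟩
    rw [← hudef] at hFu ⊢
    have hv₀N : v₀ ∈ N := by rw [hv₀def]; exact hθmem w₀ hw₀
    -- step A : derivative vanishes along N
    have hDN : ∀ z ∈ N, D u z = 0 := by
      intro z hz
      refine eq_zero_of_abs_le_sqrt (c := L0 * ‖z‖ ^ 2) ?_
      intro s hs hs1
      have key : ∀ t : ℝ, t * D u z ≤ t ^ 2 * (L0 * ‖z‖ ^ 2) := by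
        intro t
        have h1 : F (u + t • z) ≤ F u := by
          have hmem : v₀ + t • z ∈ N := Submodule.add_mem _ hv₀N (Submodule.smul_mem _ _ hz)
          have hh := hθmax w₀ hw₀ (v₀ + t • z) hmem
          have hre : v₀ + t • z + w₀ = u + t • z := by rw [hudef, hv₀def]; abel
          rw [hre] at hh
          rwa [← hudef] at hh
        have h2 := hFge u (t • z)
        have h4 : ‖t • z‖ ^ 2 = t ^ 2 * ‖z‖ ^ 2 := by
          rw [norm_smul, mul_pow, Real.norm_eq_abs, sq_abs]
        have h5 : D u (t • z) = t * D u z := hDsmul u z t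
        have h6 : -((‖t • z‖ ^ 2 - max a b * ‖ι (t • z)‖ ^ 2) / 2) ≤ t ^ 2 * (L0 * ‖z‖ ^ 2) := by
          have h7 := hκdown (t • z)
          have h8 : L0 * ‖t • z‖ ^ 2 = t ^ 2 * (L0 * ‖z‖ ^ 2) := by rw [h4]; ring
          linarith
        rw [h5] at h2
        linarith
      have hpos := key s
      have hneg := key (-s)
      have hub : D u z ≤ L0 * ‖z‖ ^ 2 * s := by
        have h2' := aux_div_pos hs hpos
        linarith
      have hlb : -(L0 * ‖z‖ ^ 2 * s) ≤ D u z := by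
        have h' : -(s * (L0 * ‖z‖ ^ 2 * s)) ≤ s * D u z := by
          have hh : (-s) * D u z ≤ (-s) ^ 2 * (L0 * ‖z‖ ^ 2) := hneg
          have e1 : -(s * (L0 * ‖z‖ ^ 2 * s)) = -((-s) ^ 2 * (L0 * ‖z‖ ^ 2)) := by ring
          have e2 : -((-s) * D u z) = s * D u z := by ring
          linarith
        exact aux_div_pos' hs h'
      have habs : |D u z| ≤ L0 * ‖z‖ ^ 2 * s := abs_le.mpr ⟨hlb, hub⟩
      have hmono : L0 * ‖z‖ ^ 2 * s ≤ L0 * ‖z‖ ^ 2 * Real.sqrt s := by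
        have hnn : (0:ℝ) ≤ L0 * ‖z‖ ^ 2 := by positivity
        exact mul_le_mul_of_nonneg_left (self_le_sqrt' hs.le hs1) hnn
      linarith
    -- step B : derivative vanishes along E ⊔ M
    have hDEM : ∀ z ∈ E ⊔ M, D u z = 0 := by
      intro z hz
      obtain ⟨R0, hR0def⟩ : ∃ x : ℝ, x = L0 / κN * (‖w₀‖ + ‖z‖) := ⟨_, rfl⟩
      have hR0nn : 0 ≤ R0 := by
        rw [hR0def]; positivity
      obtain ⟨D1, hD1def⟩ : ∃ x : ℝ,
          x = L0 * ((R0 + ‖w₀‖ + ‖z‖) * ‖z‖) + L0 * ‖z‖ ^ 2 := ⟨_, rfl⟩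
      have hD1nn : 0 ≤ D1 := by rw [hD1def]; positivity
      obtain ⟨D2, hD2def⟩ : ∃ x : ℝ,
          x = L0 * ‖z‖ ^ 2 + L0 * ‖z‖ * Real.sqrt (D1 / κN) := ⟨_, rfl⟩
      have hD2nn : 0 ≤ D2 := by rw [hD2def]; positivity
      have key : ∀ t : ℝ, 0 < |t| → |t| ≤ 1 →
          -(|t| * (D2 * Real.sqrt |t|)) ≤ t * D u z := by
        intro t htpos ht1
        obtain ⟨wt, hwtdef⟩ : ∃ x : H, x = w₀ + t • z := ⟨_, rfl⟩
        have hwtmem : wt ∈ E ⊔ M := by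
          rw [hwtdef]
          exact Submodule.add_mem _ hw₀ (Submodule.smul_mem _ _ hz)
        obtain ⟨vt, hvtdef⟩ : ∃ x : H, x = T wt := ⟨_, rfl⟩
        have hvtN : vt ∈ N := by rw [hvtdef]; exact hθmem wt hwtmem
        have htz : ‖t • z‖ = |t| * ‖z‖ := by rw [norm_smul, Real.norm_eq_abs]
        have hwtnorm : ‖wt‖ ≤ ‖w₀‖ + ‖z‖ := by
          have h1 : ‖wt‖ ≤ ‖w₀‖ + ‖t • z‖ := by rw [hwtdef]; exact norm_add_le _ _
          have h2 : |t| * ‖z‖ ≤ 1 * ‖z‖ := mul_le_mul_of_nonneg_right ht1 (norm_nonneg z)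
          rw [htz] at h1
          linarith
        have hvtnorm : ‖vt‖ ≤ R0 := by
          have h1 : ‖vt‖ ≤ L0 / κN * ‖wt‖ := by rw [hvtdef]; exact hθub wt hwtmem
          have h2 : L0 / κN * ‖wt‖ ≤ L0 / κN * (‖w₀‖ + ‖z‖) :=
            mul_le_mul_of_nonneg_left hwtnorm (by positivity)
          rw [hR0def]
          linarith
        have hJt : 0 ≤ F (vt + wt) := by
          rw [hvtdef]
          exact hJ0 wt hwtmem
        -- F (vt + w₀) ≤ -(κN ‖vt - v₀‖²)
        have hFu2 : F (vt + w₀) ≤ -(κN * ‖vt - v₀‖ ^ 2) := by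
          have hre : vt + w₀ = u + (vt - v₀) := by rw [hudef, hv₀def]; abel
          have h1 := hFle u (vt - v₀)
          have h2 := hkN (vt - v₀) (Submodule.sub_mem _ hvtN hv₀N)
          have h3 := hDN (vt - v₀) (Submodule.sub_mem _ hvtN hv₀N)
          rw [hre]
          rw [hFu] at h1
          linarith
        have hutnorm : ‖vt + wt‖ ≤ R0 + ‖w₀‖ + ‖z‖ := by
          have h1 : ‖vt + wt‖ ≤ ‖vt‖ + ‖wt‖ := norm_add_le _ _
          linarith
        have hFu3 : -(|t| * D1) ≤ F (vt + w₀) := by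
          have hre : vt + w₀ = vt + wt + (-(t • z)) := by rw [hwtdef]; abel
          have h1 := hFlip (vt + wt) (-(t • z))
          have hnn : ‖(-(t • z))‖ = |t| * ‖z‖ := by rw [norm_neg, htz]
          have h2 := (abs_le.mp h1).1
          rw [hre]
          have h3 : L0 * (‖vt + wt‖ * ‖(-(t • z))‖) + L0 * ‖(-(t • z))‖ ^ 2 ≤ |t| * D1 := by
            rw [hnn]
            have e1 : L0 * (‖vt + wt‖ * (|t| * ‖z‖)) ≤
                L0 * ((R0 + ‖w₀‖ + ‖z‖) * (|t| * ‖z‖)) := by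
              have hh : ‖vt + wt‖ * (|t| * ‖z‖) ≤ (R0 + ‖w₀‖ + ‖z‖) * (|t| * ‖z‖) :=
                mul_le_mul_of_nonneg_right hutnorm (by positivity)
              exact mul_le_mul_of_nonneg_left hh hL0pos.le
            have e2 : L0 * (|t| * ‖z‖) ^ 2 ≤ |t| * (L0 * ‖z‖ ^ 2) := by
              have h4 : |t| ^ 2 ≤ |t| * 1 := by
                rw [sq]
                exact mul_le_mul_of_nonneg_left ht1 (abs_nonneg t)
              have h5 : L0 * ‖z‖ ^ 2 * |t| ^ 2 ≤ L0 * ‖z‖ ^ 2 * (|t| * 1) :=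
                mul_le_mul_of_nonneg_left h4 (by positivity)
              have e3 : L0 * (|t| * ‖z‖) ^ 2 = L0 * ‖z‖ ^ 2 * |t| ^ 2 := by ring
              have e4 : L0 * ‖z‖ ^ 2 * (|t| * 1) = |t| * (L0 * ‖z‖ ^ 2) := by ring
              linarith
            have e5 : L0 * ((R0 + ‖w₀‖ + ‖z‖) * (|t| * ‖z‖)) + |t| * (L0 * ‖z‖ ^ 2)
                = |t| * D1 := by rw [hD1def]; ring
            linarith
          linarith
        have hvdist : ‖vt - v₀‖ ^ 2 ≤ |t| * D1 / κN := by
          rw [le_div_iff₀ hκNpos]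
          have hh : ‖vt - v₀‖ ^ 2 * κN = κN * ‖vt - v₀‖ ^ 2 := by ring
          linarith [hh]
        -- expansion at vt + w₀ in direction t z
        have hexp : F (vt + w₀ + t • z) ≤ F (vt + w₀) + t * D (vt + w₀) z
            + t ^ 2 * (L0 * ‖z‖ ^ 2) := by
          have h1 := hFle (vt + w₀) (t • z)
          have h2 := hκup (t • z)
          have h3 : D (vt + w₀) (t • z) = t * D (vt + w₀) z := hDsmul _ z t
          have h4 : ‖t • z‖ ^ 2 = t ^ 2 * ‖z‖ ^ 2 := by
            rw [htz, mul_pow, sq_abs]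
          have h8 : L0 * ‖t • z‖ ^ 2 = t ^ 2 * (L0 * ‖z‖ ^ 2) := by rw [h4]; ring
          rw [h3] at h1
          linarith
        have hre2 : vt + w₀ + t • z = vt + wt := by rw [hwtdef]; abel
        rw [hre2] at hexp
        have hκnn : (0:ℝ) ≤ κN * ‖vt - v₀‖ ^ 2 := by positivity
        have hstep : -(t ^ 2 * (L0 * ‖z‖ ^ 2)) ≤ t * D (vt + w₀) z := by
          have hFneg : F (vt + w₀) ≤ 0 := le_trans hFu2 (by linarith)
          linarith
        -- compare D (vt+w₀) z with D u z
        have hdiffnorm : ‖vt + w₀ - u‖ = ‖vt - v₀‖ := by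
          have hh : vt + w₀ - u = vt - v₀ := by rw [hudef, hv₀def]; abel
          rw [hh]
        have hd := hDdiff (vt + w₀) u z
        rw [hdiffnorm] at hd
        have hvd : ‖vt - v₀‖ ≤ Real.sqrt (|t| * D1 / κN) := by
          have h1 : ‖vt - v₀‖ = Real.sqrt (‖vt - v₀‖ ^ 2) := by
            rw [Real.sqrt_sq (norm_nonneg _)]
          rw [h1]
          exact Real.sqrt_le_sqrt hvdist
        have hsq : Real.sqrt (|t| * D1 / κN) = Real.sqrt |t| * Real.sqrt (D1 / κN) := by
          rw [mul_div_assoc, Real.sqrt_mul (abs_nonneg t)]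
        have hdd : |D (vt + w₀) z - D u z| ≤
            L0 * ‖z‖ * (Real.sqrt |t| * Real.sqrt (D1 / κN)) := by
          have h1 : ‖vt - v₀‖ * ‖z‖ ≤ Real.sqrt (|t| * D1 / κN) * ‖z‖ :=
            mul_le_mul_of_nonneg_right hvd (norm_nonneg z)
          have h2 : L0 * (‖vt - v₀‖ * ‖z‖) ≤ L0 * (Real.sqrt (|t| * D1 / κN) * ‖z‖) :=
            mul_le_mul_of_nonneg_left h1 hL0pos.le
          have h3 : L0 * (Real.sqrt (|t| * D1 / κN) * ‖z‖) =
              L0 * ‖z‖ * (Real.sqrt |t| * Real.sqrt (D1 / κN)) := by rw [hsq]; ring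
          linarith
        have h2' : |t| ^ 2 ≤ |t| * Real.sqrt |t| := by
          have h3' := self_le_sqrt' (abs_nonneg t) ht1
          rw [sq]
          exact mul_le_mul_of_nonneg_left h3' (abs_nonneg t)
        have hfin1 : -(|t| * Real.sqrt |t| * (L0 * ‖z‖ ^ 2)) ≤ t * D (vt + w₀) z := by
          have ht2 : t ^ 2 = |t| ^ 2 := (sq_abs t).symm
          have hh := hstep
          rw [ht2] at hh
          have hmul : |t| ^ 2 * (L0 * ‖z‖ ^ 2) ≤ |t| * Real.sqrt |t| * (L0 * ‖z‖ ^ 2) :=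
            mul_le_mul_of_nonneg_right h2' (by positivity)
          linarith
        have hbd : |t * (D (vt + w₀) z - D u z)| ≤
            |t| * (L0 * ‖z‖ * (Real.sqrt |t| * Real.sqrt (D1 / κN))) := by
          rw [abs_mul]
          exact mul_le_mul_of_nonneg_left hdd (abs_nonneg t)
        have hmain : t * D u z = t * D (vt + w₀) z - t * (D (vt + w₀) z - D u z) := by ring
        have hfin2 : -(|t| * (L0 * ‖z‖ * (Real.sqrt |t| * Real.sqrt (D1 / κN)))) ≤
            -(t * (D (vt + w₀) z - D u z)) := by
          have hh := (abs_le.mp hbd).2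
          linarith
        have hsum := add_le_add hfin1 hfin2
        have heq : -(|t| * (D2 * Real.sqrt |t|)) =
            -(|t| * Real.sqrt |t| * (L0 * ‖z‖ ^ 2))
              + -(|t| * (L0 * ‖z‖ * (Real.sqrt |t| * Real.sqrt (D1 / κN)))) := by
          rw [hD2def]; ring
        rw [hmain, heq]
        linarith
      refine eq_zero_of_abs_le_sqrt (c := D2) ?_
      intro s hs hs1
      have habs : |s| = s := abs_of_pos hs
      have h1 := key s (by rwa [habs]) (by rwa [habs])
      have h2 := key (-s) (by rwa [abs_neg, habs]) (by rwa [abs_neg, habs])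
      rw [habs] at h1
      rw [abs_neg, habs] at h2
      rw [abs_le]
      constructor
      · exact aux_div_pos' hs h1
      · exact aux_div_neg' hs h2
    -- step C : all directions
    intro z
    have hzmem : z ∈ N ⊔ (E ⊔ M) := by rw [hdirect']; exact Submodule.mem_top
    obtain ⟨z₁, hz₁, z₂, hz₂, rfl⟩ := Submodule.mem_sup.mp hzmem
    rw [hDadd]
    rw [hDN z₁ hz₁, hDEM z₂ hz₂]
    ring
  -- Conclusion of parts 1 and 2
  have part1 : ∀ u ∈ Sk a b, 0 ≤ I u a b := by
    intro u hu
    rw [hSk] at hu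
    obtain ⟨w, hw, rfl⟩ := hu
    rw [hIF, ← hTdef]
    exact hJ0 w hw
  have part2 : K a b = {u ∈ Sk a b | I u a b = 0} := by
    ext u
    simp only [Set.mem_setOf_eq, Set.mem_sep_iff]
    constructor
    · intro hu
      have hDu := (hKiff u).mp hu
      obtain ⟨h1, h2⟩ := hcrit_to u hDu
      exact ⟨h1, by rw [hIF]; exact h2⟩
    · rintro ⟨huSk, hIu⟩
      rw [hSk] at huSk
      obtain ⟨w, hw, hueq⟩ := huSk
      rw [hIF] at hIu
      rw [← hTdef] at hueq
      subst hueq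
      exact (hKiff _).mpr (hcrit_from w hw hIu)
  refine ⟨part1, part2, ?_⟩
  -- ===================== Part 3 =====================
  -- Lipschitz continuity of J on balls
  have hJlip : ∀ R : ℝ, 0 ≤ R → ∀ w ∈ E ⊔ M, ∀ w' ∈ E ⊔ M, ‖w‖ ≤ R → ‖w'‖ ≤ R →
      F (T w + w) ≤ F (T w' + w') + (L0 * (L0 / κN * R + R) + 2 * L0 * R) * ‖w - w'‖ := by
    intro R hR w hw w' hw' hwR hw'R
    have hre : T w + w = T w + w' + (w - w') := by abel
    have h1 := hFlip (T w + w') (w - w')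
    have h2 := (abs_le.mp h1).2
    have hx : ‖T w + w'‖ ≤ L0 / κN * R + R := by
      have h3 := hθub w hw
      have h4 : ‖T w + w'‖ ≤ ‖T w‖ + ‖w'‖ := norm_add_le _ _
      have h5 : L0 / κN * ‖w‖ ≤ L0 / κN * R := mul_le_mul_of_nonneg_left hwR (by positivity)
      linarith
    have hd : ‖w - w'‖ ≤ 2 * R := by
      have h6 := norm_sub_le w w'
      linarith
    have hmax := hθmax w' hw' (T w) (hθmem w hw)
    have e1 : L0 * (‖T w + w'‖ * ‖w - w'‖) ≤ L0 * ((L0 / κN * R + R) * ‖w - w'‖) :=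
      mul_le_mul_of_nonneg_left (mul_le_mul_of_nonneg_right hx (norm_nonneg _)) hL0pos.le
    have e2 : L0 * ‖w - w'‖ ^ 2 ≤ 2 * L0 * R * ‖w - w'‖ := by
      have h7 : ‖w - w'‖ * ‖w - w'‖ ≤ (2 * R) * ‖w - w'‖ :=
        mul_le_mul_of_nonneg_right hd (norm_nonneg _)
      have e3 : L0 * ‖w - w'‖ ^ 2 = L0 * (‖w - w'‖ * ‖w - w'‖) := by ring
      have h8 : L0 * (‖w - w'‖ * ‖w - w'‖) ≤ L0 * ((2 * R) * ‖w - w'‖) :=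
        mul_le_mul_of_nonneg_left h7 hL0pos.le
      have e4 : L0 * ((2 * R) * ‖w - w'‖) = 2 * L0 * R * ‖w - w'‖ := by ring
      linarith
    have e5 : (L0 * (L0 / κN * R + R) + 2 * L0 * R) * ‖w - w'‖ =
        L0 * ((L0 / κN * R + R) * ‖w - w'‖) + 2 * L0 * R * ‖w - w'‖ := by ring
    have hfinal : F (T w + w' + (w - w')) ≤ F (T w' + w')
        + (L0 * (L0 / κN * R + R) + 2 * L0 * R) * ‖w - w'‖ := by
      rw [e5]
      linarith
    rw [hre]
    exact hfinal
  -- the reduced functional on E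
  obtain ⟨jfun, hjdef⟩ : ∃ j : H → ℝ,
      j = fun y => sInf {r : ℝ | ∃ z ∈ M, r = F (T (y + z) + (y + z))} := ⟨_, rfl⟩
  have hjapp : ∀ y : H,
      jfun y = sInf {r : ℝ | ∃ z ∈ M, r = F (T (y + z) + (y + z))} := fun y => by rw [hjdef]
  have hSne : ∀ y : H, {r : ℝ | ∃ z ∈ M, r = F (T (y + z) + (y + z))}.Nonempty :=
    fun y => ⟨F (T (y + 0) + (y + 0)), 0, M.zero_mem, rfl⟩
  have hSlb : ∀ y ∈ E, ∀ r ∈ {r : ℝ | ∃ z ∈ M, r = F (T (y + z) + (y + z))}, (0:ℝ) ≤ r := by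
    rintro y hy r ⟨z, hz, rfl⟩
    exact hJ0 (y + z) (Submodule.add_mem _ (Submodule.mem_sup_left hy)
      (Submodule.mem_sup_right hz))
  have hjnonneg : ∀ y ∈ E, 0 ≤ jfun y := by
    intro y hy
    rw [hjapp]
    exact le_csInf (hSne y) (hSlb y hy)
  have hjle : ∀ y ∈ E, ∀ z ∈ M, jfun y ≤ F (T (y + z) + (y + z)) := by
    intro y hy z hz
    rw [hjapp]
    exact csInf_le ⟨0, hSlb y hy⟩ ⟨z, hz, rfl⟩
  -- coercivity constant A0
  obtain ⟨A0, hA0def⟩ : ∃ x : ℝ, x = (max a b - lam₁) / (2 * lam₁) := ⟨_, rfl⟩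
  have hcoerF : ∀ y ∈ E, ∀ z ∈ M, κM * ‖z‖ ^ 2 - A0 * ‖y‖ ^ 2 ≤ F (y + z) := by
    intro y hy z hz
    have h1 := hFlow (y + z)
    have hn1 : ‖y + z‖ ^ 2 = ‖y‖ ^ 2 + ‖z‖ ^ 2 := by
      have := norm_add_sq_real y z
      rw [horthEM y hy z hz] at this
      linarith
    have hn2 : ‖ι (y + z)‖ ^ 2 = ‖ι y‖ ^ 2 + ‖ι z‖ ^ 2 := by
      have hadd : ι (y + z) = ι y + ι z := map_add ι y z
      have hinner : (⟪ι y, ι z⟫ : ℝ) = 0 := by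
        rw [← integral_mul_eq_inner]
        exact horthEM2 y hy z hz
      have := norm_add_sq_real (ι y) (ι z)
      rw [hinner] at this
      rw [hadd]
      linarith
    have hq := hEnorm y hy
    have hid : (‖y‖ ^ 2 - max a b * ‖ι y‖ ^ 2) / 2 = -(A0 * ‖y‖ ^ 2) := by
      rw [hA0def, ← hq]
      field_simp
      ring
    have hM2 := hkM z hz
    have hexpand : ‖y + z‖ ^ 2 / 2 - max a b * ‖ι (y + z)‖ ^ 2 / 2 =
        (‖y‖ ^ 2 - max a b * ‖ι y‖ ^ 2) / 2 + (‖z‖ ^ 2 - max a b * ‖ι z‖ ^ 2) / 2 := by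
      rw [hn1, hn2]; ring
    rw [hexpand, hid] at h1
    linarith
  have hcoer : ∀ y ∈ E, ∀ z ∈ M,
      κM * ‖z‖ ^ 2 - A0 * ‖y‖ ^ 2 ≤ F (T (y + z) + (y + z)) := by
    intro y hy z hz
    have h1 := hcoerF y hy z hz
    have h2 : F (0 + (y + z)) ≤ F (T (y + z) + (y + z)) :=
      hθmax (y + z) (Submodule.add_mem _ (Submodule.mem_sup_left hy)
        (Submodule.mem_sup_right hz)) 0 N.zero_mem
    rw [zero_add] at h2
    linarith
  -- upper bound for J
  obtain ⟨U0, hU0def⟩ : ∃ x : ℝ, x = 1 / 2 + L0 ^ 2 / (4 * κN) := ⟨_, rfl⟩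
  have hU0pos : 0 < U0 := by rw [hU0def]; positivity
  have hJub : ∀ w ∈ E ⊔ M, F (T w + w) ≤ U0 * ‖w‖ ^ 2 := by
    intro w hw
    have h1 : F (T w + w) = F (w + T w) := by rw [add_comm]
    have h2 := hFle w (T w)
    have h3 := hkN (T w) (hθmem w hw)
    have h4 := (abs_le.mp (hDabs w (T w))).2
    have h5 := hFhalf w
    have h6 : L0 * (‖w‖ * ‖T w‖) - κN * ‖T w‖ ^ 2 ≤ L0 ^ 2 / (4 * κN) * ‖w‖ ^ 2 :=
      aux_amgm' hκNpos
    have e1 : U0 * ‖w‖ ^ 2 = ‖w‖ ^ 2 / 2 + L0 ^ 2 / (4 * κN) * ‖w‖ ^ 2 := by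
      rw [hU0def]; ring
    rw [h1, e1]
    linarith
  -- uniform bound on near-minimizers
  obtain ⟨Rz, hRzdef⟩ : ∃ x : ℝ, x = Real.sqrt ((4 * U0 + 1 + 4 * |A0|) / κM) := ⟨_, rfl⟩
  have hRznn : 0 ≤ Rz := by rw [hRzdef]; exact Real.sqrt_nonneg _
  have hzRz : ∀ y ∈ E, ‖y‖ ≤ 2 → ∀ z ∈ M,
      F (T (y + z) + (y + z)) ≤ jfun y + 1 → ‖z‖ ≤ Rz := by
    intro y hy hy2 z hz hFle1
    have h1 := hcoer y hy z hz
    have h2 : jfun y ≤ F (T (y + 0) + (y + 0)) := hjle y hy 0 M.zero_mem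
    have h3 : F (T (y + 0) + (y + 0)) ≤ U0 * ‖y + 0‖ ^ 2 := by
      refine hJub (y + 0) ?_
      rw [add_zero]
      exact Submodule.mem_sup_left hy
    rw [add_zero] at h2 h3
    have h4 : ‖y‖ ^ 2 ≤ 4 := by nlinarith [norm_nonneg y]
    have h5 : U0 * ‖y‖ ^ 2 ≤ 4 * U0 := by nlinarith
    have h6 : A0 * ‖y‖ ^ 2 ≤ 4 * |A0| := by
      have := le_abs_self A0
      nlinarith [abs_nonneg A0, sq_nonneg ‖y‖]
    have h7 : κM * ‖z‖ ^ 2 ≤ 4 * U0 + 1 + 4 * |A0| := by linarith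
    have h8 : ‖z‖ ^ 2 ≤ (4 * U0 + 1 + 4 * |A0|) / κM := by
      rw [le_div_iff₀ hκMpos]
      linarith [mul_comm κM (‖z‖ ^ 2)]
    calc ‖z‖ = Real.sqrt (‖z‖ ^ 2) := (Real.sqrt_sq (norm_nonneg z)).symm
      _ ≤ Rz := by rw [hRzdef]; exact Real.sqrt_le_sqrt h8
  -- Lipschitz continuity of jfun on the 2-ball of E
  obtain ⟨Kj, hKjdef⟩ : ∃ x : ℝ,
      x = L0 * (L0 / κN * (2 + Rz) + (2 + Rz)) + 2 * L0 * (2 + Rz) := ⟨_, rfl⟩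
  have hKjnn : 0 ≤ Kj := by rw [hKjdef]; positivity
  have hjlip : ∀ y ∈ E, ∀ y' ∈ E, ‖y‖ ≤ 2 → ‖y'‖ ≤ 2 →
      jfun y ≤ jfun y' + Kj * ‖y - y'‖ := by
    intro y hy y' hy' h2y h2y'
    refine le_of_forall_pos_le_add ?_
    intro ε hε
    obtain ⟨ε', hε'def⟩ : ∃ x : ℝ, x = min ε 1 := ⟨_, rfl⟩
    have hε'pos : 0 < ε' := by rw [hε'def]; exact lt_min hε one_pos
    have hε'le : ε' ≤ ε := by rw [hε'def]; exact min_le_left _ _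
    have hε'le1 : ε' ≤ 1 := by rw [hε'def]; exact min_le_right _ _
    obtain ⟨r, hrmem, hrlt⟩ := Real.lt_sInf_add_pos (hSne y') hε'pos
    obtain ⟨z, hz, rfl⟩ := hrmem
    rw [← hjapp] at hrlt
    have hzb : ‖z‖ ≤ Rz := by
      refine hzRz y' hy' h2y' z hz ?_
      linarith
    have hym : y + z ∈ E ⊔ M :=
      Submodule.add_mem _ (Submodule.mem_sup_left hy) (Submodule.mem_sup_right hz)
    have hy'm : y' + z ∈ E ⊔ M :=
      Submodule.add_mem _ (Submodule.mem_sup_left hy') (Submodule.mem_sup_right hz)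
    have hnym : ‖y + z‖ ≤ 2 + Rz := by
      have := norm_add_le y z
      linarith
    have hny'm : ‖y' + z‖ ≤ 2 + Rz := by
      have := norm_add_le y' z
      linarith
    have hlip := hJlip (2 + Rz) (by linarith) (y + z) hym (y' + z) hy'm hnym hny'm
    have hsub : y + z - (y' + z) = y - y' := by abel
    rw [hsub, ← hKjdef] at hlip
    have hjy := hjle y hy z hz
    linarith
  -- compact sphere of E and the minimizer
  haveI : FiniteDimensional ℝ E := hEfd
  haveI : ProperSpace E := FiniteDimensional.proper ℝ E
  obtain ⟨e, heE, hene⟩ := Submodule.exists_mem_ne_zero_of_ne_bot hEne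
  have henorm : (0:ℝ) < ‖e‖ := norm_pos_iff.mpr hene
  obtain ⟨y0H, hy0Hdef⟩ : ∃ x : H, x = ‖e‖⁻¹ • e := ⟨_, rfl⟩
  have hy0HE : y0H ∈ E := by rw [hy0Hdef]; exact Submodule.smul_mem _ _ heE
  have hy0H1 : ‖y0H‖ = 1 := by
    rw [hy0Hdef, norm_smul, norm_inv, norm_norm, inv_mul_cancel₀ (ne_of_gt henorm)]
  have hjE2 : ∀ p q : ↥E, ‖p‖ ≤ 2 → ‖q‖ ≤ 2 →
      |jfun (p : H) - jfun (q : H)| ≤ Kj * ‖(p : H) - (q : H)‖ := by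
    intro p q hp hq
    have hp' : ‖(p : H)‖ ≤ 2 := by rwa [← Submodule.norm_coe] at hp
    have hq' : ‖(q : H)‖ ≤ 2 := by rwa [← Submodule.norm_coe] at hq
    have h1 := hjlip (p : H) p.2 (q : H) q.2 hp' hq'
    have h2 := hjlip (q : H) q.2 (p : H) p.2 hq' hp'
    rw [abs_le]
    constructor
    · have : ‖(q : H) - (p : H)‖ = ‖(p : H) - (q : H)‖ := norm_sub_rev _ _
      rw [this] at h2
      linarith
    · linarith
  have hcont : ContinuousOn (fun y : ↥E => jfun (y : H)) (Metric.sphere (0 : ↥E) 1) := by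
    rw [Metric.continuousOn_iff]
    intro p hp ε hε
    refine ⟨ε / (Kj + 1), by positivity, ?_⟩
    intro q hq hdist
    have hp1 : ‖p‖ = 1 := by rwa [mem_sphere_zero_iff_norm] at hp
    have hq1 : ‖q‖ = 1 := by rwa [mem_sphere_zero_iff_norm] at hq
    have h1 := hjE2 q p (by rw [hq1]; norm_num) (by rw [hp1]; norm_num)
    have h2 : ‖(q : H) - (p : H)‖ < ε / (Kj + 1) := by
      have : dist q p = ‖(q : H) - (p : H)‖ := by
        rw [Subtype.dist_eq, dist_eq_norm]
      rwa [this] at hdist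
    have h3 : Kj * ‖(q : H) - (p : H)‖ ≤ Kj * (ε / (Kj + 1)) :=
      mul_le_mul_of_nonneg_left h2.le hKjnn
    have h4 : Kj * (ε / (Kj + 1)) < ε := by
      rw [mul_div_assoc', div_lt_iff₀ (by positivity : (0:ℝ) < Kj + 1)]
      nlinarith
    show dist (jfun (q : H)) (jfun (p : H)) < ε
    rw [Real.dist_eq]
    calc |jfun (q : H) - jfun (p : H)| ≤ Kj * ‖(q : H) - (p : H)‖ := h1
      _ < ε := by linarith
  have hsphne : (Metric.sphere (0 : ↥E) 1).Nonempty := by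
    refine ⟨⟨y0H, hy0HE⟩, ?_⟩
    rw [mem_sphere_zero_iff_norm]
    rw [← Submodule.norm_coe]
    exact hy0H1
  obtain ⟨ys, hyssph, hysmin⟩ :=
    (isCompact_sphere (0 : ↥E) 1).exists_isMinOn hsphne hcont
  obtain ⟨yH, hyHdef⟩ : ∃ x : H, x = (ys : H) := ⟨_, rfl⟩
  have hyHE : yH ∈ E := by rw [hyHdef]; exact ys.2
  have hyH1 : ‖yH‖ = 1 := by
    rw [hyHdef]
    exact mem_sphere_zero_iff_norm.mp hyssph
  -- the minimum value is 0
  have hTsetne : Tset.Nonempty := by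
    rw [hTsetdef]
    exact ⟨_, y0H, Submodule.mem_sup_left hy0HE, hy0H1, rfl⟩
  have hJhom : ∀ w ∈ E ⊔ M, ∀ c : ℝ, 0 < c →
      F (T (c • w) + c • w) = c ^ 2 * F (T w + w) := by
    intro w hw c hcpos
    have h1 : T (c • w) + c • w = c • (T w + w) := by
      rw [hθhom w hw c hcpos, smul_add]
    rw [h1, hFsmul c hcpos.le]
  have hjmin : ∀ y ∈ E, ‖y‖ = 1 → jfun yH ≤ jfun y := by
    intro y hy hy1
    have hmem : (⟨y, hy⟩ : ↥E) ∈ Metric.sphere (0 : ↥E) 1 := by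
      rw [mem_sphere_zero_iff_norm]
      rw [← Submodule.norm_coe]
      exact hy1
    have := isMinOn_iff.mp hysmin ⟨y, hy⟩ hmem
    rw [hyHdef]
    exact this
  have hδ0 : jfun yH = 0 := by
    refine le_antisymm ?_ (hjnonneg yH hyHE)
    by_contra hpos
    push_neg at hpos
    obtain ⟨ρ0, hρ0def⟩ : ∃ x : ℝ, x = κM / (2 * (κM + |A0| + 1)) := ⟨_, rfl⟩
    have hρ0pos : 0 < ρ0 := by rw [hρ0def]; exact aux_rho_pos hκMpos (abs_nonneg _)
    have hρ0key : ρ0 * (κM + |A0|) ≤ κM / 2 := by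
      rw [hρ0def]; exact aux_rho_key hκMpos (abs_nonneg _)
    have hlb2 : ∀ t ∈ Tset, min (κM / 2) (ρ0 * jfun yH) ≤ t := by
      intro t ht
      rw [hTsetdef] at ht
      obtain ⟨w, hw, hnorm, rfl⟩ := ht
      rw [hsSup w hw]
      obtain ⟨y, hy, z, hz, rfl⟩ := Submodule.mem_sup.mp hw
      have hn12 : ‖y‖ ^ 2 + ‖z‖ ^ 2 = 1 := by
        have h1 := norm_add_sq_real y z
        rw [horthEM y hy z hz, hnorm] at h1
        norm_num at h1
        linarith
      have hcz := hcoer y hy z hz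
      rcases le_or_gt (‖y‖ ^ 2) ρ0 with hle | hlt
      · have h1 : κM * ‖y‖ ^ 2 ≤ κM * ρ0 := mul_le_mul_of_nonneg_left hle hκMpos.le
        have h2 : A0 * ‖y‖ ^ 2 ≤ |A0| * ρ0 := by
          have h3 : A0 * ‖y‖ ^ 2 ≤ |A0| * ‖y‖ ^ 2 :=
            mul_le_mul_of_nonneg_right (le_abs_self A0) (sq_nonneg _)
          have h4 : |A0| * ‖y‖ ^ 2 ≤ |A0| * ρ0 :=
            mul_le_mul_of_nonneg_left hle (abs_nonneg _)
          linarith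
        have h5 : κM * ‖z‖ ^ 2 = κM - κM * ‖y‖ ^ 2 := by
          have e : ‖z‖ ^ 2 = 1 - ‖y‖ ^ 2 := by linarith
          rw [e]; ring
        have h6 : ρ0 * (κM + |A0|) = κM * ρ0 + |A0| * ρ0 := by ring
        have h7 : min (κM / 2) (ρ0 * jfun yH) ≤ κM / 2 := min_le_left _ _
        linarith
      · have hynz : (0:ℝ) < ‖y‖ := by
          by_contra hc
          push_neg at hc
          have : ‖y‖ = 0 := le_antisymm hc (norm_nonneg y)
          rw [this] at hlt
          simp at hlt
          linarith
        obtain ⟨c, hcdef⟩ : ∃ x : ℝ, x = ‖y‖⁻¹ := ⟨_, rfl⟩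
        have hcpos : 0 < c := by rw [hcdef]; positivity
        have hcy : ‖c • y‖ = 1 := by
          rw [norm_smul, hcdef, norm_inv, norm_norm, inv_mul_cancel₀ (ne_of_gt hynz)]
        have hcyE : c • y ∈ E := Submodule.smul_mem _ _ hy
        have hczM : c • z ∈ M := Submodule.smul_mem _ _ hz
        have hsmul : c • (y + z) = c • y + c • z := smul_add c y z
        have hhom := hJhom (c • (y + z)) (by
          rw [hsmul]
          exact Submodule.add_mem _ (Submodule.mem_sup_left hcyE)
            (Submodule.mem_sup_right hczM)) ‖y‖ hynz
        have hinv : ‖y‖ • c • (y + z) = y + z := by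
          rw [smul_smul, hcdef, mul_inv_cancel₀ (ne_of_gt hynz), one_smul]
        rw [hinv] at hhom
        have hjge : jfun (c • y) ≤ F (T (c • y + c • z) + (c • y + c • z)) :=
          hjle (c • y) hcyE (c • z) hczM
        have hjymin : jfun yH ≤ jfun (c • y) := hjmin (c • y) hcyE hcy
        have hj0cy : 0 ≤ F (T (c • (y + z)) + c • (y + z)) := by
          refine hJ0 _ ?_
          rw [hsmul]
          exact Submodule.add_mem _ (Submodule.mem_sup_left hcyE)
            (Submodule.mem_sup_right hczM)
        have hfin : ρ0 * jfun yH ≤ F (T (y + z) + (y + z)) := by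
          rw [hhom]
          have h8 : jfun yH ≤ F (T (c • (y + z)) + c • (y + z)) := by
            rw [hsmul]
            exact le_trans hjymin hjge
          have h9 : ρ0 * jfun yH ≤ ‖y‖ ^ 2 * jfun yH := by
            have := hjnonneg yH hyHE
            exact mul_le_mul_of_nonneg_right hlt.le this
          have h10 : ‖y‖ ^ 2 * jfun yH ≤ ‖y‖ ^ 2 * F (T (c • (y + z)) + c • (y + z)) :=
            mul_le_mul_of_nonneg_left h8 (sq_nonneg _)
          linarith
        exact le_trans (min_le_right _ _) hfin
    have hc1 : min (κM / 2) (ρ0 * jfun yH) ≤ 0 := by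
      have := le_csInf hTsetne hlb2
      rw [hnab'] at this
      exact this
    have hc2 : 0 < min (κM / 2) (ρ0 * jfun yH) := by
      refine lt_min (by positivity) ?_
      exact mul_pos hρ0pos hpos
    linarith
  -- minimizing sequence in M at yH
  have hex : ∀ k : ℕ, ∃ z, z ∈ M ∧ F (T (yH + z) + (yH + z)) < 1 / (k + 1) := by
    intro k
    have hkpos : (0:ℝ) < 1 / (k + 1) := by positivity
    obtain ⟨r, hrmem, hrlt⟩ := Real.lt_sInf_add_pos (hSne yH) hkpos
    obtain ⟨z, hz, rfl⟩ := hrmem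
    refine ⟨z, hz, ?_⟩
    rw [← hjapp, hδ0] at hrlt
    linarith
  choose zs hzsM hzslt using hex
  have hzs0 : ∀ k : ℕ, 0 ≤ F (T (yH + zs k) + (yH + zs k)) := by
    intro k
    exact hJ0 _ (Submodule.add_mem _ (Submodule.mem_sup_left hyHE)
      (Submodule.mem_sup_right (hzsM k)))
  -- midpoint strong convexity estimate
  have hmid : ∀ z ∈ M, ∀ z' ∈ M, κM * ‖z - z'‖ ^ 2 / 2 ≤
      F (T (yH + z) + (yH + z)) + F (T (yH + z') + (yH + z')) := by
    intro z hz z' hz'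
    obtain ⟨d, hddef⟩ : ∃ x : H, x = (2⁻¹ : ℝ) • (z - z') := ⟨_, rfl⟩
    obtain ⟨mm, hmdef⟩ : ∃ x : H, x = (2⁻¹ : ℝ) • (z + z') := ⟨_, rfl⟩
    have hdM : d ∈ M := by rw [hddef]; exact Submodule.smul_mem _ _ (Submodule.sub_mem _ hz hz')
    have hmM : mm ∈ M := by rw [hmdef]; exact Submodule.smul_mem _ _ (Submodule.add_mem _ hz hz')
    have hmd1 : mm + d = z := by
      rw [hmdef, hddef, ← smul_add]
      have h2z : z + z' + (z - z') = (2:ℝ) • z := by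
        rw [two_smul]; abel
      rw [h2z, smul_smul]
      norm_num
    have hmd2 : mm - d = z' := by
      rw [hmdef, hddef, ← smul_sub]
      have h2z : z + z' - (z - z') = (2:ℝ) • z' := by
        rw [two_smul]; abel
      rw [h2z, smul_smul]
      norm_num
    have hymM : yH + mm ∈ E ⊔ M :=
      Submodule.add_mem _ (Submodule.mem_sup_left hyHE) (Submodule.mem_sup_right hmM)
    have hx0 : 0 ≤ F (T (yH + mm) + (yH + mm)) := hJ0 _ hymM
    have hkMd := hkM d hdM
    -- lower bound for J(yH + z)
    have hb1 : F (T (yH + mm) + (yH + mm)) + D (T (yH + mm) + (yH + mm)) d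
        + κM * ‖d‖ ^ 2 ≤ F (T (yH + z) + (yH + z)) := by
      have h1 := hFge (T (yH + mm) + (yH + mm)) d
      have hre : T (yH + mm) + (yH + mm) + d = T (yH + mm) + (yH + z) := by
        rw [← hmd1]; abel
      rw [hre] at h1
      have h2 : F (T (yH + mm) + (yH + z)) ≤ F (T (yH + z) + (yH + z)) := by
        refine hθmax (yH + z) (Submodule.add_mem _ (Submodule.mem_sup_left hyHE)
          (Submodule.mem_sup_right hz)) (T (yH + mm)) (hθmem _ hymM)
      linarith
    have hb2 : F (T (yH + mm) + (yH + mm)) - D (T (yH + mm) + (yH + mm)) d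
        + κM * ‖d‖ ^ 2 ≤ F (T (yH + z') + (yH + z')) := by
      have h1 := hFge (T (yH + mm) + (yH + mm)) (-d)
      have hre : T (yH + mm) + (yH + mm) + (-d) = T (yH + mm) + (yH + z') := by
        rw [← hmd2]; abel
      rw [hre] at h1
      have h2 : F (T (yH + mm) + (yH + z')) ≤ F (T (yH + z') + (yH + z')) := by
        refine hθmax (yH + z') (Submodule.add_mem _ (Submodule.mem_sup_left hyHE)
          (Submodule.mem_sup_right hz')) (T (yH + mm)) (hθmem _ hymM)
      have hDneg : D (T (yH + mm) + (yH + mm)) (-d) = -D (T (yH + mm) + (yH + mm)) d := by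
        have hneg1 : -d = (-1 : ℝ) • d := by rw [neg_one_smul]
        rw [hneg1, hDsmul]
        ring
      rw [hDneg] at h1
      have hnd : ‖(-d)‖ = ‖d‖ := norm_neg d
      rw [hnd] at h1
      have hkMd' := hkM (-d) (Submodule.neg_mem _ hdM)
      rw [hnd] at hkMd'
      linarith
    have hdnorm : ‖d‖ ^ 2 = ‖z - z'‖ ^ 2 / 4 := by
      rw [hddef, norm_smul]
      norm_num
      ring
    rw [hdnorm] at hb1 hb2
    have e : κM * ‖z - z'‖ ^ 2 / 2 = κM * (‖z - z'‖ ^ 2 / 4) + κM * (‖z - z'‖ ^ 2 / 4) := by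
      ring
    linarith
  -- the sequence is Cauchy
  have hcauchy : CauchySeq zs := by
    rw [Metric.cauchySeq_iff']
    intro ε hε
    obtain ⟨Nn, hN⟩ := exists_nat_gt (8 / (κM * ε ^ 2))
    refine ⟨Nn, fun nn hnn => ?_⟩
    have h1 := hmid (zs nn) (hzsM nn) (zs Nn) (hzsM Nn)
    have h2 := hzslt nn
    have h3 := hzslt Nn
    have h4 : (1:ℝ) / (nn + 1) ≤ 1 / (Nn + 1) := by
      apply one_div_le_one_div_of_le (by positivity)
      have : (Nn:ℝ) ≤ nn := Nat.cast_le.mpr hnn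
      linarith
    have h5 : κM * ‖zs nn - zs Nn‖ ^ 2 / 2 ≤ 2 / (Nn + 1) := by
      have e : (2:ℝ) / (Nn + 1) = 1 / (Nn + 1) + 1 / (Nn + 1) := by ring
      rw [e]
      linarith
    have hNpos : (0:ℝ) < (Nn:ℝ) + 1 := by positivity
    have h6 : 8 / (κM * ε ^ 2) < (Nn:ℝ) + 1 := by
      have := hN
      linarith
    have h7 : (2:ℝ) / ((Nn:ℝ) + 1) < 2 / (8 / (κM * ε ^ 2)) :=
      div_lt_div_of_pos_left (by norm_num) (by positivity) h6
    have h8 : (2:ℝ) / (8 / (κM * ε ^ 2)) = κM * ε ^ 2 / 4 := by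
      field_simp
      ring
    have h9 : κM * ‖zs nn - zs Nn‖ ^ 2 / 2 < κM * ε ^ 2 / 4 := by
      rw [h8] at h7
      linarith
    have h10 : ‖zs nn - zs Nn‖ ^ 2 < ε ^ 2 := by
      have h11 : κM * ‖zs nn - zs Nn‖ ^ 2 < κM * (ε ^ 2 / 2) := by
        have e2 : κM * (ε ^ 2 / 2) = (κM * ε ^ 2 / 4) * 2 := by ring
        rw [e2]
        linarith
      have h12 := lt_of_mul_lt_mul_left (by linarith [h11] : κM * ‖zs nn - zs Nn‖ ^ 2 <
        κM * (ε ^ 2 / 2)) hκMpos.le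
      have : (0:ℝ) < ε ^ 2 := by positivity
      linarith
    rw [dist_eq_norm]
    have hnn2 : 0 ≤ ‖zs nn - zs Nn‖ := norm_nonneg _
    by_contra hcon
    push_neg at hcon
    have : ε ^ 2 ≤ ‖zs nn - zs Nn‖ ^ 2 := by
      apply pow_le_pow_left₀ hε.le hcon
    linarith
  obtain ⟨zl, hzl⟩ := cauchySeq_tendsto_of_complete hcauchy
  have hzlM : zl ∈ M := hMcl.mem_of_tendsto hzl (Filter.Eventually.of_forall hzsM)
  have hzsRz : ∀ k : ℕ, ‖zs k‖ ≤ Rz := by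
    intro k
    refine hzRz yH hyHE (by rw [hyH1]; norm_num) (zs k) (hzsM k) ?_
    have h1 := hzslt k
    have h2 : (1:ℝ) / (k + 1) ≤ 1 := by
      rw [div_le_one (by positivity)]
      have : (0:ℝ) ≤ (k:ℝ) := Nat.cast_nonneg k
      linarith
    have h3 := hjnonneg yH hyHE
    linarith
  have hzlRz : ‖zl‖ ≤ Rz := by
    refine le_of_tendsto hzl.norm (Filter.Eventually.of_forall hzsRz)
  -- the limit has J = 0
  obtain ⟨KR, hKRdef⟩ : ∃ x : ℝ,
      x = L0 * (L0 / κN * (1 + Rz) + (1 + Rz)) + 2 * L0 * (1 + Rz) := ⟨_, rfl⟩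
  have hKRnn : 0 ≤ KR := by rw [hKRdef]; positivity
  have hJzl0 : F (T (yH + zl) + (yH + zl)) = 0 := by
    have hmem : yH + zl ∈ E ⊔ M :=
      Submodule.add_mem _ (Submodule.mem_sup_left hyHE) (Submodule.mem_sup_right hzlM)
    refine le_antisymm ?_ (hJ0 _ hmem)
    refine le_of_forall_pos_le_add ?_
    intro ε hε
    have hev1 : ∀ᶠ k : ℕ in Filter.atTop, (1:ℝ) / (k + 1) < ε / 2 := by
      have ht := tendsto_one_div_add_atTop_nhds_zero_nat (𝕜 := ℝ)
      exact ht.eventually_lt_const (by positivity)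
    have hev2 : ∀ᶠ k : ℕ in Filter.atTop, dist (zs k) zl < ε / (2 * (KR + 1)) := by
      have := Metric.tendsto_atTop.mp hzl (ε / (2 * (KR + 1))) (by positivity)
      obtain ⟨N1, hN1⟩ := this
      exact Filter.eventually_atTop.mpr ⟨N1, hN1⟩
    obtain ⟨k, hk1, hk2⟩ := (hev1.and hev2).exists
    have hmemk : yH + zs k ∈ E ⊔ M :=
      Submodule.add_mem _ (Submodule.mem_sup_left hyHE) (Submodule.mem_sup_right (hzsM k))
    have hn1 : ‖yH + zl‖ ≤ 1 + Rz := by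
      have := norm_add_le yH zl
      rw [hyH1] at this
      linarith
    have hn2 : ‖yH + zs k‖ ≤ 1 + Rz := by
      have h1 := norm_add_le yH (zs k)
      have h2 := hzsRz k
      rw [hyH1] at h1
      linarith
    have hlip := hJlip (1 + Rz) (by linarith) (yH + zl) hmem (yH + zs k) hmemk hn1 hn2
    rw [← hKRdef] at hlip
    have hsub : yH + zl - (yH + zs k) = zl - zs k := by abel
    rw [hsub] at hlip
    have hd : ‖zl - zs k‖ < ε / (2 * (KR + 1)) := by
      rw [dist_eq_norm] at hk2
      rw [norm_sub_rev]
      exact hk2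
    have h3 : KR * ‖zl - zs k‖ ≤ KR * (ε / (2 * (KR + 1))) :=
      mul_le_mul_of_nonneg_left hd.le hKRnn
    have h4 : KR * (ε / (2 * (KR + 1))) ≤ ε / 2 := aux_keps hKRnn hε
    have h5 := hzslt k
    linarith
  -- assemble the nontrivial critical point
  have hwstarmem : yH + zl ∈ E ⊔ M :=
    Submodule.add_mem _ (Submodule.mem_sup_left hyHE) (Submodule.mem_sup_right hzlM)
  have hDstar := hcrit_from (yH + zl) hwstarmem hJzl0
  have hKstar : T (yH + zl) + (yH + zl) ∈ K a b := (hKiff _).mpr hDstar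
  have hinner : (⟪T (yH + zl) + (yH + zl), yH⟫ : ℝ) = 1 := by
    rw [inner_add_left, inner_add_left]
    have h1 : (⟪T (yH + zl), yH⟫ : ℝ) = 0 :=
      horthNE (T (yH + zl)) (hθmem _ hwstarmem) yH hyHE
    have h2 : (⟪yH, yH⟫ : ℝ) = 1 := by
      rw [real_inner_self_eq_norm_sq, hyH1]
      norm_num
    have h3 : (⟪zl, yH⟫ : ℝ) = 0 := by
      rw [real_inner_comm]
      exact horthEM yH hyHE zl hzlM
    rw [h1, h2, h3]
    norm_num
  have hne0 : T (yH + zl) + (yH + zl) ≠ 0 := by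
    intro h0
    rw [h0, inner_zero_left] at hinner
    norm_num at hinner
  rw [hSig]
  refine ⟨T (yH + zl) + (yH + zl), hne0, ?_⟩
  intro v
  rw [hK] at hKstar
  have := hKstar v
  rw [hTdef] at this ⊢
  exact this
end

section
/- The functions n and m are continuous on Q_k, n(a, b) and m(a, b) are nonincreasing in a for fixed b and nonincreasing in b for fixed a, and n(λ_k, λ_k) = 0 and m(λ_k, λ_k) = 0. -/
open MeasureTheory RealInnerProductSpace

set_option maxHeartbeats 2000000

section Aux
variable {Ω : Type*} [MeasurableSpace Ω] {μ : Measure Ω}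

lemma innL2 (f g : Lp ℝ 2 μ) : ⟪f, g⟫ = ∫ x, f x * g x ∂μ := by
  have h := @L2.inner_def Ω ℝ ℝ _ _ _ _ _ f g
  simpa [RCLike.inner_apply, conj_trivial, mul_comm] using h

lemma normL2 (f : Lp ℝ 2 μ) : ‖f‖ ^ 2 = ∫ x, (f x) ^ 2 ∂μ := by
  rw [← real_inner_self_eq_norm_sq, innL2 f f]
  congr 1; ext x; ring

lemma intsq (f : Lp ℝ 2 μ) : Integrable (fun x => (f x) ^ 2) μ := by
  simpa using (Lp.memLp f).integrable_sq

lemma PQsum (f : Lp ℝ 2 μ) :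
    (∫ x, (Lp.posPart f) x ^ 2 ∂μ) + (∫ x, (Lp.negPart f) x ^ 2 ∂μ) = ‖f‖ ^ 2 := by
  rw [← integral_add (intsq _) (intsq _), normL2]
  refine integral_congr_ae ?_
  filter_upwards [Lp.coeFn_posPart f, Lp.coeFn_negPart f] with x hp hq
  rw [hp, hq]
  rcases le_total (f x) 0 with h | h
  · rw [max_eq_right h, min_eq_left h]; ring
  · rw [max_eq_left h, min_eq_right h]; ring

end Aux

lemma normsq_add' {F : Type*} [NormedAddCommGroup F] [InnerProductSpace ℝ F]
    (f g : F) (h : ⟪f, g⟫ = 0) : ‖f + g‖ ^ 2 = ‖f‖ ^ 2 + ‖g‖ ^ 2 := by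
  rw [← real_inner_self_eq_norm_sq, ← real_inner_self_eq_norm_sq, ← real_inner_self_eq_norm_sq,
    real_inner_add_add_self, h]; ring
theorem n_m_continuous_monotone
    {Ω : Type*} [MeasurableSpace Ω] (μ : Measure Ω)
    {H : Type*} [NormedAddCommGroup H] [InnerProductSpace ℝ H] [CompleteSpace H]
    (ι : H →ₗ[ℝ] Lp ℝ 2 μ) (hι : Function.Injective ι)
    (C : ℝ) (hC : 0 < C) (hιC : ∀ u : H, ‖ι u‖ ≤ C * ‖u‖)
    (I : H → ℝ → ℝ → ℝ)
    (hI : ∀ u a b, I u a b = ‖u‖ ^ 2 / 2 -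
      (∫ x, (b * (Lp.posPart (ι u)) x ^ 2 + a * (Lp.negPart (ι u)) x ^ 2) ∂μ) / 2)
    (lam₀ lam₁ lam₂ : ℝ) (hlam₀ : 0 < lam₀) (hlam₀₁ : lam₀ < lam₁) (hlam₁₂ : lam₁ < lam₂)
    (N E M : Submodule ℝ H)
    (hNcl : IsClosed (N : Set H)) (hEcl : IsClosed (E : Set H)) (hMcl : IsClosed (M : Set H))
    (hNfd : FiniteDimensional ℝ N) (hEfd : FiniteDimensional ℝ E) (hEne : E ≠ ⊥)
    (horthNE : ∀ v ∈ N, ∀ y ∈ E, ⟪v, y⟫ = 0)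
    (horthNM : ∀ v ∈ N, ∀ w ∈ M, ⟪v, w⟫ = 0)
    (horthEM : ∀ y ∈ E, ∀ w ∈ M, ⟪y, w⟫ = 0)
    (horthNE2 : ∀ v ∈ N, ∀ y ∈ E, ∫ x, (ι v) x * (ι y) x ∂μ = 0)
    (horthNM2 : ∀ v ∈ N, ∀ w ∈ M, ∫ x, (ι v) x * (ι w) x ∂μ = 0)
    (horthEM2 : ∀ y ∈ E, ∀ w ∈ M, ∫ x, (ι y) x * (ι w) x ∂μ = 0)
    (hdirect : N ⊔ E ⊔ M = ⊤)
    (hNspec : ∀ v ∈ N, ‖v‖ ^ 2 ≤ lam₀ * ‖ι v‖ ^ 2)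
    (hEspec : ∀ y ∈ E, ∀ u : H, ⟪y, u⟫ = lam₁ * ∫ x, (ι y) x * (ι u) x ∂μ)
    (hMspec : ∀ w ∈ M, lam₂ * ‖ι w‖ ^ 2 ≤ ‖w‖ ^ 2)
    (hcompact : ∀ s : Set H, Bornology.IsBounded s →
      IsCompact (closure ((fun u => ι u) '' s)))
    (n m : ℝ → ℝ → ℝ)
    (hn : ∀ a b, n a b = sInf {t : ℝ | ∃ w ∈ E ⊔ M, ‖w‖ = 1 ∧
      t = sSup {r : ℝ | ∃ v ∈ N, r = I (v + w) a b}})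
    (hm : ∀ a b, m a b = sSup {t : ℝ | ∃ v ∈ N ⊔ E, ‖v‖ = 1 ∧
      t = sInf {r : ℝ | ∃ w ∈ M, r = I (v + w) a b}})
    :
    ContinuousOn (fun q : ℝ × ℝ => n q.1 q.2) (Set.Ioo lam₀ lam₂ ×ˢ Set.Ioo lam₀ lam₂) ∧
    ContinuousOn (fun q : ℝ × ℝ => m q.1 q.2) (Set.Ioo lam₀ lam₂ ×ˢ Set.Ioo lam₀ lam₂) ∧
    (∀ a a' b, a ∈ Set.Ioo lam₀ lam₂ → a' ∈ Set.Ioo lam₀ lam₂ → b ∈ Set.Ioo lam₀ lam₂ →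
      a ≤ a' → n a' b ≤ n a b ∧ m a' b ≤ m a b) ∧
    (∀ a b b', a ∈ Set.Ioo lam₀ lam₂ → b ∈ Set.Ioo lam₀ lam₂ → b' ∈ Set.Ioo lam₀ lam₂ →
      b ≤ b' → n a b' ≤ n a b ∧ m a b' ≤ m a b) ∧
    n lam₁ lam₁ = 0 ∧ m lam₁ lam₁ = 0 := by
  classical
  have hC2 : (0:ℝ) ≤ C ^ 2 := sq_nonneg C
  -- local positive/negative part integrals
  let P : H → ℝ := fun u => ∫ x, (Lp.posPart (ι u)) x ^ 2 ∂μ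
  let Q : H → ℝ := fun u => ∫ x, (Lp.negPart (ι u)) x ^ 2 ∂μ
  have hP0 : ∀ u, 0 ≤ P u := fun u => integral_nonneg fun x => sq_nonneg _
  have hQ0 : ∀ u, 0 ≤ Q u := fun u => integral_nonneg fun x => sq_nonneg _
  have hPQ : ∀ u, P u + Q u = ‖ι u‖ ^ 2 := fun u => PQsum _
  have hIf : ∀ u a b, I u a b = ‖u‖ ^ 2 / 2 - (b * P u + a * Q u) / 2 := by
    intro u a b
    rw [hI]
    have : (∫ x, (b * (Lp.posPart (ι u)) x ^ 2 + a * (Lp.negPart (ι u)) x ^ 2) ∂μ)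
        = b * P u + a * Q u := by
      rw [integral_add ((intsq _).const_mul b) ((intsq _).const_mul a),
        integral_const_mul, integral_const_mul]
    rw [this]
  have hιsq : ∀ u : H, ‖ι u‖ ^ 2 ≤ C ^ 2 * ‖u‖ ^ 2 := by
    intro u
    have h := hιC u
    nlinarith [norm_nonneg (ι u), norm_nonneg u]
  -- orthogonality
  have oNEM : ∀ v ∈ N, ∀ w ∈ E ⊔ M, ⟪v, w⟫ = 0 ∧ ⟪ι v, ι w⟫ = 0 := by
    intro v hv w hw
    obtain ⟨y, hy, m', hm', rfl⟩ := Submodule.mem_sup.1 hw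
    constructor
    · rw [inner_add_right, horthNE v hv y hy, horthNM v hv m' hm', add_zero]
    · rw [map_add, inner_add_right, innL2, innL2, horthNE2 v hv y hy,
        horthNM2 v hv m' hm', add_zero]
  have oNEM2 : ∀ v ∈ N ⊔ E, ∀ w ∈ M, ⟪v, w⟫ = 0 ∧ ⟪ι v, ι w⟫ = 0 := by
    intro v hv w hw
    obtain ⟨nn, hnn, y, hy, rfl⟩ := Submodule.mem_sup.1 hv
    constructor
    · rw [inner_add_left, horthNM nn hnn w hw, horthEM y hy w hw, add_zero]
    · rw [map_add, inner_add_left, innL2, innL2, horthNM2 nn hnn w hw,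
        horthEM2 y hy w hw, add_zero]
  have dec1 : ∀ v ∈ N, ∀ w ∈ E ⊔ M,
      ‖v + w‖ ^ 2 = ‖v‖ ^ 2 + ‖w‖ ^ 2 ∧ ‖ι (v + w)‖ ^ 2 = ‖ι v‖ ^ 2 + ‖ι w‖ ^ 2 := by
    intro v hv w hw
    obtain ⟨h1, h2⟩ := oNEM v hv w hw
    refine ⟨normsq_add' v w h1, ?_⟩
    rw [map_add]
    exact normsq_add' _ _ h2
  have dec2 : ∀ v ∈ N ⊔ E, ∀ w ∈ M,
      ‖v + w‖ ^ 2 = ‖v‖ ^ 2 + ‖w‖ ^ 2 ∧ ‖ι (v + w)‖ ^ 2 = ‖ι v‖ ^ 2 + ‖ι w‖ ^ 2 := by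
    intro v hv w hw
    obtain ⟨h1, h2⟩ := oNEM2 v hv w hw
    refine ⟨normsq_add' v w h1, ?_⟩
    rw [map_add]
    exact normsq_add' _ _ h2
  have hlam₂ : (0:ℝ) < lam₂ := hlam₀.trans (hlam₀₁.trans hlam₁₂)
  have keyUB : ∀ a b, lam₀ < a → lam₀ < b → ∀ w ∈ E ⊔ M, ‖w‖ = 1 → ∀ v ∈ N,
      (min a b - lam₀) * ‖v‖ ^ 2 ≤ lam₀ * (1 - 2 * I (v + w) a b) := by
    intro a b ha hb w hw hw1 v hv
    obtain ⟨h1, h2⟩ := dec1 v hv w hw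
    have h3 := hNspec v hv
    have hc : lam₀ < min a b := lt_min ha hb
    have hs1 : min a b * (P (v + w) + Q (v + w)) ≤ b * P (v + w) + a * Q (v + w) := by
      nlinarith [hP0 (v + w), hQ0 (v + w), min_le_left a b, min_le_right a b]
    have h4 : (0:ℝ) ≤ ‖ι w‖ ^ 2 := sq_nonneg _
    have hPQ' := hPQ (v + w)
    rw [h2] at hPQ'
    rw [hPQ'] at hs1
    rw [hIf, h1, hw1]
    nlinarith [mul_le_mul_of_nonneg_left hs1 hlam₀.le,
      mul_nonneg (mul_nonneg hlam₀.le (hlam₀.trans hc).le) h4,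
      mul_nonneg (hlam₀.trans hc).le (sub_nonneg.2 h3)]
  have ILB : ∀ a b, 0 < a → a < lam₂ → 0 < b → b < lam₂ → ∀ u : H,
      ‖u‖ ^ 2 / 2 - lam₂ * C ^ 2 * ‖u‖ ^ 2 / 2 ≤ I u a b := by
    intro a b ha ha2 hb hb2 u
    rw [hIf]
    nlinarith [mul_nonneg (sub_nonneg.2 ha2.le) (hQ0 u),
      mul_nonneg (sub_nonneg.2 hb2.le) (hP0 u),
      mul_le_mul_of_nonneg_left (hιsq u) hlam₂.le, hPQ u]
  have IUB : ∀ a b, 0 ≤ a → 0 ≤ b → ∀ u : H, I u a b ≤ ‖u‖ ^ 2 / 2 := by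
    intro a b ha hb u
    rw [hIf]
    nlinarith [mul_nonneg ha (hQ0 u), mul_nonneg hb (hP0 u)]
  have keyLB2 : ∀ a b, 0 < a → a < lam₂ → 0 < b → b < lam₂ → ∀ v ∈ N ⊔ E, ‖v‖ = 1 → ∀ w ∈ M,
      (lam₂ - max a b) * ‖w‖ ^ 2 ≤ lam₂ * (2 * I (v + w) a b - 1 + lam₂ * C ^ 2) := by
    intro a b ha ha2 hb hb2 v hv hv1 w hw
    obtain ⟨h1, h2⟩ := dec2 v hv w hw
    have h3 := hMspec w hw
    have hd : max a b < lam₂ := max_lt ha2 hb2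
    have hd0 : 0 < max a b := lt_max_of_lt_left ha
    have hs1 : b * P (v + w) + a * Q (v + w) ≤ max a b * (P (v + w) + Q (v + w)) := by
      nlinarith [hP0 (v + w), hQ0 (v + w), le_max_left a b, le_max_right a b]
    have hιv : ‖ι v‖ ^ 2 ≤ C ^ 2 := by
      have := hιsq v
      rw [hv1] at this
      simpa using this
    have hPQ' := hPQ (v + w)
    rw [h2] at hPQ'
    rw [hPQ'] at hs1
    rw [hIf, h1, hv1]
    linarith [mul_le_mul_of_nonneg_left hs1 hlam₂.le,
      mul_le_mul_of_nonneg_left h3 hd0.le,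
      mul_le_mul_of_nonneg_left hιv (mul_nonneg hlam₂.le hd0.le),
      mul_nonneg hlam₂.le (mul_nonneg (sub_nonneg.2 hd.le) hC2)]
  have Idiff : ∀ u a b a' b', I u a b - I u a' b' ≤
      ((|a - a'| + |b - b'|) / 2) * (C ^ 2 * ‖u‖ ^ 2) := by
    intro u a b a' b'
    rw [hIf, hIf]
    have h1 : (b' - b) * P u ≤ |b - b'| * P u :=
      mul_le_mul_of_nonneg_right (by rw [abs_sub_comm]; exact le_abs_self _) (hP0 u)
    have h2 : (a' - a) * Q u ≤ |a - a'| * Q u :=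
      mul_le_mul_of_nonneg_right (by rw [abs_sub_comm]; exact le_abs_self _) (hQ0 u)
    have h3 : (|a - a'| + |b - b'|) * (P u + Q u) ≤ (|a - a'| + |b - b'|) * (C ^ 2 * ‖u‖ ^ 2) := by
      rw [hPQ u]
      exact mul_le_mul_of_nonneg_left (hιsq u) (by positivity)
    have h4 := mul_nonneg (abs_nonneg (b - b')) (hQ0 u)
    have h5 := mul_nonneg (abs_nonneg (a - a')) (hP0 u)
    have h6 := hPQ u
    linarith [h1, h2, h3, h4, h5, h6]
  have Imono : ∀ u a b a' b', a ≤ a' → b ≤ b' → I u a' b' ≤ I u a b := by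
    intro u a b a' b' ha hb
    rw [hIf, hIf]
    nlinarith [mul_le_mul_of_nonneg_right ha (hQ0 u), mul_le_mul_of_nonneg_right hb (hP0 u)]
  -- unit vector in E
  obtain ⟨y₀, hy₀E, hy₀ne⟩ := Submodule.exists_mem_ne_zero_of_ne_bot hEne
  set y₁ : H := ‖y₀‖⁻¹ • y₀ with hy₁def
  have hy₁E : y₁ ∈ E := E.smul_mem _ hy₀E
  have hy₁ : ‖y₁‖ = 1 := by
    rw [hy₁def, norm_smul, norm_inv, norm_norm,
      inv_mul_cancel₀ (norm_ne_zero_iff.2 hy₀ne)]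
  -- inner set facts (n side)
  have hIub2 : ∀ a b, lam₀ < a → lam₀ < b → ∀ w ∈ E ⊔ M, ‖w‖ = 1 → ∀ v ∈ N,
      I (v + w) a b ≤ 1 / 2 := by
    intro a b ha hb w hw hw1 v hv
    have h := keyUB a b ha hb w hw hw1 v hv
    have hc : lam₀ < min a b := lt_min ha hb
    nlinarith [mul_nonneg (sub_pos.2 hc).le (sq_nonneg ‖v‖), hlam₀]
  have hSvNe : ∀ (w : H) a b, ({r : ℝ | ∃ v ∈ N, r = I (v + w) a b}).Nonempty :=
    fun w a b => ⟨I (0 + w) a b, 0, Submodule.zero_mem N, rfl⟩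
  have hSvBddAbove : ∀ a b, lam₀ < a → lam₀ < b → ∀ w ∈ E ⊔ M, ‖w‖ = 1 →
      BddAbove {r : ℝ | ∃ v ∈ N, r = I (v + w) a b} := by
    intro a b ha hb w hw hw1
    refine ⟨1 / 2, ?_⟩
    rintro r ⟨v, hv, rfl⟩
    exact hIub2 a b ha hb w hw hw1 v hv
  have hgub : ∀ a b, lam₀ < a → lam₀ < b → ∀ w ∈ E ⊔ M, ‖w‖ = 1 →
      sSup {r : ℝ | ∃ v ∈ N, r = I (v + w) a b} ≤ 1 / 2 := by
    intro a b ha hb w hw hw1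
    refine csSup_le (hSvNe w a b) ?_
    rintro r ⟨v, hv, rfl⟩
    exact hIub2 a b ha hb w hw hw1 v hv
  have hglb : ∀ a b, a ∈ Set.Ioo lam₀ lam₂ → b ∈ Set.Ioo lam₀ lam₂ → ∀ w ∈ E ⊔ M, ‖w‖ = 1 →
      1 / 2 - lam₂ * C ^ 2 / 2 ≤ sSup {r : ℝ | ∃ v ∈ N, r = I (v + w) a b} := by
    intro a b ha hb w hw hw1
    have h0 : I (0 + w) a b ∈ {r : ℝ | ∃ v ∈ N, r = I (v + w) a b} :=
      ⟨0, Submodule.zero_mem N, rfl⟩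
    refine le_trans ?_ (le_csSup (hSvBddAbove a b ha.1 hb.1 w hw hw1) h0)
    have h := ILB a b (hlam₀.trans ha.1) ha.2 (hlam₀.trans hb.1) hb.2 (0 + w)
    rw [zero_add, hw1] at h
    rw [zero_add]
    nlinarith [h]
  have hSnNe : ∀ a b, ({t : ℝ | ∃ w ∈ E ⊔ M, ‖w‖ = 1 ∧
      t = sSup {r : ℝ | ∃ v ∈ N, r = I (v + w) a b}}).Nonempty :=
    fun a b => ⟨_, y₁, Submodule.mem_sup_left hy₁E, hy₁, rfl⟩
  have hSnBdd : ∀ a b, a ∈ Set.Ioo lam₀ lam₂ → b ∈ Set.Ioo lam₀ lam₂ →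
      BddBelow {t : ℝ | ∃ w ∈ E ⊔ M, ‖w‖ = 1 ∧
        t = sSup {r : ℝ | ∃ v ∈ N, r = I (v + w) a b}} := by
    intro a b ha hb
    refine ⟨1 / 2 - lam₂ * C ^ 2 / 2, ?_⟩
    rintro t ⟨w, hw, hw1, rfl⟩
    exact hglb a b ha hb w hw hw1
  -- inner set facts (m side)
  have hIlb2 : ∀ a b, 0 < a → a < lam₂ → 0 < b → b < lam₂ → ∀ v ∈ N ⊔ E, ‖v‖ = 1 → ∀ w ∈ M,
      1 / 2 - lam₂ * C ^ 2 / 2 ≤ I (v + w) a b := by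
    intro a b ha ha2 hb hb2 v hv hv1 w hw
    have h := keyLB2 a b ha ha2 hb hb2 v hv hv1 w hw
    have hd : max a b < lam₂ := max_lt ha2 hb2
    nlinarith [mul_nonneg (sub_pos.2 hd).le (sq_nonneg ‖w‖), hlam₂]
  have hSwNe : ∀ (v : H) a b, ({r : ℝ | ∃ w ∈ M, r = I (v + w) a b}).Nonempty :=
    fun v a b => ⟨I (v + 0) a b, 0, Submodule.zero_mem M, rfl⟩
  have hSwBddBelow : ∀ a b, 0 < a → a < lam₂ → 0 < b → b < lam₂ → ∀ v ∈ N ⊔ E, ‖v‖ = 1 →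
      BddBelow {r : ℝ | ∃ w ∈ M, r = I (v + w) a b} := by
    intro a b ha ha2 hb hb2 v hv hv1
    refine ⟨1 / 2 - lam₂ * C ^ 2 / 2, ?_⟩
    rintro r ⟨w, hw, rfl⟩
    exact hIlb2 a b ha ha2 hb hb2 v hv hv1 w hw
  have hhlb : ∀ a b, 0 < a → a < lam₂ → 0 < b → b < lam₂ → ∀ v ∈ N ⊔ E, ‖v‖ = 1 →
      1 / 2 - lam₂ * C ^ 2 / 2 ≤ sInf {r : ℝ | ∃ w ∈ M, r = I (v + w) a b} := by
    intro a b ha ha2 hb hb2 v hv hv1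
    refine le_csInf (hSwNe v a b) ?_
    rintro r ⟨w, hw, rfl⟩
    exact hIlb2 a b ha ha2 hb hb2 v hv hv1 w hw
  have hhub : ∀ a b, 0 < a → a < lam₂ → 0 < b → b < lam₂ → ∀ v ∈ N ⊔ E, ‖v‖ = 1 →
      sInf {r : ℝ | ∃ w ∈ M, r = I (v + w) a b} ≤ 1 / 2 := by
    intro a b ha ha2 hb hb2 v hv hv1
    have h0 : I (v + 0) a b ∈ {r : ℝ | ∃ w ∈ M, r = I (v + w) a b} :=
      ⟨0, Submodule.zero_mem M, rfl⟩
    refine le_trans (csInf_le (hSwBddBelow a b ha ha2 hb hb2 v hv hv1) h0) ?_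
    have h := IUB a b ha.le hb.le (v + 0)
    rw [add_zero, hv1] at h
    rw [add_zero]
    nlinarith [h]
  have hSmNe : ∀ a b, ({t : ℝ | ∃ v ∈ N ⊔ E, ‖v‖ = 1 ∧
      t = sInf {r : ℝ | ∃ w ∈ M, r = I (v + w) a b}}).Nonempty :=
    fun a b => ⟨_, y₁, Submodule.mem_sup_right hy₁E, hy₁, rfl⟩
  have hSmBdd : ∀ a b, 0 < a → a < lam₂ → 0 < b → b < lam₂ →
      BddAbove {t : ℝ | ∃ v ∈ N ⊔ E, ‖v‖ = 1 ∧
        t = sInf {r : ℝ | ∃ w ∈ M, r = I (v + w) a b}} := by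
    intro a b ha ha2 hb hb2
    refine ⟨1 / 2, ?_⟩
    rintro t ⟨v, hv, hv1, rfl⟩
    exact hhub a b ha ha2 hb hb2 v hv hv1
  -- monotonicity
  have hnmono : ∀ a b a' b', a ∈ Set.Ioo lam₀ lam₂ → b ∈ Set.Ioo lam₀ lam₂ →
      a' ∈ Set.Ioo lam₀ lam₂ → b' ∈ Set.Ioo lam₀ lam₂ → a ≤ a' → b ≤ b' →
      n a' b' ≤ n a b := by
    intro a b a' b' ha hb ha' hb' haa hbb
    rw [hn, hn]
    refine le_csInf (hSnNe a b) ?_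
    rintro t ⟨w, hw, hw1, rfl⟩
    refine le_trans (csInf_le (hSnBdd a' b' ha' hb') ⟨w, hw, hw1, rfl⟩) ?_
    refine csSup_le (hSvNe w a' b') ?_
    rintro r ⟨v, hv, rfl⟩
    exact le_trans (Imono _ a b a' b' haa hbb)
      (le_csSup (hSvBddAbove a b ha.1 hb.1 w hw hw1) ⟨v, hv, rfl⟩)
  have hmmono : ∀ a b a' b', a ∈ Set.Ioo lam₀ lam₂ → b ∈ Set.Ioo lam₀ lam₂ →
      a' ∈ Set.Ioo lam₀ lam₂ → b' ∈ Set.Ioo lam₀ lam₂ → a ≤ a' → b ≤ b' →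
      m a' b' ≤ m a b := by
    intro a b a' b' ha hb ha' hb' haa hbb
    rw [hm, hm]
    refine csSup_le (hSmNe a' b') ?_
    rintro t ⟨v, hv, hv1, rfl⟩
    have step1 : sInf {r : ℝ | ∃ w ∈ M, r = I (v + w) a' b'} ≤
        sInf {r : ℝ | ∃ w ∈ M, r = I (v + w) a b} := by
      refine le_csInf (hSwNe v a b) ?_
      rintro r ⟨w, hw, rfl⟩
      exact le_trans (csInf_le (hSwBddBelow a' b' (hlam₀.trans ha'.1) ha'.2
        (hlam₀.trans hb'.1) hb'.2 v hv hv1) ⟨w, hw, rfl⟩) (Imono _ a b a' b' haa hbb)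
    exact le_trans step1 (le_csSup (hSmBdd a b (hlam₀.trans ha.1) ha.2
      (hlam₀.trans hb.1) hb.2) ⟨v, hv, hv1, rfl⟩)
  -- key quantitative estimates
  have estn : ∀ a b a' b', a ∈ Set.Ioo lam₀ lam₂ → b ∈ Set.Ioo lam₀ lam₂ →
      a' ∈ Set.Ioo lam₀ lam₂ → b' ∈ Set.Ioo lam₀ lam₂ →
      n a b ≤ n a' b' + (|a - a'| + |b - b'|) *
        ((C ^ 2 / 2) * (1 + lam₀ * (lam₂ * C ^ 2 + 2) / (min a b - lam₀))) := by
    intro a b a' b' ha hb ha' hb'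
    have hc : lam₀ < min a b := lt_min ha.1 hb.1
    rw [hn a b, hn a' b', ← sub_le_iff_le_add]
    refine le_csInf (hSnNe a' b') ?_
    rintro t ⟨w, hw, hw1, rfl⟩
    rw [sub_le_iff_le_add]
    refine le_trans (csInf_le (hSnBdd a b ha hb) ⟨w, hw, hw1, rfl⟩) ?_
    refine le_of_forall_pos_le_add ?_
    intro η hη
    set η' := min η 1 with hη'
    have hη'0 : 0 < η' := lt_min hη one_pos
    have hη'1 : η' ≤ 1 := min_le_right _ _
    have hηη : η' ≤ η := min_le_left _ _
    have hlt : sSup {r : ℝ | ∃ v ∈ N, r = I (v + w) a b} - η' <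
        sSup {r : ℝ | ∃ v ∈ N, r = I (v + w) a b} := by linarith
    obtain ⟨r, hrmem, hr⟩ := exists_lt_of_lt_csSup (hSvNe w a b) hlt
    obtain ⟨v, hv, rfl⟩ := hrmem
    have hub := keyUB a b ha.1 hb.1 w hw hw1 v hv
    have hlbI : 1 / 2 - lam₂ * C ^ 2 / 2 - 1 ≤ I (v + w) a b := by
      have hg := hglb a b ha hb w hw hw1
      linarith
    have h2 : 1 - 2 * I (v + w) a b ≤ lam₂ * C ^ 2 + 2 := by linarith
    have hvsq : (min a b - lam₀) * ‖v‖ ^ 2 ≤ lam₀ * (lam₂ * C ^ 2 + 2) :=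
      le_trans hub (mul_le_mul_of_nonneg_left h2 hlam₀.le)
    have hvsq' : ‖v‖ ^ 2 ≤ lam₀ * (lam₂ * C ^ 2 + 2) / (min a b - lam₀) := by
      rw [le_div_iff₀ (by linarith : (0:ℝ) < min a b - lam₀)]
      nlinarith [hvsq]
    have h3 : I (v + w) a b ≤ I (v + w) a' b' + ((|a - a'| + |b - b'|) / 2) * (C ^ 2 * ‖v + w‖ ^ 2) := by
      have := Idiff (v + w) a b a' b'
      linarith
    have h4 : ‖v + w‖ ^ 2 = ‖v‖ ^ 2 + 1 := by
      obtain ⟨hh, _⟩ := dec1 v hv w hw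
      rw [hh, hw1]; ring
    rw [h4] at h3
    have h5 : I (v + w) a' b' ≤ sSup {r : ℝ | ∃ v ∈ N, r = I (v + w) a' b'} :=
      le_csSup (hSvBddAbove a' b' ha'.1 hb'.1 w hw hw1) ⟨v, hv, rfl⟩
    have hδ0 : (0:ℝ) ≤ (|a - a'| + |b - b'|) := by positivity
    have h6 : ((|a - a'| + |b - b'|) / 2) * (C ^ 2 * (‖v‖ ^ 2 + 1)) ≤ (|a - a'| + |b - b'|) * (C ^ 2 / 2) * (1 + lam₀ * (lam₂ * C ^ 2 + 2) / (min a b - lam₀)) := by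
      have hin : C ^ 2 * (‖v‖ ^ 2 + 1) ≤
          C ^ 2 * (1 + lam₀ * (lam₂ * C ^ 2 + 2) / (min a b - lam₀)) :=
        mul_le_mul_of_nonneg_left (by linarith) hC2
      calc ((|a - a'| + |b - b'|) / 2) * (C ^ 2 * (‖v‖ ^ 2 + 1))
          ≤ ((|a - a'| + |b - b'|) / 2) * (C ^ 2 * (1 + lam₀ * (lam₂ * C ^ 2 + 2) / (min a b - lam₀))) :=
            mul_le_mul_of_nonneg_left hin (by positivity)
        _ = (|a - a'| + |b - b'|) * (C ^ 2 / 2) * (1 + lam₀ * (lam₂ * C ^ 2 + 2) / (min a b - lam₀)) := by ring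
    have e1 : I (v + w) a b ≤ sSup {r : ℝ | ∃ v ∈ N, r = I (v + w) a' b'} + (|a - a'| + |b - b'|) * (C ^ 2 / 2) * (1 + lam₀ * (lam₂ * C ^ 2 + 2) / (min a b - lam₀)) := by
      linarith [h3, h5, h6]
    have e2 : sSup {r : ℝ | ∃ v ∈ N, r = I (v + w) a b} < I (v + w) a b + η := by
      linarith [hr, hηη]
    linarith [e1, e2]
  have estm : ∀ a b a' b', a ∈ Set.Ioo lam₀ lam₂ → b ∈ Set.Ioo lam₀ lam₂ →
      a' ∈ Set.Ioo lam₀ lam₂ → b' ∈ Set.Ioo lam₀ lam₂ →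
      m a' b' ≤ m a b + (|a - a'| + |b - b'|) *
        ((C ^ 2 / 2) * (1 + lam₂ * (lam₂ * C ^ 2 + 2) / (lam₂ - max a b))) := by
    intro a b a' b' ha hb ha' hb'
    have hd : max a b < lam₂ := max_lt ha.2 hb.2
    rw [hm a b, hm a' b']
    refine csSup_le (hSmNe a' b') ?_
    rintro t ⟨v, hv, hv1, rfl⟩
    refine le_of_forall_pos_le_add ?_
    intro η hη
    set η' := min η 1 with hη'
    have hη'0 : 0 < η' := lt_min hη one_pos
    have hη'1 : η' ≤ 1 := min_le_right _ _
    have hηη : η' ≤ η := min_le_left _ _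
    have hlt : sInf {r : ℝ | ∃ w ∈ M, r = I (v + w) a b} <
        sInf {r : ℝ | ∃ w ∈ M, r = I (v + w) a b} + η' := by linarith
    obtain ⟨r, hrmem, hr⟩ := exists_lt_of_csInf_lt (hSwNe v a b) hlt
    obtain ⟨w, hw, rfl⟩ := hrmem
    have hlb := keyLB2 a b (hlam₀.trans ha.1) ha.2 (hlam₀.trans hb.1) hb.2 v hv hv1 w hw
    have hubI : I (v + w) a b ≤ 1 / 2 + 1 := by
      have hg := hhub a b (hlam₀.trans ha.1) ha.2 (hlam₀.trans hb.1) hb.2 v hv hv1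
      linarith
    have h2 : 2 * I (v + w) a b - 1 + lam₂ * C ^ 2 ≤ lam₂ * C ^ 2 + 2 := by linarith
    have hwsq : (lam₂ - max a b) * ‖w‖ ^ 2 ≤ lam₂ * (lam₂ * C ^ 2 + 2) :=
      le_trans hlb (mul_le_mul_of_nonneg_left h2 hlam₂.le)
    have hwsq' : ‖w‖ ^ 2 ≤ lam₂ * (lam₂ * C ^ 2 + 2) / (lam₂ - max a b) := by
      rw [le_div_iff₀ (by linarith : (0:ℝ) < lam₂ - max a b)]
      nlinarith [hwsq]
    have h3 : I (v + w) a' b' ≤ I (v + w) a b + ((|a - a'| + |b - b'|) / 2) * (C ^ 2 * ‖v + w‖ ^ 2) := by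
      have := Idiff (v + w) a' b' a b
      rw [abs_sub_comm a' a, abs_sub_comm b' b] at this
      linarith
    have h4 : ‖v + w‖ ^ 2 = 1 + ‖w‖ ^ 2 := by
      obtain ⟨hh, _⟩ := dec2 v hv w hw
      rw [hh, hv1]; ring
    rw [h4] at h3
    have h5 : sInf {r : ℝ | ∃ w ∈ M, r = I (v + w) a' b'} ≤ I (v + w) a' b' :=
      csInf_le (hSwBddBelow a' b' (hlam₀.trans ha'.1) ha'.2
        (hlam₀.trans hb'.1) hb'.2 v hv hv1) ⟨w, hw, rfl⟩
    have h7 : sInf {r : ℝ | ∃ w ∈ M, r = I (v + w) a b} ≤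
        sSup {t : ℝ | ∃ v ∈ N ⊔ E, ‖v‖ = 1 ∧
          t = sInf {r : ℝ | ∃ w ∈ M, r = I (v + w) a b}} :=
      le_csSup (hSmBdd a b (hlam₀.trans ha.1) ha.2
        (hlam₀.trans hb.1) hb.2) ⟨v, hv, hv1, rfl⟩
    have hδ0 : (0:ℝ) ≤ (|a - a'| + |b - b'|) := by positivity
    have h6 : ((|a - a'| + |b - b'|) / 2) * (C ^ 2 * (1 + ‖w‖ ^ 2)) ≤ (|a - a'| + |b - b'|) * (C ^ 2 / 2) * (1 + lam₂ * (lam₂ * C ^ 2 + 2) / (lam₂ - max a b)) := by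
      have hin : C ^ 2 * (1 + ‖w‖ ^ 2) ≤
          C ^ 2 * (1 + lam₂ * (lam₂ * C ^ 2 + 2) / (lam₂ - max a b)) :=
        mul_le_mul_of_nonneg_left (by linarith) hC2
      calc ((|a - a'| + |b - b'|) / 2) * (C ^ 2 * (1 + ‖w‖ ^ 2))
          ≤ ((|a - a'| + |b - b'|) / 2) * (C ^ 2 * (1 + lam₂ * (lam₂ * C ^ 2 + 2) / (lam₂ - max a b))) :=
            mul_le_mul_of_nonneg_left hin (by positivity)
        _ = (|a - a'| + |b - b'|) * (C ^ 2 / 2) * (1 + lam₂ * (lam₂ * C ^ 2 + 2) / (lam₂ - max a b)) := by ring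
    have e1 : sInf {r : ℝ | ∃ w ∈ M, r = I (v + w) a' b'} ≤ I (v + w) a b + (|a - a'| + |b - b'|) * (C ^ 2 / 2) * (1 + lam₂ * (lam₂ * C ^ 2 + 2) / (lam₂ - max a b)) := by
      linarith [h3, h5, h6]
    have e2 : I (v + w) a b < sSup {t : ℝ | ∃ v ∈ N ⊔ E, ‖v‖ = 1 ∧
        t = sInf {r : ℝ | ∃ w ∈ M, r = I (v + w) a b}} + η := by
      linarith [hr, h7, hηη]
    linarith [e1, e2]
  -- continuity of n
  have hncont : ContinuousOn (fun q : ℝ × ℝ => n q.1 q.2)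
      (Set.Ioo lam₀ lam₂ ×ˢ Set.Ioo lam₀ lam₂) := by
    intro q hq
    obtain ⟨ha₀, hb₀⟩ := hq
    rw [Metric.continuousWithinAt_iff]
    intro ε hε
    have hρ0 : 0 < (min q.1 q.2 - lam₀) / 2 := by
      have := lt_min ha₀.1 hb₀.1
      linarith
    set ρ := (min q.1 q.2 - lam₀) / 2 with hρ
    set Kb := (C ^ 2 / 2) * (1 + lam₀ * (lam₂ * C ^ 2 + 2) / ρ) with hKb
    have hKb0 : (0:ℝ) ≤ Kb := by
      rw [hKb]
      have h1 : 0 ≤ lam₀ * (lam₂ * C ^ 2 + 2) / ρ := by positivity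
      positivity
    have hKb1 : (0:ℝ) < Kb + 1 := by linarith
    refine ⟨min ρ (ε / (2 * (Kb + 1))), by positivity, ?_⟩
    intro p hp hdist
    have hd1 : |p.1 - q.1| < min ρ (ε / (2 * (Kb + 1))) := by
      rw [← Real.dist_eq]
      exact lt_of_le_of_lt (by rw [Prod.dist_eq]; exact le_max_left _ _) hdist
    have hd2 : |p.2 - q.2| < min ρ (ε / (2 * (Kb + 1))) := by
      rw [← Real.dist_eq]
      exact lt_of_le_of_lt (by rw [Prod.dist_eq]; exact le_max_right _ _) hdist
    have hd1ρ := lt_of_lt_of_le hd1 (min_le_left _ _)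
    have hd2ρ := lt_of_lt_of_le hd2 (min_le_left _ _)
    have hd1ε := lt_of_lt_of_le hd1 (min_le_right _ _)
    have hd2ε := lt_of_lt_of_le hd2 (min_le_right _ _)
    have habs1 := abs_lt.1 hd1ρ
    have habs2 := abs_lt.1 hd2ρ
    have hminq : min q.1 q.2 = lam₀ + 2 * ρ := by rw [hρ]; ring
    have hρp : ρ ≤ min p.1 p.2 - lam₀ := by
      have h1 := min_le_left q.1 q.2
      have h2 := min_le_right q.1 q.2
      have h3 : lam₀ + ρ ≤ min p.1 p.2 := le_min (by linarith) (by linarith)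
      linarith
    have hρq : ρ ≤ min q.1 q.2 - lam₀ := by linarith
    have hKnp : (C ^ 2 / 2) * (1 + lam₀ * (lam₂ * C ^ 2 + 2) / (min p.1 p.2 - lam₀)) ≤ Kb := by
      rw [hKb]
      have h1 : lam₀ * (lam₂ * C ^ 2 + 2) / (min p.1 p.2 - lam₀) ≤
          lam₀ * (lam₂ * C ^ 2 + 2) / ρ :=
        div_le_div_of_nonneg_left (by positivity) hρ0 hρp
      exact mul_le_mul_of_nonneg_left (by linarith) (by positivity)
    have hKnq : (C ^ 2 / 2) * (1 + lam₀ * (lam₂ * C ^ 2 + 2) / (min q.1 q.2 - lam₀)) ≤ Kb := by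
      rw [hKb]
      have h1 : lam₀ * (lam₂ * C ^ 2 + 2) / (min q.1 q.2 - lam₀) ≤
          lam₀ * (lam₂ * C ^ 2 + 2) / ρ :=
        div_le_div_of_nonneg_left (by positivity) hρ0 hρq
      exact mul_le_mul_of_nonneg_left (by linarith) (by positivity)
    have hδ0 : (0:ℝ) ≤ |p.1 - q.1| + |p.2 - q.2| := by positivity
    have hKey : (|p.1 - q.1| + |p.2 - q.2|) * (Kb + 1) < ε := by
      have h1 : |p.1 - q.1| + |p.2 - q.2| < 2 * (ε / (2 * (Kb + 1))) := by linarith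
      have h2 := mul_lt_mul_of_pos_right h1 hKb1
      have h3 : 2 * (ε / (2 * (Kb + 1))) * (Kb + 1) = ε := by field_simp
      linarith
    have e1 := estn p.1 p.2 q.1 q.2 hp.1 hp.2 ha₀ hb₀
    have e2 := estn q.1 q.2 p.1 p.2 ha₀ hb₀ hp.1 hp.2
    rw [abs_sub_comm q.1 p.1, abs_sub_comm q.2 p.2] at e2
    have f1 : (|p.1 - q.1| + |p.2 - q.2|) *
        ((C ^ 2 / 2) * (1 + lam₀ * (lam₂ * C ^ 2 + 2) / (min p.1 p.2 - lam₀))) ≤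
        (|p.1 - q.1| + |p.2 - q.2|) * (Kb + 1) :=
      mul_le_mul_of_nonneg_left (by linarith) hδ0
    have f2 : (|p.1 - q.1| + |p.2 - q.2|) *
        ((C ^ 2 / 2) * (1 + lam₀ * (lam₂ * C ^ 2 + 2) / (min q.1 q.2 - lam₀))) ≤
        (|p.1 - q.1| + |p.2 - q.2|) * (Kb + 1) :=
      mul_le_mul_of_nonneg_left (by linarith) hδ0
    show dist (n p.1 p.2) (n q.1 q.2) < ε
    rw [Real.dist_eq, abs_sub_lt_iff]
    constructor
    · linarith
    · linarith
  -- continuity of m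
  have hmcont : ContinuousOn (fun q : ℝ × ℝ => m q.1 q.2)
      (Set.Ioo lam₀ lam₂ ×ˢ Set.Ioo lam₀ lam₂) := by
    intro q hq
    obtain ⟨ha₀, hb₀⟩ := hq
    rw [Metric.continuousWithinAt_iff]
    intro ε hε
    have hρ0 : 0 < (lam₂ - max q.1 q.2) / 2 := by
      have := max_lt ha₀.2 hb₀.2
      linarith
    set ρ := (lam₂ - max q.1 q.2) / 2 with hρ
    set Kb := (C ^ 2 / 2) * (1 + lam₂ * (lam₂ * C ^ 2 + 2) / ρ) with hKb
    have hKb0 : (0:ℝ) ≤ Kb := by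
      rw [hKb]
      have h1 : 0 ≤ lam₂ * (lam₂ * C ^ 2 + 2) / ρ := by positivity
      positivity
    have hKb1 : (0:ℝ) < Kb + 1 := by linarith
    refine ⟨min ρ (ε / (2 * (Kb + 1))), by positivity, ?_⟩
    intro p hp hdist
    have hd1 : |p.1 - q.1| < min ρ (ε / (2 * (Kb + 1))) := by
      rw [← Real.dist_eq]
      exact lt_of_le_of_lt (by rw [Prod.dist_eq]; exact le_max_left _ _) hdist
    have hd2 : |p.2 - q.2| < min ρ (ε / (2 * (Kb + 1))) := by
      rw [← Real.dist_eq]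
      exact lt_of_le_of_lt (by rw [Prod.dist_eq]; exact le_max_right _ _) hdist
    have hd1ρ := lt_of_lt_of_le hd1 (min_le_left _ _)
    have hd2ρ := lt_of_lt_of_le hd2 (min_le_left _ _)
    have hd1ε := lt_of_lt_of_le hd1 (min_le_right _ _)
    have hd2ε := lt_of_lt_of_le hd2 (min_le_right _ _)
    have habs1 := abs_lt.1 hd1ρ
    have habs2 := abs_lt.1 hd2ρ
    have hmaxq : max q.1 q.2 = lam₂ - 2 * ρ := by rw [hρ]; ring
    have hρp : ρ ≤ lam₂ - max p.1 p.2 := by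
      have h1 := le_max_left q.1 q.2
      have h2 := le_max_right q.1 q.2
      have h3 : max p.1 p.2 ≤ lam₂ - ρ := max_le (by linarith) (by linarith)
      linarith
    have hρq : ρ ≤ lam₂ - max q.1 q.2 := by linarith
    have hKmp : (C ^ 2 / 2) * (1 + lam₂ * (lam₂ * C ^ 2 + 2) / (lam₂ - max p.1 p.2)) ≤ Kb := by
      rw [hKb]
      have h1 : lam₂ * (lam₂ * C ^ 2 + 2) / (lam₂ - max p.1 p.2) ≤
          lam₂ * (lam₂ * C ^ 2 + 2) / ρ :=
        div_le_div_of_nonneg_left (by positivity) hρ0 hρp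
      exact mul_le_mul_of_nonneg_left (by linarith) (by positivity)
    have hKmq : (C ^ 2 / 2) * (1 + lam₂ * (lam₂ * C ^ 2 + 2) / (lam₂ - max q.1 q.2)) ≤ Kb := by
      rw [hKb]
      have h1 : lam₂ * (lam₂ * C ^ 2 + 2) / (lam₂ - max q.1 q.2) ≤
          lam₂ * (lam₂ * C ^ 2 + 2) / ρ :=
        div_le_div_of_nonneg_left (by positivity) hρ0 hρq
      exact mul_le_mul_of_nonneg_left (by linarith) (by positivity)
    have hδ0 : (0:ℝ) ≤ |p.1 - q.1| + |p.2 - q.2| := by positivity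
    have hKey : (|p.1 - q.1| + |p.2 - q.2|) * (Kb + 1) < ε := by
      have h1 : |p.1 - q.1| + |p.2 - q.2| < 2 * (ε / (2 * (Kb + 1))) := by linarith
      have h2 := mul_lt_mul_of_pos_right h1 hKb1
      have h3 : 2 * (ε / (2 * (Kb + 1))) * (Kb + 1) = ε := by field_simp
      linarith
    have e1 := estm q.1 q.2 p.1 p.2 ha₀ hb₀ hp.1 hp.2
    have e2 := estm p.1 p.2 q.1 q.2 hp.1 hp.2 ha₀ hb₀
    rw [abs_sub_comm q.1 p.1, abs_sub_comm q.2 p.2] at e1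
    have f1 : (|p.1 - q.1| + |p.2 - q.2|) *
        ((C ^ 2 / 2) * (1 + lam₂ * (lam₂ * C ^ 2 + 2) / (lam₂ - max q.1 q.2))) ≤
        (|p.1 - q.1| + |p.2 - q.2|) * (Kb + 1) :=
      mul_le_mul_of_nonneg_left (by linarith) hδ0
    have f2 : (|p.1 - q.1| + |p.2 - q.2|) *
        ((C ^ 2 / 2) * (1 + lam₂ * (lam₂ * C ^ 2 + 2) / (lam₂ - max p.1 p.2))) ≤
        (|p.1 - q.1| + |p.2 - q.2|) * (Kb + 1) :=
      mul_le_mul_of_nonneg_left (by linarith) hδ0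
    show dist (m p.1 p.2) (m q.1 q.2) < ε
    rw [Real.dist_eq, abs_sub_lt_iff]
    constructor
    · linarith
    · linarith
  -- the value at (lam₁, lam₁)
  have hlamIoo : lam₁ ∈ Set.Ioo lam₀ lam₂ := ⟨hlam₀₁, hlam₁₂⟩
  have hI1 : ∀ u : H, I u lam₁ lam₁ = (‖u‖ ^ 2 - lam₁ * ‖ι u‖ ^ 2) / 2 := by
    intro u
    rw [hIf, ← hPQ u]
    ring
  have hEnorm : ∀ y ∈ E, ‖y‖ ^ 2 = lam₁ * ‖ι y‖ ^ 2 := by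
    intro y hy
    have h := hEspec y hy y
    have h2 : ∫ x, (ι y) x * (ι y) x ∂μ = ‖ι y‖ ^ 2 := by
      rw [← innL2, real_inner_self_eq_norm_sq]
    rw [real_inner_self_eq_norm_sq, h2] at h
    exact h
  have hFN : ∀ v ∈ N, ‖v‖ ^ 2 - lam₁ * ‖ι v‖ ^ 2 ≤ 0 := by
    intro v hv
    have h := hNspec v hv
    have h2 := mul_nonneg (sub_nonneg.2 hlam₀₁.le) (sq_nonneg ‖ι v‖)
    nlinarith
  have hFM : ∀ w ∈ M, 0 ≤ ‖w‖ ^ 2 - lam₁ * ‖ι w‖ ^ 2 := by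
    intro w hw
    have h := hMspec w hw
    have h2 := mul_nonneg (sub_nonneg.2 hlam₁₂.le) (sq_nonneg ‖ι w‖)
    nlinarith
  have hFEM : ∀ w ∈ E ⊔ M, 0 ≤ ‖w‖ ^ 2 - lam₁ * ‖ι w‖ ^ 2 := by
    intro w hw
    obtain ⟨y, hy, m', hm', rfl⟩ := Submodule.mem_sup.1 hw
    have d1 : ‖y + m'‖ ^ 2 = ‖y‖ ^ 2 + ‖m'‖ ^ 2 := normsq_add' _ _ (horthEM y hy m' hm')
    have d2 : ‖ι (y + m')‖ ^ 2 = ‖ι y‖ ^ 2 + ‖ι m'‖ ^ 2 := by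
      rw [map_add]
      exact normsq_add' _ _ (by rw [innL2]; exact horthEM2 y hy m' hm')
    have h1 := hEnorm y hy
    have h2 := hFM m' hm'
    rw [d1, d2]
    nlinarith
  have hFNE : ∀ v ∈ N ⊔ E, ‖v‖ ^ 2 - lam₁ * ‖ι v‖ ^ 2 ≤ 0 := by
    intro v hv
    obtain ⟨nn, hnn, y, hy, rfl⟩ := Submodule.mem_sup.1 hv
    have d1 : ‖nn + y‖ ^ 2 = ‖nn‖ ^ 2 + ‖y‖ ^ 2 := normsq_add' _ _ (horthNE nn hnn y hy)
    have d2 : ‖ι (nn + y)‖ ^ 2 = ‖ι nn‖ ^ 2 + ‖ι y‖ ^ 2 := by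
      rw [map_add]
      exact normsq_add' _ _ (by rw [innL2]; exact horthNE2 nn hnn y hy)
    have h1 := hEnorm y hy
    have h2 := hFN nn hnn
    rw [d1, d2]
    nlinarith
  have hn0 : n lam₁ lam₁ = 0 := by
    rw [hn]
    have hub : ∀ r ∈ {r : ℝ | ∃ v ∈ N, r = I (v + y₁) lam₁ lam₁}, r ≤ 0 := by
      rintro r ⟨v, hv, rfl⟩
      rw [hI1]
      have d := dec1 v hv y₁ (Submodule.mem_sup_left hy₁E)
      rw [d.1, d.2]
      have h1 := hFN v hv
      have h2 := hEnorm y₁ hy₁E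
      nlinarith
    have h0 : I (0 + y₁) lam₁ lam₁ = 0 := by
      rw [zero_add, hI1, hEnorm y₁ hy₁E]
      ring
    have hmem0 : (0:ℝ) ∈ {t : ℝ | ∃ w ∈ E ⊔ M, ‖w‖ = 1 ∧
        t = sSup {r : ℝ | ∃ v ∈ N, r = I (v + w) lam₁ lam₁}} := by
      refine ⟨y₁, Submodule.mem_sup_left hy₁E, hy₁, ?_⟩
      refine le_antisymm ?_ (csSup_le (hSvNe y₁ lam₁ lam₁) hub)
      rw [← h0]
      exact le_csSup ⟨0, hub⟩ ⟨0, Submodule.zero_mem N, rfl⟩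
    refine le_antisymm (csInf_le (hSnBdd lam₁ lam₁ hlamIoo hlamIoo) hmem0) ?_
    refine le_csInf (hSnNe lam₁ lam₁) ?_
    rintro t ⟨w, hw, hw1, rfl⟩
    have h0' : 0 ≤ I (0 + w) lam₁ lam₁ := by
      rw [zero_add, hI1]
      have := hFEM w hw
      linarith
    exact le_trans h0' (le_csSup (hSvBddAbove lam₁ lam₁ hlam₀₁ hlam₀₁ w hw hw1)
      ⟨0, Submodule.zero_mem N, rfl⟩)
  have hm0 : m lam₁ lam₁ = 0 := by
    rw [hm]
    have hlamp : (0:ℝ) < lam₁ := hlam₀.trans hlam₀₁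
    have hlb : ∀ r ∈ {r : ℝ | ∃ w ∈ M, r = I (y₁ + w) lam₁ lam₁}, 0 ≤ r := by
      rintro r ⟨w, hw, rfl⟩
      rw [hI1]
      have d := dec2 y₁ (Submodule.mem_sup_right hy₁E) w hw
      rw [d.1, d.2]
      have h1 := hFM w hw
      have h2 := hEnorm y₁ hy₁E
      nlinarith
    have h0 : I (y₁ + 0) lam₁ lam₁ = 0 := by
      rw [add_zero, hI1, hEnorm y₁ hy₁E]
      ring
    have hmem0 : (0:ℝ) ∈ {t : ℝ | ∃ v ∈ N ⊔ E, ‖v‖ = 1 ∧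
        t = sInf {r : ℝ | ∃ w ∈ M, r = I (v + w) lam₁ lam₁}} := by
      refine ⟨y₁, Submodule.mem_sup_right hy₁E, hy₁, ?_⟩
      refine le_antisymm (le_csInf (hSwNe y₁ lam₁ lam₁) hlb) ?_
      rw [← h0]
      exact csInf_le ⟨0, hlb⟩ ⟨0, Submodule.zero_mem M, rfl⟩
    refine le_antisymm ?_ (le_csSup (hSmBdd lam₁ lam₁ hlamp hlam₁₂ hlamp hlam₁₂) hmem0)
    refine csSup_le (hSmNe lam₁ lam₁) ?_
    rintro t ⟨v, hv, hv1, rfl⟩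
    have h0' : I (v + 0) lam₁ lam₁ ≤ 0 := by
      rw [add_zero, hI1]
      have := hFNE v hv
      linarith
    exact le_trans (csInf_le (hSwBddBelow lam₁ lam₁ hlamp hlam₁₂ hlamp hlam₁₂ v hv hv1)
      ⟨0, Submodule.zero_mem M, rfl⟩) h0'
  refine ⟨hncont, hmcont, ?_, ?_, hn0, hm0⟩
  · intro a a' b ha ha' hb haa
    exact ⟨hnmono a b a' b ha hb ha' hb haa le_rfl, hmmono a b a' b ha hb ha' hb haa le_rfl⟩
  · intro a b b' ha hb hb' hbb
    exact ⟨hnmono a b a b' ha hb ha hb' le_rfl hbb, hmmono a b a b' ha hb ha hb' le_rfl hbb⟩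
end

section
/- Let (a, b) ∈ Q_k with ν(a) < b < μ(a). Then there exist u₁, u₂ ∈ ( S_k(a, b) ∩ S^k(a, b) ) \ {0} such that I(u₁, a, b) < 0 < I(u₂, a, b). -/
open MeasureTheory RealInnerProductSpace Filter Topology

namespace SCBC

noncomputable def Pf (a b s : ℝ) : ℝ := b * (max s 0)^2 + a * (max (-s) 0)^2

lemma sq_split (s : ℝ) : (max s 0)^2 + (max (-s) 0)^2 = s^2 := by
  rcases le_total s 0 with h | h
  · rw [max_eq_right h, max_eq_left (by linarith)]; ring
  · rw [max_eq_left h, max_eq_right (by linarith)]; ring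

lemma mother (c c' t s s' : ℝ) (hc : 0 ≤ c) (hc' : 0 ≤ c') (ht0 : 0 ≤ t) (ht1 : t ≤ 1) :
    c * (max (t*s+(1-t)*s') 0)^2 + c' * (max (-(t*s+(1-t)*s')) 0)^2 ≤
      t * (c * (max s 0)^2 + c' * (max (-s) 0)^2)
      + (1-t) * (c * (max s' 0)^2 + c' * (max (-s') 0)^2) := by
  have hA : (0:ℝ) ≤ max s 0 := le_max_right _ _
  have hB : (0:ℝ) ≤ max s' 0 := le_max_right _ _
  have hA' : (0:ℝ) ≤ max (-s) 0 := le_max_right _ _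
  have hB' : (0:ℝ) ≤ max (-s') 0 := le_max_right _ _
  have ht1' : 0 ≤ 1 - t := by linarith
  have h1 : max (t*s+(1-t)*s') 0 ≤ t * max s 0 + (1-t) * max s' 0 := by
    apply max_le
    · have := le_max_left s 0
      have := le_max_left s' 0
      nlinarith
    · have := mul_nonneg ht0 hA
      have := mul_nonneg ht1' hB
      linarith
  have h2 : max (-(t*s+(1-t)*s')) 0 ≤ t * max (-s) 0 + (1-t) * max (-s') 0 := by
    apply max_le
    · have := le_max_left (-s) 0
      have := le_max_left (-s') 0
      nlinarith
    · have := mul_nonneg ht0 hA'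
      have := mul_nonneg ht1' hB'
      linarith
  have k1 : (max (t*s+(1-t)*s') 0)^2 ≤ t * (max s 0)^2 + (1-t) * (max s' 0)^2 := by
    have h0 : (0:ℝ) ≤ max (t*s+(1-t)*s') 0 := le_max_right _ _
    have hy : (0:ℝ) ≤ t * max s 0 + (1-t) * max s' 0 := le_trans h0 h1
    have := mul_le_mul h1 h1 h0 hy
    nlinarith [sq_nonneg (max s 0 - max s' 0),
      mul_nonneg (mul_nonneg ht0 ht1') (sq_nonneg (max s 0 - max s' 0))]
  have k2 : (max (-(t*s+(1-t)*s')) 0)^2 ≤ t * (max (-s) 0)^2 + (1-t) * (max (-s') 0)^2 := by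
    have h0 : (0:ℝ) ≤ max (-(t*s+(1-t)*s')) 0 := le_max_right _ _
    have hy : (0:ℝ) ≤ t * max (-s) 0 + (1-t) * max (-s') 0 := le_trans h0 h2
    have := mul_le_mul h2 h2 h0 hy
    nlinarith [mul_nonneg (mul_nonneg ht0 ht1') (sq_nonneg (max (-s) 0 - max (-s') 0))]
  have := mul_le_mul_of_nonneg_left k1 hc
  have := mul_le_mul_of_nonneg_left k2 hc'
  nlinarith

lemma Pf_combo_upper (a b t s s' : ℝ) (ht0 : 0 ≤ t) (ht1 : t ≤ 1) :
    Pf a b (t*s+(1-t)*s') ≤ t * Pf a b s + (1-t) * Pf a b s'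
      - (min a b) * t * (1-t) * (s-s')^2 := by
  have hm := mother (b - min a b) (a - min a b) t s s'
    (by linarith [min_le_right a b]) (by linarith [min_le_left a b]) ht0 ht1
  have e1 := sq_split (t*s+(1-t)*s')
  have e2 := sq_split s
  have e3 := sq_split s'
  have f1 : (min a b)*((max (t*s+(1-t)*s') 0)^2+(max (-(t*s+(1-t)*s')) 0)^2)
      = (min a b)*(t*s+(1-t)*s')^2 := by rw [e1]
  have f2 : (min a b)*t*((max s 0)^2+(max (-s) 0)^2) = (min a b)*t*s^2 := by rw [e2]
  have f3 : (min a b)*(1-t)*((max s' 0)^2+(max (-s') 0)^2) = (min a b)*(1-t)*s'^2 := by rw [e3]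
  have f4 : (min a b)*(t*s+(1-t)*s')^2
      = (min a b)*t*s^2 + (min a b)*(1-t)*s'^2 - (min a b)*t*(1-t)*(s-s')^2 := by ring
  simp only [Pf]
  linarith [hm, f1, f2, f3, f4]

lemma Pf_combo_lower (a b t s s' : ℝ) (ht0 : 0 ≤ t) (ht1 : t ≤ 1) :
    t * Pf a b s + (1-t) * Pf a b s' - (max a b) * t * (1-t) * (s-s')^2
      ≤ Pf a b (t*s+(1-t)*s') := by
  have hm := mother (max a b - b) (max a b - a) t s s'
    (by linarith [le_max_right a b]) (by linarith [le_max_left a b]) ht0 ht1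
  have e1 := sq_split (t*s+(1-t)*s')
  have e2 := sq_split s
  have e3 := sq_split s'
  have f1 : (max a b)*((max (t*s+(1-t)*s') 0)^2+(max (-(t*s+(1-t)*s')) 0)^2)
      = (max a b)*(t*s+(1-t)*s')^2 := by rw [e1]
  have f2 : (max a b)*t*((max s 0)^2+(max (-s) 0)^2) = (max a b)*t*s^2 := by rw [e2]
  have f3 : (max a b)*(1-t)*((max s' 0)^2+(max (-s') 0)^2) = (max a b)*(1-t)*s'^2 := by rw [e3]
  have f4 : (max a b)*(t*s+(1-t)*s')^2
      = (max a b)*t*s^2 + (max a b)*(1-t)*s'^2 - (max a b)*t*(1-t)*(s-s')^2 := by ring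
  simp only [Pf]
  linarith [hm, f1, f2, f3, f4]

lemma Pf_bounds (a b s : ℝ) (ha : 0 < a) (hb : 0 < b) :
    (min a b) * s^2 ≤ Pf a b s ∧ Pf a b s ≤ (max a b) * s^2 := by
  have e := sq_split s
  have hA : (0:ℝ) ≤ (max s 0)^2 := sq_nonneg _
  have hA' : (0:ℝ) ≤ (max (-s) 0)^2 := sq_nonneg _
  constructor
  · simp only [Pf]
    nlinarith [min_le_left a b, min_le_right a b]
  · simp only [Pf]
    nlinarith [le_max_left a b, le_max_right a b]

variable {Ω : Type*} [MeasurableSpace Ω] {μ : Measure Ω}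

noncomputable def GI (a b : ℝ) (f : Lp ℝ 2 μ) : ℝ := ∫ x, Pf a b (f x) ∂μ

lemma integrable_sq (f : Lp ℝ 2 μ) : Integrable (fun x => (f x)^2) μ := by
  have := L2.integrable_inner (𝕜 := ℝ) f f
  simpa [RCLike.inner_apply, sq] using this

lemma integral_sq (f : Lp ℝ 2 μ) : ∫ x, (f x)^2 ∂μ = ‖f‖^2 := by
  rw [← real_inner_self_eq_norm_sq, L2.inner_def]
  simp [RCLike.inner_apply, sq]

lemma Pf_ae (a b : ℝ) (f : Lp ℝ 2 μ) :
    (fun x => Pf a b (f x)) =ᵐ[μ]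
      fun x => b * (Lp.posPart f) x ^2 + a * (Lp.negPart f) x ^2 := by
  filter_upwards [Lp.coeFn_posPart f, Lp.coeFn_negPart_eq_max f] with x h1 h2
  simp only [Pf, h1, h2]

lemma integrable_Pf (a b : ℝ) (f : Lp ℝ 2 μ) : Integrable (fun x => Pf a b (f x)) μ := by
  refine Integrable.congr ?_ (Pf_ae a b f).symm
  exact ((integrable_sq (Lp.posPart f)).const_mul b).add
    ((integrable_sq (Lp.negPart f)).const_mul a)

lemma GI_def' (a b : ℝ) (f : Lp ℝ 2 μ) :
    ∫ x, (b * (Lp.posPart f) x ^ 2 + a * (Lp.negPart f) x ^ 2) ∂μ = GI a b f :=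
  (integral_congr_ae (Pf_ae a b f)).symm

lemma GI_eq_norm (a b : ℝ) (f : Lp ℝ 2 μ) :
    GI a b f = b * ‖Lp.posPart f‖^2 + a * ‖Lp.negPart f‖^2 := by
  rw [← GI_def', integral_add ((integrable_sq (Lp.posPart f)).const_mul b)
    ((integrable_sq (Lp.negPart f)).const_mul a), integral_const_mul, integral_const_mul,
    integral_sq, integral_sq]

lemma GI_cont (a b : ℝ) : Continuous (fun f : Lp ℝ 2 μ => GI a b f) := by
  simp only [GI_eq_norm]
  have h1 : Continuous (fun f : Lp ℝ 2 μ => Lp.posPart f) := Lp.continuous_posPart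
  have h2 : Continuous (fun f : Lp ℝ 2 μ => Lp.negPart f) := Lp.continuous_negPart
  exact (continuous_const.mul ((h1.norm).pow 2)).add (continuous_const.mul ((h2.norm).pow 2))

lemma GI_bound_low (a b : ℝ) (ha : 0 < a) (hb : 0 < b) (f : Lp ℝ 2 μ) :
    min a b * ‖f‖^2 ≤ GI a b f := by
  have h : ∫ x, min a b * (f x)^2 ∂μ ≤ ∫ x, Pf a b (f x) ∂μ := by
    refine integral_mono ((integrable_sq f).const_mul _) (integrable_Pf a b f) ?_
    intro x; exact (Pf_bounds a b (f x) ha hb).1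
  rwa [integral_const_mul, integral_sq] at h

lemma GI_bound_high (a b : ℝ) (ha : 0 < a) (hb : 0 < b) (f : Lp ℝ 2 μ) :
    GI a b f ≤ max a b * ‖f‖^2 := by
  have h : ∫ x, Pf a b (f x) ∂μ ≤ ∫ x, max a b * (f x)^2 ∂μ := by
    refine integral_mono (integrable_Pf a b f) ((integrable_sq f).const_mul _) ?_
    intro x; exact (Pf_bounds a b (f x) ha hb).2
  rwa [integral_const_mul, integral_sq] at h

lemma coeFn_combo (t : ℝ) (f g : Lp ℝ 2 μ) :
    (⇑(t•f+(1-t)•g) : Ω → ℝ) =ᵐ[μ] fun x => t * f x + (1-t) * g x := by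
  filter_upwards [Lp.coeFn_add (t•f) ((1-t)•g), Lp.coeFn_smul t f, Lp.coeFn_smul (1-t) g]
    with x h1 h2 h3
  simp only [h1, Pi.add_apply, h2, h3, Pi.smul_apply, smul_eq_mul]

lemma GI_combo_upper (a b t : ℝ) (ht0 : 0 ≤ t) (ht1 : t ≤ 1) (f g : Lp ℝ 2 μ) :
    GI a b (t•f+(1-t)•g) ≤ t * GI a b f + (1-t) * GI a b g
      - min a b * t * (1-t) * ‖f-g‖^2 := by
  set CST := min a b * t * (1-t) with hCST
  have hsub : (⇑(f - g) : Ω → ℝ) =ᵐ[μ] fun x => f x - g x := Lp.coeFn_sub f g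
  have hint : Integrable (fun x => t * Pf a b (f x) + (1-t) * Pf a b (g x)
      - CST * ((f-g) x)^2) μ :=
    (((integrable_Pf a b f).const_mul t).add ((integrable_Pf a b g).const_mul (1-t))).sub
      ((integrable_sq (f-g)).const_mul _)
  have key : GI a b (t•f+(1-t)•g) ≤ ∫ x, (t * Pf a b (f x) + (1-t) * Pf a b (g x)
      - CST * ((f-g) x)^2) ∂μ := by
    refine integral_mono_ae (integrable_Pf a b _) hint ?_
    filter_upwards [coeFn_combo t f g, hsub] with x h1 h2
    rw [h1, h2]
    have := Pf_combo_upper a b t (f x) (g x) ht0 ht1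
    simp only [hCST]
    linarith
  have e1 := integral_sub (μ := μ) (((integrable_Pf a b f).const_mul t).add
      ((integrable_Pf a b g).const_mul (1-t))) ((integrable_sq (f-g)).const_mul CST)
  have e2 := integral_add (μ := μ) ((integrable_Pf a b f).const_mul t)
      ((integrable_Pf a b g).const_mul (1-t))
  have e3 : ∫ x, t * Pf a b (f x) ∂μ = t * GI a b f := by
    rw [integral_const_mul]; rfl
  have e4 : ∫ x, (1-t) * Pf a b (g x) ∂μ = (1-t) * GI a b g := by
    rw [integral_const_mul]; rfl
  have e5 : ∫ x, CST * ((f-g) x)^2 ∂μ = CST * ‖f-g‖^2 := by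
    rw [integral_const_mul, integral_sq]
  simp only [Pi.add_apply] at e1 e2
  rw [e1, e2, e3, e4, e5] at key
  linarith

lemma GI_combo_lower (a b t : ℝ) (ht0 : 0 ≤ t) (ht1 : t ≤ 1) (f g : Lp ℝ 2 μ) :
    t * GI a b f + (1-t) * GI a b g - max a b * t * (1-t) * ‖f-g‖^2
      ≤ GI a b (t•f+(1-t)•g) := by
  set CST := max a b * t * (1-t) with hCST
  have hsub : (⇑(f - g) : Ω → ℝ) =ᵐ[μ] fun x => f x - g x := Lp.coeFn_sub f g
  have hint : Integrable (fun x => t * Pf a b (f x) + (1-t) * Pf a b (g x)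
      - CST * ((f-g) x)^2) μ :=
    (((integrable_Pf a b f).const_mul t).add ((integrable_Pf a b g).const_mul (1-t))).sub
      ((integrable_sq (f-g)).const_mul _)
  have key : ∫ x, (t * Pf a b (f x) + (1-t) * Pf a b (g x)
      - CST * ((f-g) x)^2) ∂μ ≤ GI a b (t•f+(1-t)•g) := by
    refine integral_mono_ae hint (integrable_Pf a b _) ?_
    filter_upwards [coeFn_combo t f g, hsub] with x h1 h2
    rw [h1, h2]
    have := Pf_combo_lower a b t (f x) (g x) ht0 ht1
    simp only [hCST]
    linarith
  have e1 := integral_sub (μ := μ) (((integrable_Pf a b f).const_mul t).add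
      ((integrable_Pf a b g).const_mul (1-t))) ((integrable_sq (f-g)).const_mul CST)
  have e2 := integral_add (μ := μ) ((integrable_Pf a b f).const_mul t)
      ((integrable_Pf a b g).const_mul (1-t))
  have e3 : ∫ x, t * Pf a b (f x) ∂μ = t * GI a b f := by
    rw [integral_const_mul]; rfl
  have e4 : ∫ x, (1-t) * Pf a b (g x) ∂μ = (1-t) * GI a b g := by
    rw [integral_const_mul]; rfl
  have e5 : ∫ x, CST * ((f-g) x)^2 ∂μ = CST * ‖f-g‖^2 := by
    rw [integral_const_mul, integral_sq]
  simp only [Pi.add_apply] at e1 e2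
  rw [e1, e2, e3, e4, e5] at key
  linarith

lemma norm_combo {F : Type*} [NormedAddCommGroup F] [InnerProductSpace ℝ F] (x y : F) (t : ℝ) :
    ‖t•x+(1-t)•y‖^2 = t*‖x‖^2+(1-t)*‖y‖^2 - t*(1-t)*‖x-y‖^2 := by
  have h1 := norm_add_sq_real (t•x) ((1-t)•y)
  have h2 := norm_sub_sq_real x y
  rw [norm_smul, norm_smul, real_inner_smul_left, real_inner_smul_right] at h1
  simp only [Real.norm_eq_abs, mul_pow, sq_abs] at h1
  nlinarith [h1, h2]

lemma norm_add3 {F : Type*} [NormedAddCommGroup F] [InnerProductSpace ℝ F] (x y z : F)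
    (h1 : ⟪x,y⟫ = 0) (h2 : ⟪x,z⟫ = 0) (h3 : ⟪y,z⟫ = 0) :
    ‖x+y+z‖^2 = ‖x‖^2+‖y‖^2+‖z‖^2 := by
  rw [norm_add_sq_real (x+y) z, norm_add_sq_real x y, inner_add_left, h1, h2, h3]
  ring

end SCBC

set_option maxHeartbeats 4000000 in
theorem sign_change_between_curves
    {Ω : Type*} [MeasurableSpace Ω] (μ : Measure Ω)
    {H : Type*} [NormedAddCommGroup H] [InnerProductSpace ℝ H] [CompleteSpace H]
    (ι : H →ₗ[ℝ] Lp ℝ 2 μ) (hι : Function.Injective ι)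
    (C : ℝ) (hC : 0 < C) (hιC : ∀ u : H, ‖ι u‖ ≤ C * ‖u‖)
    (I : H → ℝ → ℝ → ℝ)
    (hI : ∀ u a b, I u a b = ‖u‖ ^ 2 / 2 -
      (∫ x, (b * (Lp.posPart (ι u)) x ^ 2 + a * (Lp.negPart (ι u)) x ^ 2) ∂μ) / 2)
    (lam₀ lam₁ lam₂ : ℝ) (hlam₀ : 0 < lam₀) (hlam₀₁ : lam₀ < lam₁) (hlam₁₂ : lam₁ < lam₂)
    (N E M : Submodule ℝ H)
    (hNcl : IsClosed (N : Set H)) (hEcl : IsClosed (E : Set H)) (hMcl : IsClosed (M : Set H))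
    (hNfd : FiniteDimensional ℝ N) (hEfd : FiniteDimensional ℝ E) (hEne : E ≠ ⊥)
    (horthNE : ∀ v ∈ N, ∀ y ∈ E, ⟪v, y⟫ = 0)
    (horthNM : ∀ v ∈ N, ∀ w ∈ M, ⟪v, w⟫ = 0)
    (horthEM : ∀ y ∈ E, ∀ w ∈ M, ⟪y, w⟫ = 0)
    (horthNE2 : ∀ v ∈ N, ∀ y ∈ E, ∫ x, (ι v) x * (ι y) x ∂μ = 0)
    (horthNM2 : ∀ v ∈ N, ∀ w ∈ M, ∫ x, (ι v) x * (ι w) x ∂μ = 0)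
    (horthEM2 : ∀ y ∈ E, ∀ w ∈ M, ∫ x, (ι y) x * (ι w) x ∂μ = 0)
    (hdirect : N ⊔ E ⊔ M = ⊤)
    (hNspec : ∀ v ∈ N, ‖v‖ ^ 2 ≤ lam₀ * ‖ι v‖ ^ 2)
    (hEspec : ∀ y ∈ E, ∀ u : H, ⟪y, u⟫ = lam₁ * ∫ x, (ι y) x * (ι u) x ∂μ)
    (hMspec : ∀ w ∈ M, lam₂ * ‖ι w‖ ^ 2 ≤ ‖w‖ ^ 2)
    (hcompact : ∀ s : Set H, Bornology.IsBounded s →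
      IsCompact (closure ((fun u => ι u) '' s)))
    (θ : ℝ → ℝ → H → H)
    (hθ : ∀ a b, a ∈ Set.Ioo lam₀ lam₂ → b ∈ Set.Ioo lam₀ lam₂ → ∀ w ∈ E ⊔ M,
      θ a b w ∈ N ∧ (∀ v ∈ N, I (v + w) a b ≤ I (θ a b w + w) a b) ∧
      (∀ v ∈ N, (∀ v' ∈ N, I (v' + w) a b ≤ I (v + w) a b) → v = θ a b w))
    (τ : ℝ → ℝ → H → H)
    (hτ : ∀ a b, a ∈ Set.Ioo lam₀ lam₂ → b ∈ Set.Ioo lam₀ lam₂ → ∀ v ∈ N ⊔ E,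
      τ a b v ∈ M ∧ (∀ w ∈ M, I (v + τ a b v) a b ≤ I (v + w) a b) ∧
      (∀ w ∈ M, (∀ w' ∈ M, I (v + w) a b ≤ I (v + w') a b) → w = τ a b v))
    (Sk Sk' : ℝ → ℝ → Set H)
    (hSk : ∀ a b, Sk a b = {u : H | ∃ w ∈ E ⊔ M, u = θ a b w + w})
    (hSk' : ∀ a b, Sk' a b = {u : H | ∃ v ∈ N ⊔ E, u = v + τ a b v})
    (n m : ℝ → ℝ → ℝ)
    (hn : ∀ a b, n a b = sInf {t : ℝ | ∃ w ∈ E ⊔ M, ‖w‖ = 1 ∧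
      t = sSup {r : ℝ | ∃ v ∈ N, r = I (v + w) a b}})
    (hm : ∀ a b, m a b = sSup {t : ℝ | ∃ v ∈ N ⊔ E, ‖v‖ = 1 ∧
      t = sInf {r : ℝ | ∃ w ∈ M, r = I (v + w) a b}})
    (ν μf : ℝ → ℝ)
    (hν : ∀ a, ν a = sSup {b ∈ Set.Ioo lam₀ lam₂ | 0 ≤ n a b})
    (hμf : ∀ a, μf a = sInf {b ∈ Set.Ioo lam₀ lam₂ | m a b ≤ 0})
    (a b : ℝ) (ha : a ∈ Set.Ioo lam₀ lam₂) (hb : b ∈ Set.Ioo lam₀ lam₂)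
    (h1 : ν a < b) (h2 : b < μf a) :
    ∃ u₁ ∈ Sk a b ∩ Sk' a b, ∃ u₂ ∈ Sk a b ∩ Sk' a b,
      u₁ ≠ 0 ∧ u₂ ≠ 0 ∧ I u₁ a b < 0 ∧ 0 < I u₂ a b := by
  classical
  obtain ⟨ha1, ha2⟩ := ha
  obtain ⟨hb1, hb2⟩ := hb
  have ha0 : 0 < a := lt_trans hlam₀ ha1
  have hb0 : 0 < b := lt_trans hlam₀ hb1
  have hα0 : 0 < min a b := lt_min ha0 hb0
  have hαlam : lam₀ < min a b := lt_min ha1 hb1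
  have hβlam : max a b < lam₂ := max_lt ha2 hb2
  have hβ0 : 0 < max a b := lt_of_lt_of_le ha0 (le_max_left a b)
  have hlam₁pos : 0 < lam₁ := lt_trans hlam₀ hlam₀₁
  have hlam₂pos : 0 < lam₂ := lt_trans hlam₁pos hlam₁₂
  have hc8 : 0 < 1 - (max a b)/lam₂ := by
    have : (max a b)/lam₂ < 1 := (div_lt_one hlam₂pos).mpr hβlam
    linarith
  have hApos : 0 < (min a b)/lam₀ - 1 := by
    have : 1 < (min a b)/lam₀ := (one_lt_div hlam₀).mpr hαlam
    linarith
  -- functional expansion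
  have hIexp : ∀ u : H, I u a b = ‖u‖^2/2 - SCBC.GI a b (ι u)/2 := by
    intro u
    rw [hI u a b, SCBC.GI_def']
  -- inner products via integrals
  have hinner : ∀ u v : H, (⟪ι u, ι v⟫ : ℝ) = ∫ x, (ι u) x * (ι v) x ∂μ := by
    intro u v
    rw [L2.inner_def]
    simp [RCLike.inner_apply]
    exact integral_congr_ae (Filter.Eventually.of_forall fun x => mul_comm _ _)
  -- continuity
  have hιcont : Continuous fun u : H => ι u := AddMonoidHomClass.continuous_of_bound ι C hιC
  have hJcont : Continuous (fun u : H => I u a b) := by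
    have he : (fun u : H => I u a b) = fun u => ‖u‖^2/2 - SCBC.GI a b (ι u)/2 := funext hIexp
    rw [he]
    exact ((continuous_norm.pow 2).div_const 2).sub
      (((SCBC.GI_cont a b).comp hιcont).div_const 2)
  have hI0 : I (0:H) a b = 0 := by
    rw [hIexp]
    have hg1 := SCBC.GI_bound_low a b ha0 hb0 (ι (0:H))
    have hg2 := SCBC.GI_bound_high a b ha0 hb0 (ι (0:H))
    rw [map_zero] at hg1 hg2
    simp only [norm_zero, map_zero] at hg1 hg2 ⊢
    nlinarith
  -- I-A : upper bound
  have hIA : ∀ v ∈ N, ∀ w ∈ E ⊔ M, I (v+w) a b ≤ ‖w‖^2/2 := by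
    intro v hv w hw
    obtain ⟨y, hy, mm, hmm, heq⟩ := Submodule.mem_sup.mp hw
    have o1 : (⟪v, w⟫ : ℝ) = 0 := by
      rw [← heq, inner_add_right, horthNE v hv y hy, horthNM v hv mm hmm]
      norm_num
    have o2 : (⟪ι v, ι w⟫ : ℝ) = 0 := by
      rw [← heq, map_add, inner_add_right, hinner, hinner,
        horthNE2 v hv y hy, horthNM2 v hv mm hmm]
      norm_num
    rw [hIexp]
    have hn1 : ‖v+w‖^2 = ‖v‖^2+‖w‖^2 := by rw [norm_add_sq_real, o1]; ring
    have hmap : ι (v+w) = ι v + ι w := map_add ι v w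
    have hn2 : ‖ι (v+w)‖^2 = ‖ι v‖^2+‖ι w‖^2 := by rw [hmap, norm_add_sq_real, o2]; ring
    have hg := SCBC.GI_bound_low a b ha0 hb0 (ι (v+w))
    have h5 : (min a b)*‖ι (v+w)‖^2 = (min a b)*‖ι v‖^2 + (min a b)*‖ι w‖^2 := by
      rw [hn2]; ring
    have h3 : ‖v‖^2 ≤ (min a b)*‖ι v‖^2 := by
      have h4 := hNspec v hv
      nlinarith [sq_nonneg ‖ι v‖]
    have h6 : 0 ≤ (min a b)*‖ι w‖^2 := mul_nonneg hα0.le (sq_nonneg _)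
    linarith
  -- I-C : lower bound
  have hIC : ∀ v ∈ N, ∀ y ∈ E, ∀ mm ∈ M,
      (1-(max a b)/lam₁)*‖y‖^2/2 + (1-(max a b)/lam₂)*‖mm‖^2/2
        + (‖v‖^2 - (max a b)*‖ι v‖^2)/2 ≤ I (v+y+mm) a b := by
    intro v hv y hy mm hmm
    have i1 : (⟪ι v, ι y⟫ : ℝ) = 0 := by rw [hinner]; exact horthNE2 v hv y hy
    have i2 : (⟪ι v, ι mm⟫ : ℝ) = 0 := by rw [hinner]; exact horthNM2 v hv mm hmm
    have i3 : (⟪ι y, ι mm⟫ : ℝ) = 0 := by rw [hinner]; exact horthEM2 y hy mm hmm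
    have hn1 : ‖v+y+mm‖^2 = ‖v‖^2+‖y‖^2+‖mm‖^2 :=
      SCBC.norm_add3 v y mm (horthNE v hv y hy) (horthNM v hv mm hmm) (horthEM y hy mm hmm)
    have hmap : ι (v+y+mm) = ι v + ι y + ι mm := by simp [map_add]
    have hn2 : ‖ι (v+y+mm)‖^2 = ‖ι v‖^2+‖ι y‖^2+‖ι mm‖^2 := by
      rw [hmap]; exact SCBC.norm_add3 _ _ _ i1 i2 i3
    have hg := SCBC.GI_bound_high a b ha0 hb0 (ι (v+y+mm))
    have hEy : ‖y‖^2 = lam₁*‖ι y‖^2 := by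
      have hh := hEspec y hy y
      rw [← hinner y y, real_inner_self_eq_norm_sq, real_inner_self_eq_norm_sq] at hh
      exact hh
    have hM := hMspec mm hmm
    have e1 : (max a b)*‖ι y‖^2 = (max a b)/lam₁*‖y‖^2 := by
      have e0 : ‖ι y‖^2 = ‖y‖^2/lam₁ := by
        rw [eq_div_iff (ne_of_gt hlam₁pos)]; linarith
      rw [e0]; ring
    have e2 : (max a b)*‖ι mm‖^2 ≤ (max a b)/lam₂*‖mm‖^2 := by
      have h9 := mul_le_mul_of_nonneg_left hM (le_of_lt (div_pos hβ0 hlam₂pos))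
      have ee : (max a b)/lam₂*(lam₂*‖ι mm‖^2) = (max a b)*‖ι mm‖^2 := by
        field_simp
      linarith
    have h5 : (max a b)*‖ι (v+y+mm)‖^2
        = (max a b)*‖ι v‖^2 + (max a b)*‖ι y‖^2 + (max a b)*‖ι mm‖^2 := by
      rw [hn2]; ring
    rw [hIexp]
    linarith
  -- strong concavity along N
  have hID : ∀ (z v₁ v₂ : H), v₁ ∈ N → v₂ ∈ N → ∀ t : ℝ, 0 ≤ t → t ≤ 1 →
      t*I (v₁+z) a b + (1-t)*I (v₂+z) a b
        + ((min a b/lam₀-1)/2)*(t*(1-t)*‖v₁-v₂‖^2) ≤ I (t•v₁+(1-t)•v₂+z) a b := by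
    intro z v₁ v₂ hv₁ hv₂ t ht0 ht1
    have hz : t•v₁+(1-t)•v₂+z = t•(v₁+z)+(1-t)•(v₂+z) := by module
    rw [hz]
    simp only [hIexp]
    have hnc := SCBC.norm_combo (v₁+z) (v₂+z) t
    have hgc := SCBC.GI_combo_upper a b t ht0 ht1 (ι (v₁+z)) (ι (v₂+z))
    have hmap : ι (t•(v₁+z)+(1-t)•(v₂+z)) = t•(ι (v₁+z))+(1-t)•(ι (v₂+z)) := by
      simp [map_add, _root_.map_smul]
    rw [hmap]
    have hdiff : (v₁+z)-(v₂+z) = v₁-v₂ := by abel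
    have hdiffι : ι (v₁+z) - ι (v₂+z) = ι (v₁-v₂) := by rw [← map_sub, hdiff]
    rw [hdiff] at hnc
    rw [hdiffι] at hgc
    have hsp := hNspec _ (Submodule.sub_mem N hv₁ hv₂)
    have h7 : t*(1-t)*((min a b/lam₀)*‖v₁-v₂‖^2) ≤ t*(1-t)*((min a b)*‖ι (v₁-v₂)‖^2) := by
      have h8 : (min a b/lam₀)*‖v₁-v₂‖^2 ≤ (min a b)*‖ι (v₁-v₂)‖^2 := by
        have h9 := mul_le_mul_of_nonneg_left hsp (le_of_lt (div_pos hα0 hlam₀))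
        have ee : (min a b/lam₀)*(lam₀*‖ι (v₁-v₂)‖^2) = (min a b)*‖ι (v₁-v₂)‖^2 := by
          field_simp
        linarith
      exact mul_le_mul_of_nonneg_left h8 (mul_nonneg ht0 (by linarith))
    linarith [hnc, hgc, h7]
  -- strong convexity along M
  have hIE : ∀ (z m₁ m₂ : H), m₁ ∈ M → m₂ ∈ M → ∀ t : ℝ, 0 ≤ t → t ≤ 1 →
      I (z + (t•m₁+(1-t)•m₂)) a b ≤ t*I (z+m₁) a b + (1-t)*I (z+m₂) a b
        - ((1-(max a b)/lam₂)/2)*(t*(1-t)*‖m₁-m₂‖^2) := by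
    intro z m₁ m₂ hm₁ hm₂ t ht0 ht1
    have hz : z + (t•m₁+(1-t)•m₂) = t•(z+m₁)+(1-t)•(z+m₂) := by module
    rw [hz]
    simp only [hIexp]
    have hnc := SCBC.norm_combo (z+m₁) (z+m₂) t
    have hgc := SCBC.GI_combo_lower a b t ht0 ht1 (ι (z+m₁)) (ι (z+m₂))
    have hmap : ι (t•(z+m₁)+(1-t)•(z+m₂)) = t•(ι (z+m₁))+(1-t)•(ι (z+m₂)) := by
      simp [map_add, _root_.map_smul]
    rw [hmap]
    have hdiff : (z+m₁)-(z+m₂) = m₁-m₂ := by abel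
    have hdiffι : ι (z+m₁) - ι (z+m₂) = ι (m₁-m₂) := by rw [← map_sub, hdiff]
    rw [hdiff] at hnc
    rw [hdiffι] at hgc
    have hsp := hMspec _ (Submodule.sub_mem M hm₁ hm₂)
    have h7 : t*(1-t)*((max a b)*‖ι (m₁-m₂)‖^2) ≤ t*(1-t)*((max a b/lam₂)*‖m₁-m₂‖^2) := by
      have h8 : (max a b)*‖ι (m₁-m₂)‖^2 ≤ (max a b/lam₂)*‖m₁-m₂‖^2 := by
        have h9 := mul_le_mul_of_nonneg_left hsp (le_of_lt (div_pos hβ0 hlam₂pos))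
        have ee : (max a b/lam₂)*(lam₂*‖ι (m₁-m₂)‖^2) = (max a b)*‖ι (m₁-m₂)‖^2 := by
          field_simp
        linarith
      exact mul_le_mul_of_nonneg_left h8 (mul_nonneg ht0 (by linarith))
    linarith [hnc, hgc, h7]
  have hθ' := hθ a b ⟨ha1, ha2⟩ ⟨hb1, hb2⟩
  have hτ' := hτ a b ⟨ha1, ha2⟩ ⟨hb1, hb2⟩
  -- quadratic growth at the maximizer
  have hQG : ∀ w ∈ E ⊔ M, ∀ v ∈ N,
      I (v+w) a b + ((min a b/lam₀-1)/4)*‖v - θ a b w‖^2 ≤ I (θ a b w + w) a b := by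
    intro w hw v hv
    have hθmem := (hθ' w hw).1
    have hmid := hID w v (θ a b w) hv hθmem (1/2) (by norm_num) (by norm_num)
    have hmax := (hθ' w hw).2.1 ((1/2:ℝ)•v+(1-(1/2:ℝ))•θ a b w)
      (N.add_mem (N.smul_mem _ hv) (N.smul_mem _ hθmem))
    linarith
  -- the saddle point construction
  have key : ∀ y ∈ E, ∃ u₀, u₀ ∈ Sk a b ∧ u₀ ∈ Sk' a b ∧
      (∀ mm ∈ M, I u₀ a b ≤ I (θ a b (y+mm) + (y+mm)) a b) ∧
      (∃ m' ∈ M, ∀ v ∈ N, I (v+(y+m')) a b ≤ I u₀ a b) := by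
    intro y hy
    have hymem : ∀ mm ∈ M, y + mm ∈ E ⊔ M := fun mm hmm =>
      Submodule.add_mem _ (Submodule.mem_sup_left hy) (Submodule.mem_sup_right hmm)
    set S : Set ℝ := {r | ∃ mm ∈ M, r = I (θ a b (y+mm) + (y+mm)) a b} with hSdef
    have hSne : S.Nonempty := ⟨I (θ a b (y+0) + (y+0)) a b, 0, M.zero_mem, rfl⟩
    have hΦlow : ∀ mm ∈ M, (1-(max a b)/lam₁)*‖y‖^2/2 ≤ I (θ a b (y+mm) + (y+mm)) a b := by
      intro mm hmm
      have hq1 := (hθ' (y+mm) (hymem mm hmm)).2.1 0 N.zero_mem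
      have hq2 := hIC 0 N.zero_mem y hy mm hmm
      have e : (0:H)+(y+mm) = 0+y+mm := (add_assoc 0 y mm).symm
      rw [e] at hq1
      have hz : ‖(0:H)‖^2 - (max a b)*‖ι (0:H)‖^2 = 0 := by simp [map_zero]
      have hnn : 0 ≤ (1-(max a b)/lam₂)*‖mm‖^2/2 := by
        have := mul_nonneg hc8.le (sq_nonneg ‖mm‖)
        linarith
      linarith
    have hSbdd : BddBelow S :=
      ⟨(1-(max a b)/lam₁)*‖y‖^2/2, by rintro r ⟨mm, hmm, rfl⟩; exact hΦlow mm hmm⟩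
    set d := sInf S with hd
    have hdle : ∀ mm ∈ M, d ≤ I (θ a b (y+mm) + (y+mm)) a b := fun mm hmm =>
      csInf_le hSbdd ⟨mm, hmm, rfl⟩
    have hseq : ∀ nn : ℕ, ∃ mm, mm ∈ M ∧
        I (θ a b (y+mm) + (y+mm)) a b < d + 1/(nn+1) := by
      intro nn
      obtain ⟨r, hrS, hrlt⟩ := Real.lt_sInf_add_pos hSne
        (show (0:ℝ) < 1/(nn+1) by positivity)
      obtain ⟨mm, hmm, rfl⟩ := hrS
      exact ⟨mm, hmm, hrlt⟩
    choose ms hmsM hmsΦ using hseq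
    -- midpoint estimate
    have hmidkey : ∀ m₁ ∈ M, ∀ m₂ ∈ M,
        d + ((1-(max a b)/lam₂)/2)*((1/2)*(1-(1/2:ℝ))*‖m₁-m₂‖^2)
          ≤ I (θ a b (y+m₁) + (y+m₁)) a b / 2 + I (θ a b (y+m₂) + (y+m₂)) a b / 2 := by
      intro m₁ hm₁ m₂ hm₂
      have hmidM : ((1/2:ℝ)•m₁+(1-(1/2:ℝ))•m₂) ∈ M :=
        M.add_mem (M.smul_mem _ hm₁) (M.smul_mem _ hm₂)
      have hq1 := hdle _ hmidM
      have e1 : θ a b (y+((1/2:ℝ)•m₁+(1-(1/2:ℝ))•m₂)) + (y+((1/2:ℝ)•m₁+(1-(1/2:ℝ))•m₂))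
          = (θ a b (y+((1/2:ℝ)•m₁+(1-(1/2:ℝ))•m₂)) + y) + ((1/2:ℝ)•m₁+(1-(1/2:ℝ))•m₂) :=
        (add_assoc _ _ _).symm
      rw [e1] at hq1
      have hIEapp := hIE (θ a b (y+((1/2:ℝ)•m₁+(1-(1/2:ℝ))•m₂)) + y) m₁ m₂ hm₁ hm₂
        (1/2) (by norm_num) (by norm_num)
      have hub1 : I ((θ a b (y+((1/2:ℝ)•m₁+(1-(1/2:ℝ))•m₂)) + y) + m₁) a b
          ≤ I (θ a b (y+m₁) + (y+m₁)) a b := by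
        have hq2 := (hθ' (y+m₁) (hymem _ hm₁)).2.1
          (θ a b (y+((1/2:ℝ)•m₁+(1-(1/2:ℝ))•m₂))) (hθ' _ (hymem _ hmidM)).1
        rw [← add_assoc] at hq2
        exact hq2
      have hub2 : I ((θ a b (y+((1/2:ℝ)•m₁+(1-(1/2:ℝ))•m₂)) + y) + m₂) a b
          ≤ I (θ a b (y+m₂) + (y+m₂)) a b := by
        have hq2 := (hθ' (y+m₂) (hymem _ hm₂)).2.1
          (θ a b (y+((1/2:ℝ)•m₁+(1-(1/2:ℝ))•m₂))) (hθ' _ (hymem _ hmidM)).1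
        rw [← add_assoc] at hq2
        exact hq2
      linarith [hq1, hIEapp, hub1, hub2]
    -- Cauchy
    have hcau2 : ∀ i j : ℕ, ‖ms i - ms j‖^2
        ≤ ((1:ℝ)/(i+1) + 1/(j+1)) * (4/(1-(max a b)/lam₂)) := by
      intro i j
      have hq1 := hmidkey (ms i) (hmsM i) (ms j) (hmsM j)
      have hq2 := hmsΦ i
      have hq3 := hmsΦ j
      have h4 : ((1-(max a b)/lam₂)/8)*‖ms i - ms j‖^2 ≤ ((1:ℝ)/(i+1) + 1/(j+1))/2 := by
        linarith
      have e : ((1:ℝ)/(i+1) + 1/(j+1)) * (4/(1-(max a b)/lam₂))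
          = (((1:ℝ)/(i+1) + 1/(j+1)) * 4)/(1-(max a b)/lam₂) := by ring
      rw [e, le_div_iff₀ hc8]
      linarith
    have hcauchy : CauchySeq ms := by
      apply cauchySeq_of_le_tendsto_0
        (fun nn : ℕ => Real.sqrt (((2:ℝ)/(nn+1)) * (4/(1-(max a b)/lam₂))))
      · intro i j NN hNi hNj
        rw [dist_eq_norm]
        have hq1 := hcau2 i j
        have hq2 : (1:ℝ)/(i+1) ≤ 1/(NN+1) := by
          apply one_div_le_one_div_of_le (by positivity)
          have : (NN:ℝ) ≤ i := Nat.cast_le.mpr hNi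
          linarith
        have hq3 : (1:ℝ)/(j+1) ≤ 1/(NN+1) := by
          apply one_div_le_one_div_of_le (by positivity)
          have : (NN:ℝ) ≤ j := Nat.cast_le.mpr hNj
          linarith
        have hpos : (0:ℝ) ≤ 4/(1-(max a b)/lam₂) := by positivity
        have hq4 : ‖ms i - ms j‖^2 ≤ ((2:ℝ)/(NN+1)) * (4/(1-(max a b)/lam₂)) := by
          have hq5 : ((1:ℝ)/(i+1) + 1/(j+1)) ≤ (2:ℝ)/(NN+1) := by
            have : (2:ℝ)/(NN+1) = 1/(NN+1) + 1/(NN+1) := by ring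
            linarith
          have := mul_le_mul_of_nonneg_right hq5 hpos
          linarith
        calc ‖ms i - ms j‖ = Real.sqrt (‖ms i - ms j‖^2) :=
              (Real.sqrt_sq (norm_nonneg _)).symm
          _ ≤ _ := Real.sqrt_le_sqrt hq4
      · have h0 : Tendsto (fun nn : ℕ => ((2:ℝ)/(nn+1)) * (4/(1-(max a b)/lam₂)))
            atTop (nhds 0) := by
          have he : (fun nn : ℕ => ((2:ℝ)/(nn+1)) * (4/(1-(max a b)/lam₂)))
              = fun nn : ℕ => (2 * (4/(1-(max a b)/lam₂))) * ((1:ℝ)/(nn+1)) := by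
            funext nn; ring
          rw [he]
          simpa using tendsto_one_div_add_atTop_nhds_zero_nat.const_mul
            (2 * (4/(1-(max a b)/lam₂)))
        have := (Real.continuous_sqrt.tendsto 0).comp h0
        rw [Real.sqrt_zero] at this
        exact this
    obtain ⟨mstar, hms_tendsto⟩ := cauchySeq_tendsto_of_complete hcauchy
    have hmstarM : mstar ∈ M :=
      hMcl.mem_of_tendsto hms_tendsto (Filter.Eventually.of_forall hmsM)
    have hlimle : ∀ v ∈ N, I (v + (y+mstar)) a b ≤ d := by
      intro v hv
      have htd : Tendsto (fun nn => I (v + (y + ms nn)) a b) atTop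
          (nhds (I (v + (y+mstar)) a b)) := by
        have hq1 : Tendsto (fun nn => v + (y + ms nn)) atTop (nhds (v + (y + mstar))) :=
          tendsto_const_nhds.add (tendsto_const_nhds.add hms_tendsto)
        exact (hJcont.tendsto _).comp hq1
      have hub : ∀ nn : ℕ, I (v + (y + ms nn)) a b ≤ d + 1/(nn+1) := by
        intro nn
        have hq2 := (hθ' (y+ms nn) (hymem _ (hmsM nn))).2.1 v hv
        linarith [hmsΦ nn]
      have htd2 : Tendsto (fun nn : ℕ => d + 1/((nn:ℝ)+1)) atTop (nhds d) := by
        simpa using (tendsto_const_nhds : Tendsto (fun _ : ℕ => d) atTop (nhds d)).add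
          tendsto_one_div_add_atTop_nhds_zero_nat
      exact le_of_tendsto_of_tendsto' htd htd2 hub
    have hθstarN : θ a b (y+mstar) ∈ N := (hθ' _ (hymem _ hmstarM)).1
    have hdeq : I (θ a b (y+mstar) + (y+mstar)) a b = d :=
      le_antisymm (hlimle _ hθstarN) (hdle _ hmstarM)
    -- saddle inequality
    have hsaddle : ∀ mm ∈ M, d ≤ I ((θ a b (y+mstar) + y) + mm) a b := by
      intro mm hmm
      have hstept : ∀ t : ℝ, 0 < t → t ≤ 1/2 →
          d ≤ I ((θ a b (y + (t•mm+(1-t)•mstar)) + y) + mm) a b ∧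
          ‖θ a b (y + (t•mm+(1-t)•mstar)) - θ a b (y+mstar)‖^2
            ≤ t*(‖y+mm‖^2/2 - d)*8/((min a b)/lam₀-1) := by
        intro t ht0 ht1
        have hcombM : (t•mm+(1-t)•mstar) ∈ M :=
          M.add_mem (M.smul_mem _ hmm) (M.smul_mem _ hmstarM)
        have hθtN : θ a b (y + (t•mm+(1-t)•mstar)) ∈ N := (hθ' _ (hymem _ hcombM)).1
        have hq1 := hdle _ hcombM
        have e1 : θ a b (y + (t•mm+(1-t)•mstar)) + (y + (t•mm+(1-t)•mstar))
            = (θ a b (y + (t•mm+(1-t)•mstar)) + y) + (t•mm+(1-t)•mstar) :=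
          (add_assoc _ _ _).symm
        rw [e1] at hq1
        have hIEapp := hIE (θ a b (y + (t•mm+(1-t)•mstar)) + y) mm mstar hmm hmstarM t
          ht0.le (by linarith)
        have e2 : (θ a b (y + (t•mm+(1-t)•mstar)) + y) + mstar
            = θ a b (y + (t•mm+(1-t)•mstar)) + (y+mstar) := add_assoc _ _ _
        rw [e2] at hIEapp
        have hQGapp := hQG (y+mstar) (hymem _ hmstarM) _ hθtN
        rw [hdeq] at hQGapp
        have hRb : I ((θ a b (y + (t•mm+(1-t)•mstar)) + y) + mm) a b ≤ ‖y+mm‖^2/2 := by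
          rw [add_assoc]
          exact hIA _ hθtN _ (hymem _ hmm)
        have hSnn : 0 ≤ ((min a b/lam₀-1)/4)*‖θ a b (y + (t•mm+(1-t)•mstar))
            - θ a b (y+mstar)‖^2 := mul_nonneg (by linarith) (sq_nonneg _)
        have hdrop : 0 ≤ ((1-(max a b)/lam₂)/2)*(t*(1-t)*‖mm-mstar‖^2) :=
          mul_nonneg (by linarith) (mul_nonneg (mul_nonneg ht0.le (by linarith)) (sq_nonneg _))
        have hYle : I (θ a b (y + (t•mm+(1-t)•mstar)) + (y+mstar)) a b
            ≤ d - ((min a b/lam₀-1)/4)*‖θ a b (y + (t•mm+(1-t)•mstar))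
              - θ a b (y+mstar)‖^2 := by linarith
        have hprod := mul_le_mul_of_nonneg_left hYle (show (0:ℝ) ≤ 1-t by linarith)
        have hprod2 : 0 ≤ (1-t)*(((min a b/lam₀-1)/4)*‖θ a b (y + (t•mm+(1-t)•mstar))
            - θ a b (y+mstar)‖^2) := mul_nonneg (by linarith) hSnn
        have htd : t*d ≤ t*I ((θ a b (y + (t•mm+(1-t)•mstar)) + y) + mm) a b := by
          nlinarith [hq1, hIEapp, hprod, hprod2, hdrop]
        constructor
        · exact le_of_mul_le_mul_left htd ht0
        · have htR := mul_le_mul_of_nonneg_left hRb ht0.le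
          have h10 : (1-t)*(((min a b/lam₀-1)/4)*‖θ a b (y + (t•mm+(1-t)•mstar))
              - θ a b (y+mstar)‖^2) ≤ t*(‖y+mm‖^2/2) - t*d := by
            nlinarith [hq1, hIEapp, hprod, hdrop, htR]
          have hhalf := mul_le_mul_of_nonneg_right
            (show (1/2:ℝ) ≤ 1-t by linarith) hSnn
          rw [le_div_iff₀ hApos]
          nlinarith [h10, hhalf]
      have htn0 : Tendsto (fun nn : ℕ => (1:ℝ)/((nn:ℝ)+2)) atTop (nhds 0) := by
        apply squeeze_zero (fun nn => by positivity) (fun nn => ?_)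
          tendsto_one_div_add_atTop_nhds_zero_nat
        apply one_div_le_one_div_of_le (by positivity)
        linarith
      have htpos : ∀ nn : ℕ, (0:ℝ) < 1/((nn:ℝ)+2) := fun nn => by positivity
      have hthalf : ∀ nn : ℕ, (1:ℝ)/((nn:ℝ)+2) ≤ 1/2 := by
        intro nn
        apply one_div_le_one_div_of_le (by norm_num)
        have : (0:ℝ) ≤ (nn:ℝ) := Nat.cast_nonneg nn
        linarith
      have hθseq : Tendsto (fun nn : ℕ =>
          θ a b (y + ((1/((nn:ℝ)+2))•mm + (1-(1/((nn:ℝ)+2)))•mstar))) atTop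
          (nhds (θ a b (y+mstar))) := by
        rw [tendsto_iff_norm_sub_tendsto_zero]
        have h8 : Tendsto (fun nn : ℕ =>
            (1/((nn:ℝ)+2))*(‖y+mm‖^2/2-d)*8/((min a b)/lam₀-1)) atTop (nhds 0) := by
          have he : (fun nn : ℕ => (1/((nn:ℝ)+2))*(‖y+mm‖^2/2-d)*8/((min a b)/lam₀-1))
              = fun nn : ℕ => ((‖y+mm‖^2/2-d)*8/((min a b)/lam₀-1)) * (1/((nn:ℝ)+2)) := by
            funext nn; ring
          rw [he]
          simpa using htn0.const_mul ((‖y+mm‖^2/2-d)*8/((min a b)/lam₀-1))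
        have h9 := (Real.continuous_sqrt.tendsto 0).comp h8
        rw [Real.sqrt_zero] at h9
        apply squeeze_zero (fun nn => norm_nonneg _) (fun nn => ?_) h9
        have h5 := (hstept (1/((nn:ℝ)+2)) (htpos nn) (hthalf nn)).2
        calc ‖θ a b (y + ((1/((nn:ℝ)+2))•mm + (1-(1/((nn:ℝ)+2)))•mstar))
              - θ a b (y+mstar)‖
            = Real.sqrt (‖θ a b (y + ((1/((nn:ℝ)+2))•mm + (1-(1/((nn:ℝ)+2)))•mstar))
              - θ a b (y+mstar)‖^2) := (Real.sqrt_sq (norm_nonneg _)).symm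
          _ ≤ _ := Real.sqrt_le_sqrt h5
      have hle : ∀ nn : ℕ, d ≤ I ((θ a b (y + ((1/((nn:ℝ)+2))•mm
          + (1-(1/((nn:ℝ)+2)))•mstar)) + y) + mm) a b :=
        fun nn => (hstept (1/((nn:ℝ)+2)) (htpos nn) (hthalf nn)).1
      have hcont2 : Tendsto (fun nn : ℕ => I ((θ a b (y + ((1/((nn:ℝ)+2))•mm
          + (1-(1/((nn:ℝ)+2)))•mstar)) + y) + mm) a b) atTop
          (nhds (I ((θ a b (y+mstar) + y) + mm) a b)) := by
        have hq1 : Tendsto (fun nn : ℕ => (θ a b (y + ((1/((nn:ℝ)+2))•mm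
            + (1-(1/((nn:ℝ)+2)))•mstar)) + y) + mm) atTop
            (nhds ((θ a b (y+mstar) + y) + mm)) :=
          (hθseq.add tendsto_const_nhds).add tendsto_const_nhds
        exact (hJcont.tendsto _).comp hq1
      exact ge_of_tendsto hcont2 (Filter.Eventually.of_forall hle)
    -- conclude with the uniqueness of the minimizer over M
    have hvvmem : θ a b (y+mstar) + y ∈ N ⊔ E :=
      Submodule.add_mem _ (Submodule.mem_sup_left hθstarN) (Submodule.mem_sup_right hy)
    obtain ⟨hτmem, hτmin, hτuniq⟩ := hτ' (θ a b (y+mstar) + y) hvvmem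
    have hmeq : mstar = τ a b (θ a b (y+mstar) + y) := by
      apply hτuniq mstar hmstarM
      intro w' hw'
      have e4 : (θ a b (y+mstar) + y) + mstar = θ a b (y+mstar) + (y+mstar) :=
        add_assoc _ _ _
      rw [e4, hdeq]
      exact hsaddle w' hw'
    refine ⟨θ a b (y+mstar) + (y+mstar), ?_, ?_, ?_, ?_⟩
    · rw [hSk]
      exact ⟨y+mstar, hymem _ hmstarM, rfl⟩
    · rw [hSk']
      refine ⟨θ a b (y+mstar) + y, hvvmem, ?_⟩
      rw [← hmeq]
      exact (add_assoc _ _ _).symm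
    · intro mm hmm
      rw [hdeq]
      exact hdle mm hmm
    · exact ⟨mstar, hmstarM, fun v hv => by rw [hdeq]; exact hlimle v hv⟩
  -- n(a,b) < 0
  have hTbdd : BddAbove {b' ∈ Set.Ioo lam₀ lam₂ | 0 ≤ n a b'} :=
    ⟨lam₂, fun x hx => le_of_lt hx.1.2⟩
  have hnab : n a b < 0 := by
    by_contra hcon
    push_neg at hcon
    have : b ≤ ν a := by
      rw [hν]
      exact le_csSup hTbdd ⟨⟨hb1, hb2⟩, hcon⟩
    linarith
  have hwex : ∃ w ∈ E ⊔ M, ‖w‖ = 1 ∧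
      sSup {r : ℝ | ∃ v ∈ N, r = I (v + w) a b} < 0 := by
    by_contra hcon
    push_neg at hcon
    have : 0 ≤ n a b := by
      rw [hn]
      apply Real.sInf_nonneg
      rintro t ⟨w, hw, hnorm, rfl⟩
      exact hcon w hw hnorm
    linarith
  obtain ⟨wb, hwbmem, hwbnorm, hwbsup⟩ := hwex
  have hwbub : BddAbove {r : ℝ | ∃ v ∈ N, r = I (v + wb) a b} :=
    ⟨‖wb‖^2/2, by rintro r ⟨v, hv, rfl⟩; exact hIA v hv wb hwbmem⟩
  have hlt0 : ∀ v ∈ N, I (v + wb) a b < 0 := fun v hv =>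
    lt_of_le_of_lt (le_csSup hwbub ⟨v, hv, rfl⟩) hwbsup
  -- m(a,b) > 0
  have hTbdd2 : BddBelow {b' ∈ Set.Ioo lam₀ lam₂ | m a b' ≤ 0} :=
    ⟨lam₀, fun x hx => le_of_lt hx.1.1⟩
  have hmab : 0 < m a b := by
    by_contra hcon
    push_neg at hcon
    have : μf a ≤ b := by
      rw [hμf]
      exact csInf_le hTbdd2 ⟨⟨hb1, hb2⟩, hcon⟩
    linarith
  have hvex : ∃ v ∈ N ⊔ E, ‖v‖ = 1 ∧
      0 < sInf {r : ℝ | ∃ w ∈ M, r = I (v + w) a b} := by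
    by_contra hcon
    push_neg at hcon
    have : m a b ≤ 0 := by
      rw [hm]
      apply Real.sSup_nonpos
      rintro t ⟨v, hv, hnorm, rfl⟩
      exact hcon v hv hnorm
    linarith
  obtain ⟨vb, hvbmem, hvbnorm, hvbinf⟩ := hvex
  obtain ⟨v₀, hv₀, y₀, hy₀, hvbeq⟩ := Submodule.mem_sup.mp hvbmem
  have hblw : BddBelow {r : ℝ | ∃ w ∈ M, r = I (vb + w) a b} := by
    refine ⟨(1-(max a b)/lam₁)*‖y₀‖^2/2 + (‖v₀‖^2 - (max a b)*‖ι v₀‖^2)/2, ?_⟩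
    rintro r ⟨w, hw, rfl⟩
    have hq1 := hIC v₀ hv₀ y₀ hy₀ w hw
    have e : vb + w = v₀+y₀+w := by rw [← hvbeq]
    rw [e]
    have hnn : 0 ≤ (1-(max a b)/lam₂)*‖w‖^2/2 := by
      have := mul_nonneg hc8.le (sq_nonneg ‖w‖)
      linarith
    linarith
  have hgt0 : ∀ w ∈ M, 0 < I (vb + w) a b := fun w hw =>
    lt_of_lt_of_le hvbinf (csInf_le hblw ⟨w, hw, rfl⟩)
  -- construct u₁
  obtain ⟨y₁, hy₁, m₁, hm₁, hwbeq⟩ := Submodule.mem_sup.mp hwbmem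
  obtain ⟨u₁, hu₁Sk, hu₁Sk', hu₁min, -⟩ := key y₁ hy₁
  have hu₁neg : I u₁ a b < 0 := by
    have hq1 := hu₁min m₁ hm₁
    rw [hwbeq] at hq1
    exact lt_of_le_of_lt hq1 (hlt0 _ (hθ' wb hwbmem).1)
  -- construct u₂
  obtain ⟨u₂, hu₂Sk, hu₂Sk', -, m', hm'M, hu₂max⟩ := key y₀ hy₀
  have hu₂pos : 0 < I u₂ a b := by
    have hq1 := hu₂max v₀ hv₀
    have e : v₀ + (y₀ + m') = vb + m' := by rw [← hvbeq]; exact (add_assoc _ _ _).symm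
    rw [e] at hq1
    exact lt_of_lt_of_le (hgt0 m' hm'M) hq1
  have hu₁ne : u₁ ≠ 0 := by
    intro hcon
    rw [hcon, hI0] at hu₁neg
    exact lt_irrefl 0 hu₁neg
  have hu₂ne : u₂ ≠ 0 := by
    intro hcon
    rw [hcon, hI0] at hu₂pos
    exact lt_irrefl 0 hu₂pos
  exact ⟨u₁, ⟨hu₁Sk, hu₁Sk'⟩, u₂, ⟨hu₂Sk, hu₂Sk'⟩, hu₁ne, hu₂ne, hu₁neg, hu₂pos⟩
end
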